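/- arXiv:2603.07713 — 3 statements merged into one kernel-verified Lean document; each statement's English description precedes it below -/
import Mathlib

section
/- Let F be a semiflow with strong compact dynamics on a metric space (X,d). Then the Conley chain-recurrent set and the shadow chain-recurrent set coincide: R_C = R_S. -/
open Set Metric Filter

set_option linter.unusedSectionVars false
set_option maxHeartbeats 1000000

variable {X : Type*} [MetricSpace X]

/-- A (continuous-time) semiflow on a metric space `X`: a continuous map
`[0,∞) × X → X` with `F 0 = id` and `F (t+s) = F t ∘ F s`. -/
structure IsSemiflow (F : ℝ → X → X) : Prop where
  cont : ContinuousOn (fun p : ℝ × X => F p.1 p.2) (Set.Ici 0 ×ˢ Set.univ)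
  map_zero : ∀ x : X, F 0 x = x
  map_add : ∀ t s : ℝ, 0 ≤ t → 0 ≤ s → ∀ x : X, F (t + s) x = F t (F s x)

/-- An `(ε,T)`-chain (Conley chain) from `x` to `y`: finitely many points
`x = c 0, …, c N = y` (with `N ≥ 1`) and times `t i ≥ T` such that
`d(F^{t i}(c i), c (i+1)) < ε`. -/
def ConleyChain (F : ℝ → X → X) (ε T : ℝ) (x y : X) : Prop :=
  ∃ (N : ℕ) (c : ℕ → X) (t : ℕ → ℝ), 1 ≤ N ∧ c 0 = x ∧ c N = y ∧
    ∀ i < N, T ≤ t i ∧ dist (F (t i) (c i)) (c (i + 1)) < ε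

/-- `x ≽_C y`: for every `ε > 0` and `T > 0` there is an `(ε,T)`-chain from `x` to `y`. -/
def ConleyLe (F : ℝ → X → X) (x y : X) : Prop :=
  ∀ ε > (0:ℝ), ∀ T > (0:ℝ), ConleyChain F ε T x y

/-- `γ : [0,T] → X` is piecewise continuous: continuous except at finitely many
points, with one-sided limits at every point. -/
def PiecewiseContinuousOn (γ : ℝ → X) (T : ℝ) : Prop :=
  (∃ S : Finset ℝ, ∀ t ∈ Set.Icc (0:ℝ) T, t ∉ S → ContinuousWithinAt γ (Set.Icc 0 T) t) ∧
  (∀ t ∈ Set.Ioc (0:ℝ) T, ∃ L : X, Filter.Tendsto γ (nhdsWithin t (Set.Iio t)) (nhds L)) ∧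
  (∀ t ∈ Set.Ico (0:ℝ) T, ∃ L : X, Filter.Tendsto γ (nhdsWithin t (Set.Ioi t)) (nhds L))

/-- `γ : [0,T] → X` is `ε`-close to the orbits of `F`:
`d(γ(t+τ), F^τ(γ t)) < ε` for every `τ ∈ [0,1]` and `t ∈ [0, T-τ]`. -/
def EpsCloseTo (F : ℝ → X → X) (ε T : ℝ) (γ : ℝ → X) : Prop :=
  ∀ τ ∈ Set.Icc (0:ℝ) 1, ∀ t ∈ Set.Icc (0:ℝ) (T - τ), dist (γ (t + τ)) (F τ (γ t)) < ε

/-- An `ε`-chain (shadow chain) from `x` to `y`: a piecewise continuous curve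
`γ : [0,T] → X`, `T ≥ 1`, with `γ 0 = x`, `γ T = y`, which is `ε`-close to `F`. -/
def IsShadowChain (F : ℝ → X → X) (ε T : ℝ) (γ : ℝ → X) (x y : X) : Prop :=
  1 ≤ T ∧ PiecewiseContinuousOn γ T ∧ γ 0 = x ∧ γ T = y ∧ EpsCloseTo F ε T γ

/-- `x ≽_S y`: for every `ε > 0` there is an `ε`-chain (shadow chain) from `x` to `y`. -/
def ShadowLe (F : ℝ → X → X) (x y : X) : Prop :=
  ∀ ε > (0:ℝ), ∃ (T : ℝ) (γ : ℝ → X), IsShadowChain F ε T γ x y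

/-- Conley chain-recurrent points. -/
def RC (F : ℝ → X → X) : Set X :=
  {x | (∀ t ≥ (0:ℝ), F t x = x) ∨ ∃ y, ConleyLe F x y ∧ ConleyLe F y x}

/-- Shadow chain-recurrent points. -/
def RS (F : ℝ → X → X) : Set X :=
  {x | (∀ t ≥ (0:ℝ), F t x = x) ∨ ∃ y, ShadowLe F x y ∧ ShadowLe F y x}

/-- A Conley node: a maximal set of mutually Conley chain-equivalent points. -/
def IsConleyNode (F : ℝ → X → X) (M : Set X) : Prop :=
  (∀ x ∈ M, ∀ y ∈ M, ConleyLe F x y ∧ ConleyLe F y x) ∧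
  ∀ M' : Set X, M ⊆ M' → (∀ x ∈ M', ∀ y ∈ M', ConleyLe F x y ∧ ConleyLe F y x) → M' = M

/-- A shadow node: a maximal set of mutually shadow chain-equivalent points. -/
def IsShadowNode (F : ℝ → X → X) (M : Set X) : Prop :=
  (∀ x ∈ M, ∀ y ∈ M, ShadowLe F x y ∧ ShadowLe F y x) ∧
  ∀ M' : Set X, M ⊆ M' → (∀ x ∈ M', ∀ y ∈ M', ShadowLe F x y ∧ ShadowLe F y x) → M' = M

/-- `G` attracts `K` under `F`: for every `ε > 0`, eventually `F^t(K) ⊆ N_ε(G)`. -/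
def Attracts (F : ℝ → X → X) (G K : Set X) : Prop :=
  ∀ ε > (0:ℝ), ∃ T > (0:ℝ), ∀ t ≥ T, F t '' K ⊆ Metric.thickening ε G

/-- `W_ε(G) = ⋃_{t ≥ 0} F^t (N_ε(G))`. -/
def Wset (F : ℝ → X → X) (ε : ℝ) (G : Set X) : Set X :=
  ⋃ t ∈ Set.Ici (0:ℝ), F t '' Metric.thickening ε G

/-- `G` is the global attractor of `F`: a maximal invariant compact set
attracting every compact set. -/
def IsGlobalAttractor (F : ℝ → X → X) (G : Set X) : Prop :=
  IsCompact G ∧ (∀ t ≥ (0:ℝ), F t '' G = G) ∧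
  (∀ K : Set X, IsCompact K → Attracts F G K) ∧
  (∀ G' : Set X, IsCompact G' → (∀ t ≥ (0:ℝ), F t '' G' = G') → G' ⊆ G)

/-- `G` is a strong global attractor of `F`: moreover, for some `ε > 0`, `G`
attracts `N_ε(G)` and `F` is uniformly continuous on `[0,1] × W_ε(G)`. -/
def IsStrongGlobalAttractor (F : ℝ → X → X) (G : Set X) : Prop :=
  IsGlobalAttractor F G ∧ ∃ ε > (0:ℝ), Attracts F G (Metric.thickening ε G) ∧
    UniformContinuousOn (fun p : ℝ × X => F p.1 p.2) (Set.Icc (0:ℝ) 1 ×ˢ Wset F ε G)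

namespace RCRS

variable {F : ℝ → X → X}

/-- Total continuous version of the flow map. -/
noncomputable def Phi (F : ℝ → X → X) : ℝ × X → X := fun p => F (max p.1 0) p.2

lemma phi_eq (F : ℝ → X → X) {t : ℝ} (ht : 0 ≤ t) (z : X) : Phi F (t, z) = F t z := by
  simp [Phi, max_eq_left ht]

lemma phi_cont (hF : IsSemiflow F) : Continuous (Phi F) := by
  have hg : Continuous (fun p : ℝ × X => ((max p.1 0 : ℝ), p.2)) := by fun_prop
  have := hF.cont.comp_continuous hg (fun p => by
    simp only [Set.mem_prod, Set.mem_Ici, Set.mem_univ, and_true]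
    exact le_max_right _ _)
  exact this

/-- Asymmetric uniform continuity near a compact set. -/
lemma asymUC {Y : Type*} [MetricSpace Y] {K : Set Y} (hK : IsCompact K) {f : Y → X}
    (hf : Continuous f) :
    ∀ ε > (0:ℝ), ∃ δ > (0:ℝ), ∀ p ∈ K, ∀ q, dist p q < δ → dist (f p) (f q) < ε := by
  intro ε hε
  have hc : ∀ p : Y, ∃ r > (0:ℝ), ∀ q, dist q p < r → dist (f q) (f p) < ε / 2 := by
    intro p
    have := Metric.continuous_iff.1 hf p (ε/2) (by positivity)
    exact this
  choose r hr hball using hc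
  rcases K.eq_empty_or_nonempty with hKe | hKne
  · exact ⟨1, one_pos, by simp [hKe]⟩
  · obtain ⟨s, hs⟩ := hK.elim_finite_subcover (fun p : Y => Metric.ball p (r p / 2))
      (fun p => Metric.isOpen_ball) (fun p hp => Set.mem_iUnion.2 ⟨p, by
        simp [Metric.mem_ball, dist_self, half_pos (hr p)]⟩)
    have hsne : s.Nonempty := by
      rcases hKne with ⟨p, hp⟩
      rcases Set.mem_iUnion₂.1 (hs hp) with ⟨i, hi, _⟩
      exact ⟨i, hi⟩
    refine ⟨(s.inf' hsne (fun p => r p / 2)), ?_, ?_⟩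
    · rcases Finset.exists_mem_eq_inf' hsne (fun p => r p / 2) with ⟨i, _, hieq⟩
      rw [hieq]; exact half_pos (hr i)
    · intro p hp q hq
      rcases Set.mem_iUnion₂.1 (hs hp) with ⟨i, hi, hpi⟩
      have h1 : dist p i < r i := lt_of_lt_of_le (Metric.mem_ball.1 hpi) (by linarith [hr i])
      have h2 : dist q i < r i := by
        have hle : s.inf' hsne (fun p => r p / 2) ≤ r i / 2 := Finset.inf'_le _ hi
        have := Metric.mem_ball.1 hpi
        calc dist q i ≤ dist q p + dist p i := dist_triangle _ _ _
        _ < r i / 2 + r i / 2 := by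
            rw [dist_comm q p]; exact add_lt_add (lt_of_lt_of_le hq hle) this
        _ = r i := by ring
      calc dist (f p) (f q) ≤ dist (f p) (f i) + dist (f q) (f i) := dist_triangle_right _ _ _
      _ < ε/2 + ε/2 := add_lt_add (hball i p h1) (hball i q h2)
      _ = ε := by ring

/-- Asymmetric uniform continuity of the flow near a compact set of points,
uniformly over times in `[0,1]`. -/
lemma asymUCflow (hF : IsSemiflow F) {K : Set X} (hK : IsCompact K) :
    ∀ η > (0:ℝ), ∃ β > (0:ℝ), ∀ σ ∈ Icc (0:ℝ) 1, ∀ a ∈ K, ∀ b : X,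
      dist b a < β → dist (F σ b) (F σ a) < η := by
  intro η hη
  obtain ⟨δ, hδ, hd⟩ := asymUC ((isCompact_Icc : IsCompact (Icc (0:ℝ) 1)).prod hK)
    (phi_cont hF) η hη
  refine ⟨δ, hδ, ?_⟩
  intro σ hσ a ha b hb
  have hdist : dist ((σ, a) : ℝ × X) ((σ, b) : ℝ × X) < δ := by
    rw [Prod.dist_eq]
    simp only [dist_self]
    rw [max_eq_right dist_nonneg, dist_comm a b]
    exact hb
  have h := hd (σ, a) ⟨hσ, ha⟩ (σ, b) hdist
  rw [phi_eq F hσ.1, phi_eq F hσ.1] at h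
  rw [dist_comm]
  exact h

/-- Error propagation along a curve that is `δ`-close to the flow over unit windows:
if the flow has a modulus of continuity (condition `Q` on the true-orbit side, `P`
on the curve side), then over a horizon of `m` units, choosing `δ` small enough,
the curve stays `θ`-close to the true orbit. -/
lemma amp (hF : IsSemiflow F) (P Q : X → Prop)
    (hmod : ∀ η > (0:ℝ), ∃ β > (0:ℝ), ∀ σ ∈ Icc (0:ℝ) 1, ∀ a b : X,
      Q a → P b → dist b a < β → dist (F σ b) (F σ a) < η) :
    ∀ (m : ℕ) (θP : ℝ), 0 < θP → ∀ θ : ℝ, 0 < θ → θ ≤ θP →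
    ∃ δ, 0 < δ ∧ δ ≤ θ ∧ ∀ (γ : ℝ → X) (s R : ℝ), 0 ≤ s →
      (∀ j : ℕ, j ≤ m → Q (F (j:ℝ) (γ s))) →
      (∀ j : ℕ, j ≤ m → ∀ z : X, dist z (F (j:ℝ) (γ s)) < θP → P z) →
      (∀ τ ∈ Icc (0:ℝ) 1, ∀ r : ℝ, 0 ≤ r → r + τ ≤ R →
        dist (γ (s + r + τ)) (F τ (γ (s + r))) < δ) →
      ∀ r : ℝ, 0 ≤ r → r ≤ (m:ℝ) → r ≤ R → dist (γ (s + r)) (F r (γ s)) < θ := by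
  intro m
  induction m with
  | zero =>
    intro θP hθP θ hθ hθle
    refine ⟨θ, hθ, le_refl θ, ?_⟩
    intro γ s R hs _ _ _ r hr hrm _
    have : r = 0 := le_antisymm (by exact_mod_cast hrm) hr
    subst this
    rw [add_zero, hF.map_zero, dist_self]
    exact hθ
  | succ m ih =>
    intro θP hθP θ hθ hθle
    obtain ⟨β, hβ, hmodβ⟩ := hmod (θ/2) (by positivity)
    set θ' := min (θ/2) β with hθ'def
    have hθ'pos : 0 < θ' := lt_min (by positivity) hβ
    have hθ'le : θ' ≤ θP := le_trans (min_le_left _ _) (by linarith)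
    obtain ⟨δ, hδ, hδle, hIH⟩ := ih θP hθP θ' hθ'pos hθ'le
    refine ⟨δ, hδ, le_trans hδle (le_trans (min_le_left _ _) (by linarith)), ?_⟩
    intro γ s R hs hQ hP hclose r hr hrm hrR
    have hQ' : ∀ j : ℕ, j ≤ m → Q (F (j:ℝ) (γ s)) := fun j hj => hQ j (Nat.le_succ_of_le hj)
    have hP' : ∀ j : ℕ, j ≤ m → ∀ z : X, dist z (F (j:ℝ) (γ s)) < θP → P z :=
      fun j hj => hP j (Nat.le_succ_of_le hj)
    by_cases hcase : r ≤ (m:ℝ)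
    · exact lt_of_lt_of_le (hIH γ s R hs hQ' hP' hclose r hr hcase hrR)
        (le_trans (min_le_left _ _) (by linarith))
    · push_neg at hcase
      set σ := r - (m:ℝ) with hσdef
      have hσ0 : 0 < σ := by simp [hσdef]; linarith
      have hσ1 : σ ≤ 1 := by
        have : r ≤ (m:ℝ) + 1 := by exact_mod_cast hrm
        simp [hσdef]; linarith
      have hmR : (m:ℝ) ≤ R := le_trans (le_of_lt hcase) hrR
      -- anchor at integer time m
      have hanch : dist (γ (s + (m:ℝ))) (F (m:ℝ) (γ s)) < θ' :=
        hIH γ s R hs hQ' hP' hclose (m:ℝ) (Nat.cast_nonneg m) (le_refl _) hmR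
      -- one more (fractional) step
      have hc : dist (γ (s + (m:ℝ) + σ)) (F σ (γ (s + (m:ℝ)))) < δ :=
        hclose σ ⟨le_of_lt hσ0, hσ1⟩ (m:ℝ) (Nat.cast_nonneg m) (by simp [hσdef]; linarith)
      have hQm : Q (F (m:ℝ) (γ s)) := hQ m (Nat.le_succ m)
      have hPm : P (γ (s + (m:ℝ))) := hP m (Nat.le_succ m) _ (lt_of_lt_of_le hanch hθ'le)
      have hpush : dist (F σ (γ (s + (m:ℝ)))) (F σ (F (m:ℝ) (γ s))) < θ/2 :=
        hmodβ σ ⟨le_of_lt hσ0, hσ1⟩ _ _ hQm hPm (lt_of_lt_of_le hanch (min_le_right _ _))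
      have hsplit : F r (γ s) = F σ (F (m:ℝ) (γ s)) := by
        rw [← hF.map_add σ (m:ℝ) (le_of_lt hσ0) (Nat.cast_nonneg m)]
        congr 1
        rw [hσdef]; ring
      have hrw : s + r = s + (m:ℝ) + σ := by rw [hσdef]; ring
      rw [hrw, hsplit]
      calc dist (γ (s + (m:ℝ) + σ)) (F σ (F (m:ℝ) (γ s)))
          ≤ dist (γ (s + (m:ℝ) + σ)) (F σ (γ (s + (m:ℝ))))
            + dist (F σ (γ (s + (m:ℝ)))) (F σ (F (m:ℝ) (γ s))) := dist_triangle _ _ _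
        _ < δ + θ/2 := add_lt_add hc hpush
        _ ≤ θ := by
            have : δ ≤ θ/2 := le_trans hδle (min_le_left _ _)
            linarith

/-- Concatenation of shadow chains at a fixed junction point. -/
lemma concat (hF : IsSemiflow F) (p : X) (δ : ℝ) (hδ : 0 < δ) :
    ∃ δ', 0 < δ' ∧ δ' ≤ δ ∧ ∀ (x q : X) (T₁ T₂ : ℝ) (γ₁ γ₂ : ℝ → X),
      IsShadowChain F δ' T₁ γ₁ x p → IsShadowChain F δ' T₂ γ₂ p q →
      ∃ γ : ℝ → X, IsShadowChain F δ (T₁ + T₂) γ x q := by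
  obtain ⟨β, hβ, hmod⟩ := asymUCflow hF (isCompact_singleton : IsCompact {p}) (δ/2)
    (by positivity)
  refine ⟨min (δ/2) β, lt_min (by positivity) hβ, le_trans (min_le_left _ _) (by linarith), ?_⟩
  intro x q T₁ T₂ γ₁ γ₂ h₁ h₂
  set δ' := min (δ/2) β with hδ'def
  have hδ'δ2 : δ' ≤ δ/2 := min_le_left _ _
  have hδ'β : δ' ≤ β := min_le_right _ _
  obtain ⟨hT₁, hPC₁, hx₁, hp₁, hcl₁⟩ := h₁
  obtain ⟨hT₂, hPC₂, hp₂, hq₂, hcl₂⟩ := h₂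
  obtain ⟨⟨S₁, hcont₁⟩, hleft₁, hright₁⟩ := hPC₁
  obtain ⟨⟨S₂, hcont₂⟩, hleft₂, hright₂⟩ := hPC₂
  set γ : ℝ → X := fun s => if s < T₁ then γ₁ s else γ₂ (s - T₁) with hγdef
  have hγlt : ∀ s, s < T₁ → γ s = γ₁ s := fun s hs => if_pos hs
  have hγge : ∀ s, T₁ ≤ s → γ s = γ₂ (s - T₁) := fun s hs => if_neg (not_lt.2 hs)
  refine ⟨γ, by linarith, ?_, ?_, ?_, ?_⟩
  · -- piecewise continuity of the concatenation
    refine ⟨⟨(S₁ ∪ S₂.image (· + T₁)) ∪ {T₁}, ?_⟩, ?_, ?_⟩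
    · intro u hu hS
      have huT₁ : u ≠ T₁ := fun h => hS (Finset.mem_union.2 (Or.inr (Finset.mem_singleton.2 h)))
      rcases lt_or_gt_of_ne huT₁ with hu1 | hu1
      · have hmem : Iio T₁ ∈ nhdsWithin u (Icc 0 (T₁+T₂)) :=
          mem_nhdsWithin_of_mem_nhds (Iio_mem_nhds hu1)
        have h1 : ContinuousWithinAt γ₁ (Icc 0 T₁) u :=
          hcont₁ u ⟨hu.1, le_of_lt hu1⟩
            (fun hm => hS (Finset.mem_union.2 (Or.inl (Finset.mem_union.2 (Or.inl hm)))))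
        have h2 : ContinuousWithinAt γ₁ (Icc 0 (T₁+T₂)) u := by
          refine h1.mono_of_mem_nhdsWithin ?_
          filter_upwards [hmem, self_mem_nhdsWithin] with s hs1 hs2
          exact ⟨hs2.1, le_of_lt hs1⟩
        refine h2.congr_of_eventuallyEq ?_ (hγlt u hu1)
        filter_upwards [hmem] with s hs
        exact hγlt s hs
      · have hmem : Ioi T₁ ∈ nhdsWithin u (Icc 0 (T₁+T₂)) :=
          mem_nhdsWithin_of_mem_nhds (Ioi_mem_nhds hu1)
        have h1 : ContinuousWithinAt γ₂ (Icc 0 T₂) (u - T₁) := by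
          refine hcont₂ (u - T₁) ⟨by linarith, by linarith [hu.2]⟩ ?_
          intro hm
          refine hS (Finset.mem_union.2 (Or.inl (Finset.mem_union.2 (Or.inr ?_))))
          exact Finset.mem_image.2 ⟨u - T₁, hm, by ring⟩
        have hcw : ContinuousWithinAt (fun s => γ₂ (s - T₁)) (Icc 0 (T₁+T₂) ∩ Ioi T₁) u := by
          refine ContinuousWithinAt.comp h1 ((continuous_sub_right T₁).continuousWithinAt) ?_
          intro s hs
          have h2 := Set.mem_Ioi.1 hs.2
          have h3 := (Set.mem_Icc.1 hs.1).2
          show s - T₁ ∈ Icc 0 T₂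
          exact Set.mem_Icc.2 ⟨by linarith, by linarith⟩
        have h2 : ContinuousWithinAt (fun s => γ₂ (s - T₁)) (Icc 0 (T₁+T₂)) u :=
          hcw.mono_of_mem_nhdsWithin (inter_mem self_mem_nhdsWithin hmem)
        refine h2.congr_of_eventuallyEq ?_ (hγge u (le_of_lt hu1))
        filter_upwards [hmem] with s hs
        exact hγge s (le_of_lt hs)
    · -- left limits
      intro u hu
      by_cases hu1 : u ≤ T₁
      · obtain ⟨L, hL⟩ := hleft₁ u ⟨hu.1, hu1⟩
        refine ⟨L, hL.congr' ?_⟩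
        refine Filter.eventuallyEq_of_mem self_mem_nhdsWithin ?_
        intro s hs
        exact (hγlt s (lt_of_lt_of_le hs hu1)).symm
      · push_neg at hu1
        obtain ⟨L, hL⟩ := hleft₂ (u - T₁) ⟨by linarith, by linarith [hu.2]⟩
        have hsub : Filter.Tendsto (fun s : ℝ => s - T₁) (nhdsWithin u (Iio u))
            (nhdsWithin (u - T₁) (Iio (u - T₁))) := by
          rw [nhdsWithin, nhdsWithin]
          refine Filter.Tendsto.inf ((continuous_sub_right T₁).tendsto u) ?_
          refine tendsto_principal_principal.2 ?_
          intro s hs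
          exact sub_lt_sub_right hs T₁
        refine ⟨L, (hL.comp hsub).congr' ?_⟩
        refine Filter.eventuallyEq_of_mem (Ioo_mem_nhdsLT hu1) ?_
        intro s hs
        exact (hγge s (le_of_lt hs.1)).symm
    · -- right limits
      intro u hu
      by_cases hu1 : u < T₁
      · obtain ⟨L, hL⟩ := hright₁ u ⟨hu.1, hu1⟩
        refine ⟨L, hL.congr' ?_⟩
        refine Filter.eventuallyEq_of_mem (Ioo_mem_nhdsGT hu1) ?_
        intro s hs
        exact (hγlt s hs.2).symm
      · push_neg at hu1
        obtain ⟨L, hL⟩ := hright₂ (u - T₁) ⟨by linarith, by linarith [hu.2]⟩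
        have hsub : Filter.Tendsto (fun s : ℝ => s - T₁) (nhdsWithin u (Ioi u))
            (nhdsWithin (u - T₁) (Ioi (u - T₁))) := by
          rw [nhdsWithin, nhdsWithin]
          refine Filter.Tendsto.inf ((continuous_sub_right T₁).tendsto u) ?_
          refine tendsto_principal_principal.2 ?_
          intro s hs
          exact sub_lt_sub_right hs T₁
        refine ⟨L, (hL.comp hsub).congr' ?_⟩
        refine Filter.eventuallyEq_of_mem self_mem_nhdsWithin ?_
        intro s hs
        exact (hγge s (le_of_lt (lt_of_le_of_lt hu1 hs))).symm
  · -- starts at x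
    rw [hγlt 0 (by linarith), hx₁]
  · -- ends at q
    rw [hγge (T₁ + T₂) (by linarith), show T₁ + T₂ - T₁ = T₂ from by ring, hq₂]
  · -- ε-closeness
    intro τ hτ u hu
    by_cases hc1 : u + τ < T₁
    · have hu1 : u < T₁ := by linarith [hτ.1]
      rw [hγlt (u + τ) hc1, hγlt u hu1]
      exact lt_of_lt_of_le (hcl₁ τ hτ (u) ⟨hu.1, by linarith⟩) (by linarith)
    · push_neg at hc1
      by_cases hc2 : u < T₁
      · -- window crossing the junction
        set σ := u + τ - T₁ with hσdef
        have hσ0 : 0 ≤ σ := by rw [hσdef]; linarith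
        have hστ : σ ≤ τ := by rw [hσdef]; linarith
        have hσ1 : σ ≤ 1 := le_trans hστ hτ.2
        have hb : dist (F (T₁ - u) (γ₁ u)) p < δ' := by
          have h := hcl₁ (T₁ - u) ⟨by linarith, by linarith [hτ.2]⟩ u ⟨hu.1, by linarith⟩
          rw [show u + (T₁ - u) = T₁ from by ring, hp₁] at h
          rw [dist_comm]
          exact h
        have h2a : dist (γ₂ σ) (F σ p) < δ' := by
          have h := hcl₂ σ ⟨hσ0, hσ1⟩ 0 ⟨le_refl 0, by linarith⟩
          rw [zero_add, hp₂] at h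
          exact h
        have h2b : dist (F σ (F (T₁ - u) (γ₁ u))) (F σ p) < δ/2 :=
          hmod σ ⟨hσ0, hσ1⟩ p rfl (F (T₁ - u) (γ₁ u)) (lt_of_lt_of_le hb hδ'β)
        have hsplit : F τ (γ u) = F σ (F (T₁ - u) (γ₁ u)) := by
          rw [hγlt u hc2, ← hF.map_add σ (T₁ - u) hσ0 (by linarith)]
          congr 1
          rw [hσdef]; ring
        rw [hγge (u + τ) hc1, hsplit]
        calc dist (γ₂ (u + τ - T₁)) (F σ (F (T₁ - u) (γ₁ u)))
            ≤ dist (γ₂ σ) (F σ p) + dist (F σ p) (F σ (F (T₁ - u) (γ₁ u))) := by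
              rw [← hσdef]; exact dist_triangle _ _ _
          _ < δ' + δ/2 := add_lt_add h2a (by rw [dist_comm]; exact h2b)
          _ ≤ δ := by linarith
      · push_neg at hc2
        rw [hγge (u + τ) hc1, hγge u hc2]
        have h := hcl₂ τ hτ (u - T₁) ⟨by linarith, by linarith [hu.2]⟩
        rw [show u - T₁ + τ = u + τ - T₁ from by ring] at h
        exact lt_of_lt_of_le h (by linarith)

/-- Shadow chains between mutually shadow-related points can be made arbitrarily long. -/
lemma lengthen (hF : IsSemiflow F) (x y : X) (hxy : ShadowLe F x y) (hyx : ShadowLe F y x) :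
    ∀ i : ℕ, ∀ δ > (0:ℝ), ∃ T : ℝ, (i:ℝ) ≤ T ∧ ∃ γ : ℝ → X, IsShadowChain F δ T γ x y := by
  intro i
  induction i with
  | zero =>
    intro δ hδ
    obtain ⟨T, γ, hγ⟩ := hxy δ hδ
    exact ⟨T, by exact_mod_cast le_trans zero_le_one hγ.1, γ, hγ⟩
  | succ i ih =>
    intro δ hδ
    obtain ⟨δ₁, hδ₁, hδ₁le, hcat₁⟩ := concat hF x δ hδ
    obtain ⟨δ₂, hδ₂, hδ₂le, hcat₂⟩ := concat hF y δ₁ hδ₁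
    obtain ⟨TA, hTA, γA, hA⟩ := ih δ₂ hδ₂
    obtain ⟨TB, γB, hB⟩ := hyx δ₂ hδ₂
    obtain ⟨TC, γC, hC⟩ := hxy δ₁ hδ₁
    obtain ⟨γAB, hAB⟩ := hcat₂ x x TA TB γA γB hA hB
    obtain ⟨γfull, hfull⟩ := hcat₁ x y (TA + TB) TC γAB γC hAB hC
    refine ⟨TA + TB + TC, ?_, γfull, hfull⟩
    have h1 : (1:ℝ) ≤ TB := hB.1
    have h2 : (0:ℝ) ≤ TC := le_trans zero_le_one hC.1
    push_cast
    linarith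

section Attractor

variable (hF : IsSemiflow F) {G : Set X} {ε₀ : ℝ} (hε₀ : 0 < ε₀)
  (hGc : IsCompact G)
  (hinv : ∀ t ≥ (0:ℝ), F t '' G = G)
  (hattK : ∀ K : Set X, IsCompact K → Attracts F G K)
  (hAtt : Attracts F G (Metric.thickening ε₀ G))

include hF hε₀ hGc hinv hattK hAtt

/-- Points `ε₀`-close to `G` belong to `W`. -/
lemma thick_subset_W : Metric.thickening ε₀ G ⊆ Wset F ε₀ G := by
  intro z hz
  refine Set.mem_biUnion (Set.self_mem_Ici) ?_
  exact ⟨z, hz, hF.map_zero z⟩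

/-- Forward orbits of points `ε₀`-close to `G` stay in `W`. -/
lemma orbit_mem_W {z : X} (hz : z ∈ Metric.thickening ε₀ G) {t : ℝ} (ht : 0 ≤ t) :
    F t z ∈ Wset F ε₀ G := by
  exact Set.mem_biUnion ht ⟨z, hz, rfl⟩

/-- Persistence: points near `G` stay near `G` for one unit of time. -/
lemma persist : ∀ α > (0:ℝ), ∃ β, 0 < β ∧ β ≤ α ∧ ∀ z ∈ Metric.thickening β G,
    ∀ σ ∈ Icc (0:ℝ) 1, F σ z ∈ Metric.thickening α G := by
  intro α hα
  obtain ⟨β, hβ, hmod⟩ := asymUCflow hF hGc α hα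
  refine ⟨min β α, lt_min hβ hα, min_le_right _ _, ?_⟩
  intro z hz σ hσ
  obtain ⟨g, hg, hzg⟩ := Metric.mem_thickening_iff.1 hz
  have hFg : F σ g ∈ G := by
    have := hinv σ hσ.1
    rw [← this]
    exact Set.mem_image_of_mem _ hg
  have := hmod σ hσ g hg z (lt_of_lt_of_le hzg (min_le_left _ _))
  exact Metric.mem_thickening_iff.2 ⟨F σ g, hFg, this⟩

/-- Iterated persistence: points near `G` stay near `G` for `m` units of time. -/
lemma persistIter : ∀ α > (0:ℝ), ∀ m : ℕ, ∃ β, 0 < β ∧ β ≤ α ∧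
    ∀ z ∈ Metric.thickening β G, ∀ r : ℝ, 0 ≤ r → r ≤ (m:ℝ) →
      F r z ∈ Metric.thickening α G := by
  intro α hα m
  induction m with
  | zero =>
    refine ⟨α, hα, le_refl α, ?_⟩
    intro z hz r hr hrm
    have : r = 0 := le_antisymm (by exact_mod_cast hrm) hr
    subst this
    rw [hF.map_zero]; exact hz
  | succ m ih =>
    obtain ⟨β, hβ, hβle, hP⟩ := ih
    obtain ⟨β', hβ', hβ'le, hP'⟩ := persist hF hε₀ hGc hinv hattK hAtt β hβ
    refine ⟨β', hβ', le_trans hβ'le hβle, ?_⟩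
    intro z hz r hr hrm
    by_cases hcase : r ≤ 1
    · exact Metric.thickening_mono hβle G (hP' z hz r ⟨hr, hcase⟩)
    · push_neg at hcase
      have h1 : F r z = F (r - 1) (F 1 z) := by
        rw [← hF.map_add (r-1) 1 (by linarith) zero_le_one]
        congr 1; ring
      rw [h1]
      refine hP (F 1 z) (hP' z hz 1 ⟨zero_le_one, le_refl 1⟩) (r - 1) (by linarith) ?_
      push_cast at hrm ⊢; linarith

/-- Excursion bound: points sufficiently close to `G` have their whole forward
orbit within `α` of `G`. -/
lemma excursion : ∀ α > (0:ℝ), ∃ lam, 0 < lam ∧ lam ≤ α ∧ lam ≤ ε₀ ∧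
    ∀ z ∈ Metric.thickening lam G, ∀ t : ℝ, 0 ≤ t →
      F t z ∈ Metric.thickening α G := by
  intro α hα
  obtain ⟨T₁, hT₁, hT₁p⟩ := hAtt α hα
  set m : ℕ := ⌈T₁⌉₊ with hm
  obtain ⟨β, hβ, hβle, hP⟩ := persistIter hF hε₀ hGc hinv hattK hAtt (min α ε₀) (lt_min hα hε₀) m
  refine ⟨β, hβ, le_trans hβle (min_le_left _ _), le_trans hβle (min_le_right _ _), ?_⟩
  intro z hz t ht
  by_cases hcase : t ≤ (m:ℝ)
  · exact Metric.thickening_mono (min_le_left _ _) G (hP z hz t ht hcase)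
  · push_neg at hcase
    have htT₁ : T₁ ≤ t := le_trans (Nat.le_ceil T₁) (le_of_lt hcase)
    refine hT₁p t htT₁ ⟨z, ?_, rfl⟩
    exact Metric.thickening_mono (le_trans hβle (min_le_right _ _)) G hz

/-- Attraction of a single point. -/
lemma attrPt (x : X) : ∀ α > (0:ℝ), ∃ Tx > (0:ℝ), ∀ t : ℝ, Tx ≤ t →
    F t x ∈ Metric.thickening α G := by
  intro α hα
  obtain ⟨Tx, hTx, hp⟩ := hattK {x} isCompact_singleton α hα
  exact ⟨Tx, hTx, fun t ht => hp t ht ⟨x, rfl, rfl⟩⟩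


section Conv2

variable (hUC : UniformContinuousOn (fun p : ℝ × X => F p.1 p.2)
    (Set.Icc (0:ℝ) 1 ×ˢ Wset F ε₀ G))

include hUC

/-- From Conley chains we can build shadow chains: `≽_C` implies `≽_S`. -/
lemma conleyLe_shadowLe (x y : X) (hC : ConleyLe F x y) : ShadowLe F x y := by
  classical
  intro ε hε
  obtain ⟨δU, hδU, hUCp⟩ := Metric.uniformContinuousOn_iff.1 hUC ε hε
  obtain ⟨T₁, hT₁pos, hT₁⟩ := hAtt (ε₀/2) (by positivity)
  obtain ⟨Tx, hTxpos, hTx⟩ := attrPt hF hε₀ hGc hinv hattK hAtt x (ε₀/2) (by positivity)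
  set δ := min (min ε δU) (ε₀/2) with hδdef
  have hδpos : 0 < δ := lt_min (lt_min hε hδU) (by positivity)
  have hδε : δ ≤ ε := le_trans (min_le_left _ _) (min_le_left _ _)
  have hδU' : δ ≤ δU := le_trans (min_le_left _ _) (min_le_right _ _)
  have hδε₀ : δ ≤ ε₀/2 := min_le_right _ _
  set T := max 1 (max Tx T₁) with hTdef
  have hT1 : (1:ℝ) ≤ T := le_max_left _ _
  obtain ⟨N, c, tc, hN, hc0, hcN, hstep⟩ := hC δ hδpos T (by linarith)
  -- partial sums of the chain times
  set S : ℕ → ℝ := fun n => ∑ i ∈ Finset.range n, tc i with hSdef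
  have hS0 : S 0 = 0 := by simp [hSdef]
  have hSsucc : ∀ n, S (n + 1) = S n + tc n := by
    intro n; simp [hSdef, Finset.sum_range_succ]
  have htc1 : ∀ i, i < N → 1 ≤ tc i := fun i hi => le_trans hT1 (hstep i hi).1
  have htcT : ∀ i, i < N → T ≤ tc i := fun i hi => (hstep i hi).1
  have hSstep : ∀ i, i < N → S i + 1 ≤ S (i + 1) := by
    intro i hi; rw [hSsucc]; linarith [htc1 i hi]
  have hSmono : ∀ j, j ≤ N → ∀ i, i ≤ j → S i ≤ S j := by
    intro j hj
    induction j with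
    | zero => intro i hi; rw [Nat.le_zero.1 hi]
    | succ j ih =>
      intro i hi
      rcases (by omega : i ≤ j ∨ i = j + 1) with h | h
      · exact le_trans (ih (by omega) i h) (by linarith [hSstep j (by omega)])
      · rw [h]
  have hSnn : ∀ i, i ≤ N → 0 ≤ S i := by
    intro i hi
    have h := hSmono i hi 0 (Nat.zero_le i)
    rw [hS0] at h
    exact h
  have hSN1 : 1 ≤ S N := by
    have h1 : S 0 + 1 ≤ S 1 := hSstep 0 hN
    have h2 : S 1 ≤ S N := hSmono N (le_refl N) 1 hN
    rw [hS0] at h1; linarith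
  -- the index of the piece containing time s
  set I : ℝ → ℕ := fun s => Nat.findGreatest (fun i => S i ≤ s) (N - 1) with hIdef
  have hIle : ∀ s, I s ≤ N - 1 := fun s => Nat.findGreatest_le _
  have hIspec : ∀ s, 0 ≤ s → S (I s) ≤ s := by
    intro s hs
    exact Nat.findGreatest_spec (P := fun i => S i ≤ s) (n := N - 1) (Nat.zero_le _)
      (show S 0 ≤ s by rw [hS0]; exact hs)
  have hIgt : ∀ s, ∀ j, j ≤ N - 1 → I s < j → s < S j := by
    intro s j hj hlt
    have h := Nat.findGreatest_is_greatest (P := fun i => S i ≤ s) hlt hj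
    exact lt_of_not_ge (by simpa using h)
  have hIub : ∀ s, 0 ≤ s → s < S N → s < S (I s + 1) := by
    intro s hs hsN
    by_cases h : I s = N - 1
    · rw [h]
      have : N - 1 + 1 = N := by omega
      rw [this]; exact hsN
    · exact hIgt s (I s + 1) (by have := hIle s; omega) (Nat.lt_succ_self _)
  have hI_eq : ∀ s, ∀ i, i ≤ N - 1 → S i ≤ s → s < S (i + 1) → I s = i := by
    intro s i hi hle hlt
    have h1 : i ≤ I s := Nat.le_findGreatest hi hle
    have h2 : I s ≤ i := by
      by_contra h
      push_neg at h
      have hIsle : S (I s) ≤ s := by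
        have : (0:ℝ) ≤ s := le_trans (hSnn i (by omega)) hle
        exact hIspec s this
      have : S (i+1) ≤ S (I s) := hSmono (I s) (by have := hIle s; omega) (i+1) h
      linarith
    omega
  -- the curve: concatenated orbit pieces
  set γ : ℝ → X := fun s => if s < S N then F (s - S (I s)) (c (I s)) else y with hγdef
  have hpieceEq : ∀ i, i ≤ N - 1 → ∀ s, S i ≤ s → s < S (i+1) → γ s = F (s - S i) (c i) := by
    intro i hi s hle hlt
    have hsN : s < S N := lt_of_lt_of_le hlt (hSmono N (le_refl N) (i+1) (by omega))
    rw [hγdef]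
    simp only [if_pos hsN]
    rw [hI_eq s i hi hle hlt]
  -- trapping of chain points near the attractor
  have hFstep0 : F (tc 0) (c 0) ∈ Metric.thickening (ε₀/2) G := by
    rw [hc0]
    exact hTx (tc 0) (le_trans (le_max_left _ _) (le_trans (le_max_right 1 _) (htcT 0 hN)))
  have hnext : ∀ i, i < N → F (tc i) (c i) ∈ Metric.thickening (ε₀/2) G →
      c (i+1) ∈ Metric.thickening ε₀ G := by
    intro i hi hmem
    obtain ⟨g, hg, hd⟩ := Metric.mem_thickening_iff.1 hmem
    refine Metric.mem_thickening_iff.2 ⟨g, hg, ?_⟩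
    have hdist := (hstep i hi).2
    calc dist (c (i+1)) g ≤ dist (c (i+1)) (F (tc i) (c i)) + dist (F (tc i) (c i)) g :=
        dist_triangle _ _ _
      _ < δ + ε₀/2 := by rw [dist_comm]; exact add_lt_add hdist hd
      _ ≤ ε₀ := by linarith
  have htrapF : ∀ i, i < N → F (tc i) (c i) ∈ Metric.thickening (ε₀/2) G ∧
      (1 ≤ i → c i ∈ Metric.thickening ε₀ G) := by
    intro i
    induction i with
    | zero => exact fun _ => ⟨hFstep0, by omega⟩
    | succ i ih =>
      intro hi
      have hiN : i < N := by omega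
      have hc' : c (i+1) ∈ Metric.thickening ε₀ G := hnext i hiN (ih hiN).1
      refine ⟨?_, fun _ => hc'⟩
      have := hT₁ (tc (i+1)) (le_trans (le_trans (le_max_right Tx T₁) (le_max_right 1 _)) (htcT (i+1) hi))
      exact this ⟨c (i+1), hc', rfl⟩
  have htrapc : ∀ i, 1 ≤ i → i ≤ N → c i ∈ Metric.thickening ε₀ G := by
    intro i h1 h2
    rcases Nat.lt_or_ge i N with h | h
    · exact (htrapF i h).2 h1
    · have hiN : i = N := by omega
      have hN1 : N - 1 + 1 = N := by omega
      rw [hiN, ← hN1]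
      exact hnext (N-1) (by omega) (htrapF (N-1) (by omega)).1
  -- memberships in W
  have hWF : ∀ i, i < N → F (tc i) (c i) ∈ Wset F ε₀ G :=
    fun i hi => thick_subset_W hF hε₀ hGc hinv hattK hAtt
      (Metric.thickening_mono (by linarith) G (htrapF i hi).1)
  have hWc : ∀ i, 1 ≤ i → i ≤ N → c i ∈ Wset F ε₀ G :=
    fun i h1 h2 => thick_subset_W hF hε₀ hGc hinv hattK hAtt (htrapc i h1 h2)
  refine ⟨S N, γ, hSN1, ?_, ?_, ?_, ?_⟩
  · -- piecewise continuity
    refine ⟨⟨(Finset.range (N+1)).image S, ?_⟩, ?_, ?_⟩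
    · -- continuity away from the junctions
      intro u hu hS
      have hune : ∀ k, k ≤ N → u ≠ S k := by
        intro k hk he
        exact hS (Finset.mem_image.2 ⟨k, Finset.mem_range.2 (by omega), he.symm⟩)
      have huN : u < S N := lt_of_le_of_ne hu.2 (hune N (le_refl N))
      have hu0 : 0 ≤ u := hu.1
      set i := I u with hidef
      have h1 : S i < u := lt_of_le_of_ne (hIspec u hu0) (fun h => hune i (by have := hIle u; omega) h.symm)
      have h2 : u < S (i+1) := hIub u hu0 huN
      have hg : ContinuousAt (fun s : ℝ => Phi F (s - S i, c i)) u := by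
        have hcon : Continuous (fun s : ℝ => Phi F (s - S i, c i)) :=
          (phi_cont hF).comp (by fun_prop)
        exact hcon.continuousAt
      have hev : (fun s : ℝ => Phi F (s - S i, c i)) =ᶠ[nhds u] γ := by
        filter_upwards [isOpen_Ioo.mem_nhds (⟨h1, h2⟩ : u ∈ Ioo (S i) (S (i+1)))] with s hs
        show Phi F (s - S i, c i) = γ s
        rw [hpieceEq i (by have := hIle u; omega) s (le_of_lt hs.1) hs.2,
          phi_eq F (by linarith [hs.1] : (0:ℝ) ≤ s - S i)]
      exact (hg.congr hev).continuousWithinAt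
    · -- left limits
      intro u hu
      have hu0 : 0 < u := hu.1
      set i := Nat.findGreatest (fun i => S i < u) (N - 1) with hidef
      have hispec : S i < u := Nat.findGreatest_spec (P := fun i => S i < u) (Nat.zero_le _)
        (show S 0 < u by rw [hS0]; exact hu0)
      have hile : i ≤ N - 1 := Nat.findGreatest_le _
      have hub : u ≤ S (i + 1) := by
        by_cases h : i = N - 1
        · rw [h]
          have : N - 1 + 1 = N := by omega
          rw [this]; exact hu.2
        · have h := Nat.findGreatest_is_greatest (P := fun i => S i < u)
            (Nat.lt_succ_self i) (by omega)
          exact le_of_not_gt (by simpa using h)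
      refine ⟨Phi F (u - S i, c i), ?_⟩
      have hg : Filter.Tendsto (fun s : ℝ => Phi F (s - S i, c i)) (nhdsWithin u (Set.Iio u))
          (nhds (Phi F (u - S i, c i))) := by
        have hcon : Continuous (fun s : ℝ => Phi F (s - S i, c i)) :=
          (phi_cont hF).comp (by fun_prop)
        exact (hcon.continuousAt.tendsto).mono_left nhdsWithin_le_nhds
      refine hg.congr' ?_
      refine Filter.eventuallyEq_of_mem (Ioo_mem_nhdsLT hispec) ?_
      intro s hs
      show Phi F (s - S i, c i) = γ s
      rw [hpieceEq i hile s (le_of_lt hs.1) (lt_of_lt_of_le hs.2 hub),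
        phi_eq F (by linarith [hs.1] : (0:ℝ) ≤ s - S i)]
    · -- right limits
      intro u hu
      have hu0 : 0 ≤ u := hu.1
      have huN : u < S N := hu.2
      set i := I u with hidef
      have h1 : S i ≤ u := hIspec u hu0
      have h2 : u < S (i+1) := hIub u hu0 huN
      refine ⟨Phi F (u - S i, c i), ?_⟩
      have hg : Filter.Tendsto (fun s : ℝ => Phi F (s - S i, c i)) (nhdsWithin u (Set.Ioi u))
          (nhds (Phi F (u - S i, c i))) := by
        have hcon : Continuous (fun s : ℝ => Phi F (s - S i, c i)) :=
          (phi_cont hF).comp (by fun_prop)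
        exact (hcon.continuousAt.tendsto).mono_left nhdsWithin_le_nhds
      refine hg.congr' ?_
      refine Filter.eventuallyEq_of_mem (Ioo_mem_nhdsGT h2) ?_
      intro s hs
      show Phi F (s - S i, c i) = γ s
      rw [hpieceEq i (by have := hIle u; omega) s (le_of_lt (lt_of_le_of_lt h1 hs.1)) hs.2,
        phi_eq F (by linarith [h1, hs.1] : (0:ℝ) ≤ s - S i)]
  · -- γ 0 = x
    have h0N : (0:ℝ) < S N := by linarith
    have hI0 : I 0 = 0 := by
      refine hI_eq 0 0 (Nat.zero_le _) (le_of_eq hS0) ?_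
      have h01 := hSstep 0 hN
      rw [hS0] at h01
      linarith
    rw [hγdef]
    simp only [if_pos h0N, hI0, hS0, sub_zero, hF.map_zero, hc0]
  · -- γ (S N) = y
    rw [hγdef]
    exact if_neg (lt_irrefl (S N))
  · -- ε-closeness
    intro τ hτ u hu
    by_cases hτ0 : τ = 0
    · subst hτ0
      rw [add_zero, hF.map_zero, dist_self]
      exact hε
    have hτpos : 0 < τ := lt_of_le_of_ne hτ.1 (Ne.symm hτ0)
    have hu0 : 0 ≤ u := hu.1
    have huτ : u + τ ≤ S N := by linarith [hu.2]
    have huN : u < S N := by linarith [hτ.2, hu.2, hτpos]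
    set i := I u with hidef
    have hile : i ≤ N - 1 := hIle u
    have hi1N : i + 1 ≤ N := by omega
    have h1 : S i ≤ u := hIspec u hu0
    have h2 : u < S (i+1) := hIub u hu0 huN
    have hγu : γ u = F (u - S i) (c i) := hpieceEq i hile u h1 h2
    by_cases hend : u + τ < S N
    · set j := I (u + τ) with hjdef
      have hjle : j ≤ N - 1 := hIle (u + τ)
      have hj1 : S j ≤ u + τ := hIspec (u+τ) (by linarith)
      have hj2 : u + τ < S (j+1) := hIub (u+τ) (by linarith) hend
      have hij : i ≤ j := Nat.le_findGreatest hile (by linarith)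
      have hji : j ≤ i + 1 := by
        by_contra h
        push_neg at h
        have hi2j : i + 2 ≤ j := h
        have hSa : S (i+2) ≤ S j := hSmono j (by omega) (i+2) hi2j
        have hSb : S (i+1) + 1 ≤ S (i+2) := hSstep (i+1) (by omega)
        have : τ ≤ 1 := hτ.2
        linarith
      rcases (by omega : j = i ∨ j = i + 1) with hcase | hcase
      · -- same piece: exact orbit relation
        have hγuτ : γ (u+τ) = F (u + τ - S i) (c i) := by
          have h := hpieceEq j hjle (u+τ) hj1 hj2
          rw [hcase] at h
          exact h
        rw [hγuτ, hγu, ← hF.map_add τ (u - S i) hτ.1 (by linarith),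
          show u + τ - S i = τ + (u - S i) from by ring, dist_self]
        exact hε
      · -- crossing one junction: use uniform continuity on W
        have hi1N' : i + 1 ≤ N - 1 := by omega
        have hiN : i < N := by omega
        set σ := u + τ - S (i+1) with hσdef
        have hj1' : S (i+1) ≤ u + τ := by rw [← hcase]; exact hj1
        have hσ0 : 0 ≤ σ := by rw [hσdef]; linarith
        have hσ1 : σ ≤ 1 := by
          have : τ ≤ 1 := hτ.2
          rw [hσdef]; linarith
        have hγuτ : γ (u+τ) = F σ (c (i+1)) := by
          have h := hpieceEq (i+1) hi1N' (u+τ) hj1' (by rw [← hcase] at *; exact hj2)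
          rw [h]
        have htceq : tc i = S (i+1) - S i := by rw [hSsucc]; ring
        have hRHS : F τ (γ u) = F σ (F (tc i) (c i)) := by
          rw [hγu, ← hF.map_add τ (u - S i) hτ.1 (by linarith),
            ← hF.map_add σ (tc i) hσ0 (by linarith [htc1 i hiN])]
          congr 1
          rw [hσdef, htceq]; ring
        rw [hγuτ, hRHS]
        have hWa : c (i+1) ∈ Wset F ε₀ G := hWc (i+1) (by omega) (by omega)
        have hWb : F (tc i) (c i) ∈ Wset F ε₀ G := hWF i hiN
        have hdistab : dist ((σ, c (i+1)) : ℝ × X) ((σ, F (tc i) (c i)) : ℝ × X) < δU := by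
          rw [Prod.dist_eq]
          simp only [dist_self]
          rw [max_eq_right dist_nonneg, dist_comm]
          exact lt_of_lt_of_le (hstep i hiN).2 hδU'
        exact hUCp (σ, c (i+1)) ⟨⟨hσ0, hσ1⟩, hWa⟩ (σ, F (tc i) (c i)) ⟨⟨hσ0, hσ1⟩, hWb⟩ hdistab
    · -- the window ends exactly at the endpoint
      have hEq : u + τ = S N := le_antisymm huτ (not_lt.1 hend)
      have hiN1 : i = N - 1 := by
        by_contra h
        have hi2 : i + 1 ≤ N - 1 := by omega
        have hSa : S (i+1) + 1 ≤ S (i+2) := hSstep (i+1) (by omega)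
        have hSb : S (i+2) ≤ S N := hSmono N (le_refl N) (i+2) (by omega)
        have hτ1 : τ ≤ 1 := hτ.2
        linarith
      have hγuτ : γ (u + τ) = y := by
        rw [hγdef, hEq]
        exact if_neg (lt_irrefl (S N))
      have hNsucc : N - 1 + 1 = N := by omega
      have hSNeq : S N = S (N-1) + tc (N-1) := by
        have h := hSsucc (N-1)
        rw [hNsucc] at h
        exact h
      have hRHS : F τ (γ u) = F (tc (N-1)) (c (N-1)) := by
        rw [hγu, ← hF.map_add τ (u - S i) hτ.1 (by linarith), hiN1]
        congr 1
        linarith [hEq, hSNeq]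
      rw [hγuτ, hRHS, dist_comm]
      have hd := (hstep (N-1) (by omega)).2
      rw [hNsucc, hcN] at hd
      exact lt_of_lt_of_le hd hδε

/-- From arbitrarily long and accurate shadow chains we can build Conley chains. -/
lemma shadowLongToConley (x y : X)
    (h : ∀ δ > (0:ℝ), ∀ L : ℝ, ∃ T : ℝ, L ≤ T ∧ ∃ γ : ℝ → X, IsShadowChain F δ T γ x y) :
    ConleyLe F x y := by
  intro ε hε T hT
  -- uniform-continuity modulus on W
  have hmodW : ∀ η > (0:ℝ), ∃ β > (0:ℝ), ∀ σ ∈ Icc (0:ℝ) 1, ∀ a b : X,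
      a ∈ Wset F ε₀ G → b ∈ Wset F ε₀ G → dist b a < β → dist (F σ b) (F σ a) < η := by
    intro η hη
    obtain ⟨β, hβ, hW⟩ := Metric.uniformContinuousOn_iff.1 hUC η hη
    refine ⟨β, hβ, fun σ hσ a b ha hb hab => ?_⟩
    exact hW (σ, b) ⟨hσ, hb⟩ (σ, a) ⟨hσ, ha⟩ (by
      rw [Prod.dist_eq]
      simp only [dist_self]
      rw [max_eq_right dist_nonneg]
      exact hab)
  obtain ⟨lam, hlam0, hlamα, hlamε₀, hexc⟩ :=
    excursion hF hε₀ hGc hinv hattK hAtt (ε₀/2) (by positivity)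
  obtain ⟨T₁, hT₁0, hT₁⟩ := hAtt (lam/2) (by positivity)
  set m : ℕ := max ⌈T₁⌉₊ 1 with hmdef
  have hm1 : 1 ≤ m := le_max_right _ _
  have hmT₁ : T₁ ≤ (m:ℝ) :=
    le_trans (Nat.le_ceil T₁) (by exact_mod_cast Nat.le_max_left ⌈T₁⌉₊ 1)
  set n₂ : ℕ := max ⌈T⌉₊ 1 with hn₂def
  have hn₂1 : 1 ≤ n₂ := le_max_right _ _
  have hn₂T : T ≤ (n₂:ℝ) :=
    le_trans (Nat.le_ceil T) (by exact_mod_cast Nat.le_max_left ⌈T⌉₊ 1)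
  set nh : ℕ := m * n₂ with hnhdef
  have hnh1 : 1 ≤ nh := Nat.one_le_iff_ne_zero.2 (by positivity)
  have hnhT : T ≤ (nh:ℝ) := by
    refine le_trans hn₂T ?_
    exact_mod_cast Nat.le_mul_of_pos_left n₂ hm1
  obtain ⟨Tx, hTx0, hTx⟩ := attrPt hF hε₀ hGc hinv hattK hAtt x (lam/2) (by positivity)
  set M : ℕ := max ⌈Tx⌉₊ 1 with hMdef
  have hMTx : Tx ≤ (M:ℝ) :=
    le_trans (Nat.le_ceil Tx) (by exact_mod_cast Nat.le_max_left ⌈Tx⌉₊ 1)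
  set B : ℕ := M + nh with hBdef
  -- entry modulus along the orbit segment of x
  set Kx : Set X := (fun t : ℝ => Phi F (t, x)) '' Icc (0:ℝ) (B:ℝ) with hKxdef
  have hKx : IsCompact Kx := isCompact_Icc.image ((phi_cont hF).comp (by fun_prop))
  have hmodE : ∀ η > (0:ℝ), ∃ β > (0:ℝ), ∀ σ ∈ Icc (0:ℝ) 1, ∀ a b : X,
      a ∈ Kx → True → dist b a < β → dist (F σ b) (F σ a) < η := by
    intro η hη
    obtain ⟨β, hβ, hmE⟩ := asymUCflow hF hKx η hη
    exact ⟨β, hβ, fun σ hσ a b ha _ hab => hmE σ hσ a ha b hab⟩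
  set θE := min (min ε (lam/2)) 1 with hθEdef
  have hθE0 : 0 < θE := lt_min (lt_min hε (by positivity)) one_pos
  obtain ⟨δE, hδE0, hδEle, hampE⟩ := amp hF (fun _ => True) (fun z => z ∈ Kx) hmodE
    B 1 one_pos θE hθE0 (min_le_right _ _)
  set θT := lam/2 with hθTdef
  have hθT0 : 0 < θT := by positivity
  have hθTle : θT ≤ ε₀/2 := by
    rw [hθTdef]; linarith
  obtain ⟨δT, hδT0, hδTle, hampT⟩ := amp hF (fun z => z ∈ Wset F ε₀ G)
    (fun z => z ∈ Wset F ε₀ G) (fun η hη => by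
      obtain ⟨β, hβ, hm'⟩ := hmodW η hη
      exact ⟨β, hβ, fun σ hσ a b ha hb => hm' σ hσ a b ha hb⟩)
    m (ε₀/2) (by positivity) θT hθT0 hθTle
  set θH := min (min ε (lam/2)) (ε₀/2) with hθHdef
  have hθH0 : 0 < θH := lt_min (lt_min hε (by positivity)) (by positivity)
  obtain ⟨δH, hδH0, hδHle, hampH⟩ := amp hF (fun z => z ∈ Wset F ε₀ G)
    (fun z => z ∈ Wset F ε₀ G) (fun η hη => by
      obtain ⟨β, hβ, hm'⟩ := hmodW η hη
      exact ⟨β, hβ, fun σ hσ a b ha hb => hm' σ hσ a b ha hb⟩)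
    (2*nh) (ε₀/2) (by positivity) θH hθH0 (min_le_right _ _)
  set δ := min δE (min δT δH) with hδdef
  have hδ0 : 0 < δ := lt_min hδE0 (lt_min hδT0 hδH0)
  have hδE' : δ ≤ δE := min_le_left _ _
  have hδT' : δ ≤ δT := le_trans (min_le_right _ _) (min_le_left _ _)
  have hδH' : δ ≤ δH := le_trans (min_le_right _ _) (min_le_right _ _)
  obtain ⟨R, hRL, γ, hγch⟩ := h δ hδ0 ((M:ℝ) + 3*nh + 1)
  obtain ⟨hR1, hPC, hγ0, hγR, hcl⟩ := hγch
  have hclose : ∀ s : ℝ, 0 ≤ s → ∀ τ ∈ Icc (0:ℝ) 1, ∀ r : ℝ, 0 ≤ r → r + τ ≤ R - s →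
      dist (γ (s + r + τ)) (F τ (γ (s + r))) < δ := by
    intro s hs τ hτ r hr hrR
    have := hcl τ hτ (s + r) ⟨by linarith, by linarith⟩
    rw [show s + r + τ = (s + r) + τ from by ring] at *
    exact this
  have hBR : (B:ℝ) ≤ R := by
    refine le_trans ?_ hRL
    rw [hBdef]
    push_cast
    have hnn : (0:ℝ) ≤ (nh:ℝ) := Nat.cast_nonneg nh
    linarith
  -- entry amplification along x's orbit
  have hQE : ∀ j : ℕ, j ≤ B → (F (j:ℝ) (γ 0)) ∈ Kx := by
    intro j hj
    rw [hγ0]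
    exact ⟨(j:ℝ), ⟨Nat.cast_nonneg j, by exact_mod_cast hj⟩, phi_eq F (Nat.cast_nonneg j) x⟩
  have hentry : ∀ r : ℝ, 0 ≤ r → r ≤ (B:ℝ) → dist (γ r) (F r x) < θE := by
    intro r hr hrB
    have hh := hampE γ 0 R (le_refl 0) hQE (fun j hj z _ => trivial)
      (fun τ hτ r' hr' hle =>
        lt_of_lt_of_le (hclose 0 (le_refl 0) τ hτ r' hr' (by linarith)) hδE')
      r hr hrB (le_trans hrB hBR)
    rw [zero_add, hγ0] at hh
    exact hh
  -- the curve enters the trap at time M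
  have hγM : γ (M:ℝ) ∈ Metric.thickening lam G := by
    have h1 : dist (γ (M:ℝ)) (F (M:ℝ) x) < lam/2 := by
      refine lt_of_lt_of_le (hentry (M:ℝ) (Nat.cast_nonneg M) ?_) ?_
      · rw [hBdef]
        push_cast
        have hnn : (0:ℝ) ≤ (nh:ℝ) := Nat.cast_nonneg nh
        linarith
      · exact le_trans (min_le_left _ _) (min_le_right _ _)
    have h2 : F (M:ℝ) x ∈ Metric.thickening (lam/2) G := hTx (M:ℝ) hMTx
    obtain ⟨g, hg, hd⟩ := Metric.mem_thickening_iff.1 h2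
    refine Metric.mem_thickening_iff.2 ⟨g, hg, ?_⟩
    calc dist (γ (M:ℝ)) g ≤ dist (γ (M:ℝ)) (F (M:ℝ) x) + dist (F (M:ℝ) x) g :=
        dist_triangle _ _ _
      _ < lam/2 + lam/2 := add_lt_add h1 hd
      _ = lam := by ring
  -- membership side conditions for the W-amplifications
  have hQP : ∀ s : ℝ, γ s ∈ Metric.thickening lam G →
      (∀ j : ℕ, F (j:ℝ) (γ s) ∈ Wset F ε₀ G) ∧
      (∀ j : ℕ, ∀ z : X, dist z (F (j:ℝ) (γ s)) < ε₀/2 → z ∈ Wset F ε₀ G) := by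
    intro s hγs
    have hγs' : γ s ∈ Metric.thickening ε₀ G := Metric.thickening_mono hlamε₀ G hγs
    constructor
    · exact fun j => orbit_mem_W hF hε₀ hGc hinv hattK hAtt hγs' (Nat.cast_nonneg j)
    · intro j z hz
      have h1 : F (j:ℝ) (γ s) ∈ Metric.thickening (ε₀/2) G :=
        hexc (γ s) hγs (j:ℝ) (Nat.cast_nonneg j)
      obtain ⟨g, hg, hd⟩ := Metric.mem_thickening_iff.1 h1
      refine thick_subset_W hF hε₀ hGc hinv hattK hAtt
        (Metric.mem_thickening_iff.2 ⟨g, hg, ?_⟩)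
      calc dist z g ≤ dist z (F (j:ℝ) (γ s)) + dist (F (j:ℝ) (γ s)) g := dist_triangle _ _ _
        _ < ε₀/2 + ε₀/2 := add_lt_add hz hd
        _ = ε₀ := by ring
  -- one trap step of length m
  have htrapstep : ∀ s : ℝ, 0 ≤ s → s + (m:ℝ) ≤ R → γ s ∈ Metric.thickening lam G →
      γ (s + (m:ℝ)) ∈ Metric.thickening lam G := by
    intro s hs hsm hγs
    have hamp := hampT γ s (R - s) hs (fun j _ => (hQP s hγs).1 j) (fun j _ => (hQP s hγs).2 j)
      (fun τ hτ r hr hle => lt_of_lt_of_le (hclose s hs τ hτ r hr hle) hδT')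
      (m:ℝ) (Nat.cast_nonneg m) (le_refl _) (by linarith)
    have hattm : F (m:ℝ) (γ s) ∈ Metric.thickening (lam/2) G :=
      hT₁ (m:ℝ) hmT₁ ⟨γ s, Metric.thickening_mono hlamε₀ G hγs, rfl⟩
    obtain ⟨g, hg, hd⟩ := Metric.mem_thickening_iff.1 hattm
    refine Metric.mem_thickening_iff.2 ⟨g, hg, ?_⟩
    calc dist (γ (s + (m:ℝ))) g
        ≤ dist (γ (s + (m:ℝ))) (F (m:ℝ) (γ s)) + dist (F (m:ℝ) (γ s)) g := dist_triangle _ _ _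
      _ < θT + lam/2 := add_lt_add hamp hd
      _ = lam := by rw [hθTdef]; ring
  -- the trap grid
  have hgrid : ∀ k : ℕ, (M:ℝ) + (k:ℝ) * (m:ℝ) ≤ R →
      γ ((M:ℝ) + (k:ℝ) * (m:ℝ)) ∈ Metric.thickening lam G := by
    intro k
    induction k with
    | zero => intro _; simpa using hγM
    | succ k ih =>
      intro hk
      have hcast : ((k+1:ℕ):ℝ) * (m:ℝ) = (k:ℝ) * (m:ℝ) + (m:ℝ) := by push_cast; ring
      have hk' : (M:ℝ) + (k:ℝ) * (m:ℝ) ≤ R := by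
        rw [hcast] at hk
        have hmn : (0:ℝ) ≤ (m:ℝ) := Nat.cast_nonneg m
        linarith
      have hs0 : (0:ℝ) ≤ (M:ℝ) + (k:ℝ) * (m:ℝ) := by positivity
      have := htrapstep ((M:ℝ) + (k:ℝ) * (m:ℝ)) hs0 (by rw [hcast] at hk; linarith) (ih hk')
      rw [hcast]
      rw [show (M:ℝ) + ((k:ℝ) * (m:ℝ) + (m:ℝ)) = (M:ℝ) + (k:ℝ) * (m:ℝ) + (m:ℝ) from by ring]
      exact this
  have hhop : ∀ k : ℕ, (M:ℝ) + (k:ℝ) * (nh:ℝ) ≤ R →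
      γ ((M:ℝ) + (k:ℝ) * (nh:ℝ)) ∈ Metric.thickening lam G := by
    intro k hk
    have hcast : ((k * n₂:ℕ):ℝ) * (m:ℝ) = (k:ℝ) * (nh:ℝ) := by
      rw [hnhdef]; push_cast; ring
    have := hgrid (k * n₂) (by rw [hcast]; exact hk)
    rw [hcast] at this
    exact this
  -- hop amplification
  have hhopamp : ∀ k : ℕ, ∀ r : ℝ, 0 ≤ r → r ≤ 2*(nh:ℝ) → (M:ℝ) + (k:ℝ)*(nh:ℝ) + r ≤ R →
      dist (γ ((M:ℝ) + (k:ℝ)*(nh:ℝ) + r)) (F r (γ ((M:ℝ) + (k:ℝ)*(nh:ℝ)))) < θH := by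
    intro k r hr hr2 hrR
    have hs0 : (0:ℝ) ≤ (M:ℝ) + (k:ℝ)*(nh:ℝ) := by positivity
    have hγs := hhop k (by linarith)
    exact hampH γ _ (R - ((M:ℝ)+(k:ℝ)*(nh:ℝ))) hs0 (fun j _ => (hQP _ hγs).1 j)
      (fun j _ => (hQP _ hγs).2 j)
      (fun τ hτ r' hr' hle => lt_of_lt_of_le (hclose _ hs0 τ hτ r' hr' hle) hδH')
      r hr (by push_cast; linarith) (by linarith)
  -- assemble the Conley chain
  have hnhpos : (0:ℝ) < (nh:ℝ) := by exact_mod_cast hnh1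
  set K : ℕ := ⌊(R - (M:ℝ))/(nh:ℝ)⌋₊ - 1 with hKdef
  have hRM : 3*(nh:ℝ) + 1 ≤ R - (M:ℝ) := by linarith [hRL]
  have hRMnn : (0:ℝ) ≤ (R - (M:ℝ))/(nh:ℝ) := div_nonneg (by linarith) (le_of_lt hnhpos)
  have hfloor3 : 3 ≤ ⌊(R - (M:ℝ))/(nh:ℝ)⌋₊ := by
    rw [Nat.le_floor_iff hRMnn, le_div_iff₀ hnhpos]
    push_cast
    linarith
  have hK1 : 1 ≤ K := by omega
  have hKfl : K + 1 = ⌊(R - (M:ℝ))/(nh:ℝ)⌋₊ := by omega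
  have hupe : (M:ℝ) + (K:ℝ)*(nh:ℝ) + (nh:ℝ) ≤ R := by
    have h1 : ((K+1:ℕ):ℝ) ≤ (R - (M:ℝ))/(nh:ℝ) := by
      rw [hKfl]
      exact Nat.floor_le hRMnn
    rw [le_div_iff₀ hnhpos] at h1
    push_cast at h1
    nlinarith
  have hlow : R - ((M:ℝ) + (K:ℝ)*(nh:ℝ)) < 2*(nh:ℝ) := by
    have h1 : (R - (M:ℝ))/(nh:ℝ) < (⌊(R - (M:ℝ))/(nh:ℝ)⌋₊ : ℝ) + 1 := Nat.lt_floor_add_one _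
    rw [← hKfl] at h1
    rw [div_lt_iff₀ hnhpos] at h1
    push_cast at h1
    nlinarith
  have hθHε : θH ≤ ε := le_trans (min_le_left _ _) (min_le_left _ _)
  have hθEε : θE ≤ ε := le_trans (min_le_left _ _) (min_le_left _ _)
  have hnhnn : (0:ℝ) ≤ (nh:ℝ) := Nat.cast_nonneg nh
  set cfun : ℕ → X := fun i => if i = 0 then x else
      (if i ≤ K then γ ((M:ℝ) + (i:ℝ)*(nh:ℝ)) else y) with hcfun
  set tfun : ℕ → ℝ := fun i => if i = 0 then (M:ℝ) + (nh:ℝ) else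
      (if i < K then (nh:ℝ) else R - ((M:ℝ) + (K:ℝ)*(nh:ℝ))) with htfun
  have hcfun0 : cfun 0 = x := by rw [hcfun]; rfl
  have hcfun_mid : ∀ i : ℕ, i ≠ 0 → i ≤ K → cfun i = γ ((M:ℝ) + (i:ℝ)*(nh:ℝ)) := by
    intro i h1 h2
    rw [hcfun]
    simp only [if_neg h1, if_pos h2]
  have hcfun_end : cfun (K+1) = y := by
    rw [hcfun]
    simp only [if_neg (by omega : ¬(K+1 = 0)), if_neg (by omega : ¬(K+1 ≤ K))]
  have htfun0 : tfun 0 = (M:ℝ) + (nh:ℝ) := by rw [htfun]; rfl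
  have htfun_mid : ∀ i : ℕ, i ≠ 0 → i < K → tfun i = (nh:ℝ) := by
    intro i h1 h2
    rw [htfun]
    simp only [if_neg h1, if_pos h2]
  have htfun_end : tfun K = R - ((M:ℝ) + (K:ℝ)*(nh:ℝ)) := by
    rw [htfun]
    simp only [if_neg (by omega : ¬(K = 0)), if_neg (lt_irrefl K)]
  refine ⟨K + 1, cfun, tfun, by omega, hcfun0, hcfun_end, ?_⟩
  intro i hi
  by_cases h0 : i = 0
  · subst h0
    rw [htfun0, hcfun0, hcfun_mid 1 (by omega) (by omega)]
    constructor
    · have hMnn : (0:ℝ) ≤ (M:ℝ) := Nat.cast_nonneg M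
      linarith
    · have hBeq : (B:ℝ) = (M:ℝ) + (nh:ℝ) := by rw [hBdef]; push_cast; ring
      have h := hentry (B:ℝ) (Nat.cast_nonneg B) (le_refl _)
      rw [hBeq, dist_comm] at h
      have hone : ((1:ℕ):ℝ)*(nh:ℝ) = (nh:ℝ) := by push_cast; ring
      rw [hone]
      exact lt_of_lt_of_le h hθEε
  · by_cases hiK : i < K
    · rw [htfun_mid i h0 hiK, hcfun_mid i h0 (by omega),
        hcfun_mid (i+1) (by omega) (by omega)]
      refine ⟨hnhT, ?_⟩
      have hiK' : (i:ℝ) + 1 ≤ (K:ℝ) := by exact_mod_cast hiK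
      have hmul : ((i:ℝ)+1)*(nh:ℝ) ≤ (K:ℝ)*(nh:ℝ) :=
        mul_le_mul_of_nonneg_right hiK' hnhnn
      have hexp : ((i:ℝ)+1)*(nh:ℝ) = (i:ℝ)*(nh:ℝ) + (nh:ℝ) := by ring
      have hbound : (M:ℝ) + (i:ℝ)*(nh:ℝ) + (nh:ℝ) ≤ R := by linarith
      have h := hhopamp i (nh:ℝ) hnhnn (by linarith) hbound
      have hcast : (M:ℝ) + ((i+1:ℕ):ℝ)*(nh:ℝ) = (M:ℝ) + (i:ℝ)*(nh:ℝ) + (nh:ℝ) := by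
        push_cast; ring
      rw [hcast, dist_comm]
      exact lt_of_lt_of_le h hθHε
    · have hieq : i = K := by omega
      have hieq' : (i:ℝ) = (K:ℝ) := by exact_mod_cast hieq
      rw [hieq, htfun_end, hcfun_mid K (by omega) (le_refl K), hcfun_end]
      constructor
      · linarith
      · have hr0 : 0 ≤ R - ((M:ℝ) + (K:ℝ)*(nh:ℝ)) := by linarith
        have hr2 : R - ((M:ℝ) + (K:ℝ)*(nh:ℝ)) ≤ 2*(nh:ℝ) := le_of_lt hlow
        have hbound : (M:ℝ) + (K:ℝ)*(nh:ℝ) + (R - ((M:ℝ) + (K:ℝ)*(nh:ℝ))) ≤ R := by linarith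
        have h := hhopamp K (R - ((M:ℝ) + (K:ℝ)*(nh:ℝ))) hr0 hr2 hbound
        have heq : (M:ℝ) + (K:ℝ)*(nh:ℝ) + (R - ((M:ℝ) + (K:ℝ)*(nh:ℝ))) = R := by ring
        rw [heq, hγR, dist_comm] at h
        exact lt_of_lt_of_le h hθHε

end Conv2

end Attractor

end RCRS

/-- for a semiflow with strong compact dynamics, `R_C = R_S`. -/
theorem RC_eq_RS (F : ℝ → X → X) (hF : IsSemiflow F) (G : Set X)
    (hG : IsStrongGlobalAttractor F G) : RC F = RS F := by
  obtain ⟨⟨hGc, hinv, hattK, _⟩, ε₀, hε₀, hAtt, hUC⟩ := hG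
  ext x
  simp only [RC, RS, Set.mem_setOf_eq]
  constructor
  · rintro (hfix | ⟨y, hxy, hyx⟩)
    · exact Or.inl hfix
    · exact Or.inr ⟨y, RCRS.conleyLe_shadowLe hF hε₀ hGc hinv hattK hAtt hUC x y hxy,
        RCRS.conleyLe_shadowLe hF hε₀ hGc hinv hattK hAtt hUC y x hyx⟩
  · rintro (hfix | ⟨y, hxy, hyx⟩)
    · exact Or.inl hfix
    · refine Or.inr ⟨y, ?_, ?_⟩
      · refine RCRS.shadowLongToConley hF hε₀ hGc hinv hattK hAtt hUC x y ?_
        intro δ hδ L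
        obtain ⟨T, hT, γ, hγ⟩ := RCRS.lengthen hF x y hxy hyx ⌈L⌉₊ δ hδ
        exact ⟨T, le_trans (Nat.le_ceil L) hT, γ, hγ⟩
      · refine RCRS.shadowLongToConley hF hε₀ hGc hinv hattK hAtt hUC y x ?_
        intro δ hδ L
        obtain ⟨T, hT, γ, hγ⟩ := RCRS.lengthen hF y x hyx hxy ⌈L⌉₊ δ hδ
        exact ⟨T, le_trans (Nat.le_ceil L) hT, γ, hγ⟩
end

section
/- Let F be a semiflow with strong compact dynamics on a metric space (X,d), and let R = R_C = R_S denote its chain-recurrent set. If x, y ∈ R, then x ≽_C y if and only if x ≽_S y. -/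
open Set Metric Filter

variable {X : Type*} [MetricSpace X]

namespace CR

structure Ctx (F : ℝ → X → X) (G : Set X) (ε₀ : ℝ) : Prop where
  flow : IsSemiflow F
  compact : IsCompact G
  inv : ∀ t ≥ (0:ℝ), F t '' G = G
  attrK : ∀ K : Set X, IsCompact K → Attracts F G K
  maximal : ∀ G' : Set X, IsCompact G' → (∀ t ≥ (0:ℝ), F t '' G' = G') → G' ⊆ G
  pos : 0 < ε₀
  attr : Attracts F G (Metric.thickening ε₀ G)
  uc : UniformContinuousOn (fun p : ℝ × X => F p.1 p.2) (Set.Icc (0:ℝ) 1 ×ˢ Wset F ε₀ G)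

variable {F : ℝ → X → X} {G : Set X} {ε₀ : ℝ}

lemma Ctx.mem_G (hc : Ctx F G ε₀) {z : X} (hz : z ∈ G) {t : ℝ} (ht : 0 ≤ t) : F t z ∈ G := by
  rw [← hc.inv t ht]; exact ⟨z, hz, rfl⟩

lemma Ctx.thick_sub_W (hc : Ctx F G ε₀) : Metric.thickening ε₀ G ⊆ Wset F ε₀ G := by
  intro z hz
  exact Set.mem_biUnion (le_refl (0:ℝ)) ⟨z, hz, hc.flow.map_zero z⟩

lemma Ctx.F_mem_W (hc : Ctx F G ε₀) {z : X} (hz : z ∈ Metric.thickening ε₀ G) {t : ℝ}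
    (ht : 0 ≤ t) : F t z ∈ Wset F ε₀ G :=
  Set.mem_biUnion ht ⟨z, hz, rfl⟩

lemma Ctx.G_sub_thick (hc : Ctx F G ε₀) : G ⊆ Metric.thickening ε₀ G :=
  self_subset_thickening hc.pos G

lemma Ctx.G_sub_W (hc : Ctx F G ε₀) : G ⊆ Wset F ε₀ G :=
  hc.G_sub_thick.trans hc.thick_sub_W

lemma Ctx.nr_thick (hc : Ctx F G ε₀) {z : X} {r : ℝ} (hr : r ≤ ε₀)
    (h : ∃ g ∈ G, dist z g < r) : z ∈ Metric.thickening ε₀ G := by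
  obtain ⟨g, hg, hd⟩ := h
  exact Metric.mem_thickening_iff.2 ⟨g, hg, hd.trans_le hr⟩

lemma Ctx.nr_W (hc : Ctx F G ε₀) {z : X} {r : ℝ} (hr : r ≤ ε₀)
    (h : ∃ g ∈ G, dist z g < r) : z ∈ Wset F ε₀ G :=
  hc.thick_sub_W (hc.nr_thick hr h)

lemma Ctx.W_fwd (hc : Ctx F G ε₀) {z : X} (hz : z ∈ Wset F ε₀ G) {τ : ℝ} (hτ : 0 ≤ τ) :
    F τ z ∈ Wset F ε₀ G := by
  obtain ⟨_, ⟨t, rfl⟩, hz⟩ := hz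
  obtain ⟨_, ⟨ht, rfl⟩, p, hp, rfl⟩ := hz
  have : F τ (F t p) = F (τ + t) p := (hc.flow.map_add τ t hτ ht p).symm
  rw [this]
  exact Set.mem_biUnion (add_nonneg hτ ht) ⟨p, hp, rfl⟩

/-- uniform-continuity modulus as a function. -/
lemma Ctx.ucFun (hc : Ctx F G ε₀) : ∃ f : ℝ → ℝ, ∀ η : ℝ, 0 < η →
    (0 < f η ∧ f η ≤ η ∧ ∀ τ ∈ Set.Icc (0:ℝ) 1, ∀ p ∈ Wset F ε₀ G, ∀ q ∈ Wset F ε₀ G,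
      dist p q < f η → dist (F τ p) (F τ q) < η) := by
  have h : ∀ η : ℝ, ∃ d : ℝ, 0 < η →
      (0 < d ∧ d ≤ η ∧ ∀ τ ∈ Set.Icc (0:ℝ) 1, ∀ p ∈ Wset F ε₀ G, ∀ q ∈ Wset F ε₀ G,
        dist p q < d → dist (F τ p) (F τ q) < η) := by
    intro η
    by_cases hη : 0 < η
    · obtain ⟨δ, hδpos, hδ⟩ := Metric.uniformContinuousOn_iff.1 hc.uc η hη
      refine ⟨min δ η, fun _ => ⟨lt_min hδpos hη, min_le_right _ _, ?_⟩⟩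
      intro τ hτ p hp q hq hd
      have := hδ (τ, p) (Set.mem_prod.2 ⟨hτ, hp⟩) (τ, q) (Set.mem_prod.2 ⟨hτ, hq⟩) ?_
      · exact this
      · rw [Prod.dist_eq]
        simp only [dist_self]
        rw [max_eq_right dist_nonneg]
        exact hd.trans_le (min_le_left _ _)
    · exact ⟨1, fun h => absurd h hη⟩
  choose f hf using h
  exact ⟨f, hf⟩


/-- Uniform continuity of `F` on `[0,m] × W`, obtained by iterating the unit modulus. -/
lemma Ctx.orb (hc : Ctx F G ε₀) (m : ℕ) {η : ℝ} (hη : 0 < η) :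
    ∃ δ, 0 < δ ∧ δ ≤ η ∧ ∀ p ∈ Wset F ε₀ G, ∀ q ∈ Wset F ε₀ G, dist p q < δ →
      ∀ u ∈ Set.Icc (0:ℝ) (m:ℝ), dist (F u p) (F u q) < η := by
  obtain ⟨f, hf⟩ := hc.ucFun
  -- B j : threshold guaranteeing error < f η after j more unit steps
  set B : ℕ → ℝ := fun j => Nat.rec (f η) (fun _ a => f a) j with hB
  have hfη := hf η hη
  have hBpos : ∀ j, 0 < B j := by
    intro j; induction j with
    | zero => exact hfη.1
    | succ j ih => exact (hf (B j) ih).1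
  have hBsucc : ∀ j, B (j+1) = f (B j) := fun j => rfl
  have hBle : ∀ j, B j ≤ f η := by
    intro j; induction j with
    | zero => exact le_refl _
    | succ j ih => exact le_trans (le_trans (hf (B j) (hBpos j)).2.1 ih) (le_refl _)
  refine ⟨B m, hBpos m, le_trans (hBle m) hfη.2.1, ?_⟩
  intro p hp q hq hd u hu
  -- integer estimates
  have key : ∀ k : ℕ, k ≤ m → dist (F (k:ℝ) p) (F (k:ℝ) q) < B (m - k) := by
    intro k
    induction k with
    | zero =>
      intro _
      simpa [hc.flow.map_zero] using hd
    | succ k ih =>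
      intro hkm
      have hk : k ≤ m := le_trans (Nat.le_succ k) hkm
      have hprev := ih hk
      have hmk : m - k = (m - (k+1)) + 1 := by omega
      rw [hmk, hBsucc] at hprev
      have h1 : F ((k:ℝ)+1) p = F 1 (F (k:ℝ) p) := by
        rw [show ((k:ℝ)+1) = 1 + (k:ℝ) by ring]
        exact hc.flow.map_add 1 k zero_le_one (Nat.cast_nonneg k) p
      have h1' : F ((k:ℝ)+1) q = F 1 (F (k:ℝ) q) := by
        rw [show ((k:ℝ)+1) = 1 + (k:ℝ) by ring]
        exact hc.flow.map_add 1 k zero_le_one (Nat.cast_nonneg k) q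
      have := (hf (B (m - (k+1))) (hBpos _)).2.2 1 ⟨zero_le_one, le_refl 1⟩
        (F (k:ℝ) p) (hc.W_fwd hp (Nat.cast_nonneg k))
        (F (k:ℝ) q) (hc.W_fwd hq (Nat.cast_nonneg k)) hprev
      rw [Nat.cast_succ, h1, h1']
      exact this
  -- real time
  obtain ⟨hu0, hum⟩ := hu
  set k := ⌊u⌋₊ with hk
  have hku : (k:ℝ) ≤ u := Nat.floor_le hu0
  have hkm : k ≤ m := by
    have := Nat.floor_le_floor hum
    rwa [Nat.floor_natCast] at this
  have hτ0 : 0 ≤ u - k := by linarith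
  have hτ1 : u - k ≤ 1 := by
    have := Nat.lt_floor_add_one u
    rw [← hk] at this; linarith
  have hsplit : ∀ z : X, F u z = F (u - k) (F (k:ℝ) z) := by
    intro z
    have h := hc.flow.map_add (u - k) k hτ0 (Nat.cast_nonneg k) z
    rwa [show (u - (k:ℝ)) + k = u by ring] at h
  rw [hsplit p, hsplit q]
  have hint : dist (F (k:ℝ) p) (F (k:ℝ) q) < f η := lt_of_lt_of_le (key k hkm) (hBle _)
  exact hfη.2.2 (u - k) ⟨hτ0, hτ1⟩ _ (hc.W_fwd hp (Nat.cast_nonneg k))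
    _ (hc.W_fwd hq (Nat.cast_nonneg k)) hint

/-- Uniform Lyapunov stability of `G`. -/
lemma Ctx.stab (hc : Ctx F G ε₀) {η : ℝ} (hη : 0 < η) (hηε : η ≤ ε₀) :
    ∃ δ, 0 < δ ∧ δ ≤ η ∧ ∀ z, (∃ g ∈ G, dist z g < δ) → ∀ t, 0 ≤ t →
      ∃ g ∈ G, dist (F t z) g < η := by
  obtain ⟨T₂, hT₂pos, hT₂⟩ := hc.attr η hη
  set M : ℕ := ⌈T₂⌉₊ + 1 with hM
  obtain ⟨δ₀, hδ₀pos, hδ₀le, horb⟩ := hc.orb M hη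
  refine ⟨min δ₀ ε₀, lt_min hδ₀pos hc.pos, le_trans (min_le_left _ _) hδ₀le, ?_⟩
  intro z hz t ht
  obtain ⟨g, hg, hd⟩ := hz
  have hzthick : z ∈ Metric.thickening ε₀ G :=
    hc.nr_thick (le_refl _) ⟨g, hg, hd.trans_le (min_le_right _ _)⟩
  by_cases hcase : t ≤ (M:ℝ)
  · have := horb z (hc.thick_sub_W hzthick) g (hc.G_sub_W hg)
      (hd.trans_le (min_le_left _ _)) t ⟨ht, hcase⟩
    exact ⟨F t g, hc.mem_G hg ht, this⟩
  · push_neg at hcase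
    have htT₂ : T₂ ≤ t := by
      have h1 : T₂ ≤ (⌈T₂⌉₊ : ℝ) := Nat.le_ceil T₂
      have h2 : ((⌈T₂⌉₊ : ℝ)) ≤ (M:ℝ) := by rw [hM]; push_cast; linarith
      linarith
    have : F t z ∈ Metric.thickening η G := hT₂ t htT₂ ⟨z, hzthick, rfl⟩
    obtain ⟨g', hg', hd'⟩ := Metric.mem_thickening_iff.1 this
    exact ⟨g', hg', hd'⟩


/-- A fine enough shadow chain follows the true orbit of any of its points, up to a
given time horizon, as long as that orbit stays near `G`. -/
lemma Ctx.chainprop (hc : Ctx F G ε₀) (m : ℕ) {η : ℝ} (hη : 0 < η) (hηε : η ≤ ε₀) :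
    ∃ β, 0 < β ∧ β ≤ η ∧ ∀ {Tγ : ℝ} {γ : ℝ → X} {s : ℝ}, EpsCloseTo F β Tγ γ → 0 ≤ s →
      (∀ t ∈ Set.Icc (0:ℝ) (m:ℝ), ∃ g ∈ G, dist (F t (γ s)) g < ε₀/2) →
      ∀ u ∈ Set.Icc (0:ℝ) (m:ℝ), s + u ≤ Tγ → dist (γ (s+u)) (F u (γ s)) < η := by
  obtain ⟨f, hf⟩ := hc.ucFun
  have hη2 : 0 < η/2 := by linarith
  set η' : ℝ := min (f (η/2)) (η/2) with hη'
  have hη'pos : 0 < η' := lt_min (hf _ hη2).1 hη2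
  set A : ℕ → ℝ := fun j => Nat.rec η' (fun _ a => f (a/2)) j with hA
  have hApos : ∀ j, 0 < A j := by
    intro j; induction j with
    | zero => exact hη'pos
    | succ j ih => exact (hf (A j / 2) (by linarith)).1
  have hAsucc : ∀ j, A (j+1) = f (A j / 2) := fun j => rfl
  have hAdec : ∀ j, A (j+1) ≤ A j := by
    intro j
    have h1 := (hf (A j / 2) (by have := hApos j; linarith)).2.1
    have h2 := hApos j
    rw [hAsucc]; linarith
  have hAle : ∀ i j, i ≤ j → A j ≤ A i := by
    intro i j hij
    induction j with
    | zero => simp_all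
    | succ j ih =>
      rcases Nat.lt_or_ge i (j+1) with h | h
      · exact le_trans (hAdec j) (ih (by omega))
      · have : i = j+1 := by omega
        rw [this]
  have hAη' : ∀ j, A j ≤ η' := fun j => hAle 0 j (Nat.zero_le j)
  have hAε : ∀ j, A j ≤ ε₀/2 := by
    intro j
    refine le_trans (hAη' j) (le_trans (min_le_right _ _) (by linarith))
  refine ⟨A m / 2, by have := hApos m; linarith,
    le_trans (by have := hApos m; linarith : A m / 2 ≤ A m)
      (le_trans (hAη' m) (le_trans (min_le_right _ _) (by linarith))), ?_⟩
  intro Tγ γ s hch hs hnear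
  set β := A m / 2 with hβ
  have hβA : ∀ j, j ≤ m → β ≤ A j / 2 := by
    intro j hj
    have := hAle j m hj
    rw [hβ]; linarith
  -- memberships
  have hFkW : ∀ k : ℕ, (k:ℝ) ≤ (m:ℝ) → F (k:ℝ) (γ s) ∈ Wset F ε₀ G := by
    intro k hk
    obtain ⟨g, hg, hd⟩ := hnear (k:ℝ) ⟨Nat.cast_nonneg k, hk⟩
    exact hc.nr_W (le_refl _) ⟨g, hg, by linarith [hc.pos]⟩
  -- integer estimates
  have key : ∀ k : ℕ, (k:ℝ) ≤ (m:ℝ) → s + k ≤ Tγ →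
      dist (γ (s + k)) (F (k:ℝ) (γ s)) < A (m - k) := by
    intro k
    induction k with
    | zero =>
      intro _ _
      simp only [Nat.cast_zero, add_zero, hc.flow.map_zero, dist_self]
      exact hApos _
    | succ k ih =>
      intro hkm hsk
      have hkm' : (k:ℝ) ≤ (m:ℝ) := by push_cast at hkm ⊢; linarith
      have hkmN : k + 1 ≤ m := by exact_mod_cast hkm
      have hsk' : s + k ≤ Tγ := by push_cast at hsk; linarith
      have hprev := ih hkm' hsk'
      -- γ(s+k) ∈ W
      have hγskW : γ (s + k) ∈ Wset F ε₀ G := by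
        obtain ⟨g, hg, hd⟩ := hnear (k:ℝ) ⟨Nat.cast_nonneg k, hkm'⟩
        have : dist (γ (s+k)) g < ε₀ := by
          have h1 : A (m - k) ≤ ε₀/2 := hAε _
          calc dist (γ (s+k)) g ≤ dist (γ (s+k)) (F (k:ℝ) (γ s)) + dist (F (k:ℝ) (γ s)) g :=
                dist_triangle _ _ _
          _ < ε₀ := by linarith
        exact hc.nr_W (le_refl _) ⟨g, hg, this⟩
      -- one chain step
      have hd1 : dist (γ (s + k + 1)) (F 1 (γ (s + k))) < β := by
        have hsk2 : s + (k:ℝ) + 1 ≤ Tγ := by push_cast at hsk; linarith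
        have := hch 1 ⟨zero_le_one, le_refl 1⟩ (s + k)
          ⟨add_nonneg hs (Nat.cast_nonneg k), by linarith⟩
        convert this using 3
      -- uc step
      have hmk : m - k = (m - (k+1)) + 1 := by omega
      have hprev' : dist (γ (s+k)) (F (k:ℝ) (γ s)) < f (A (m - (k+1)) / 2) := by
        rw [hmk, hAsucc] at hprev; exact hprev
      have hd2 : dist (F 1 (γ (s+k))) (F 1 (F (k:ℝ) (γ s))) < A (m - (k+1)) / 2 :=
        (hf _ (by have := hApos (m - (k+1)); linarith)).2.2 1 ⟨zero_le_one, le_refl 1⟩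
          _ hγskW _ (hFkW k hkm') hprev'
      have hsplit : F ((k:ℝ)+1) (γ s) = F 1 (F (k:ℝ) (γ s)) := by
        rw [show ((k:ℝ)+1) = 1 + (k:ℝ) by ring]
        exact hc.flow.map_add 1 k zero_le_one (Nat.cast_nonneg k) (γ s)
      have hβ' : β ≤ A (m - (k+1)) / 2 := hβA _ (by omega)
      calc dist (γ (s + (k+1:ℕ))) (F ((k+1:ℕ):ℝ) (γ s))
          ≤ dist (γ (s + (k+1:ℕ))) (F 1 (γ (s+k))) + dist (F 1 (γ (s+k))) (F ((k+1:ℕ):ℝ) (γ s)) :=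
            dist_triangle _ _ _
        _ < β + A (m - (k+1)) / 2 := by
            refine add_lt_add_of_lt_of_lt ?_ ?_
            · rw [show s + ((k+1:ℕ):ℝ) = s + k + 1 by push_cast; ring]; exact hd1
            · rw [show ((k+1:ℕ):ℝ) = (k:ℝ)+1 by push_cast; ring, hsplit]; exact hd2
        _ ≤ A (m - (k+1)) := by linarith
  -- real time estimate
  intro u hu hsu
  obtain ⟨hu0, hum⟩ := hu
  set k := ⌊u⌋₊ with hk
  have hku : (k:ℝ) ≤ u := Nat.floor_le hu0
  have hkm : (k:ℝ) ≤ (m:ℝ) := le_trans hku hum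
  have hτ0 : 0 ≤ u - k := by linarith
  have hτ1 : u - k ≤ 1 := by
    have := Nat.lt_floor_add_one u
    rw [← hk] at this; linarith
  have hint : dist (γ (s + k)) (F (k:ℝ) (γ s)) < f (η/2) := by
    refine lt_of_lt_of_le (key k hkm (by linarith)) ?_
    exact le_trans (hAη' _) (min_le_left _ _)
  have hγskW : γ (s + k) ∈ Wset F ε₀ G := by
    obtain ⟨g, hg, hd⟩ := hnear (k:ℝ) ⟨Nat.cast_nonneg k, hkm⟩
    have h1 : dist (γ (s+k)) (F (k:ℝ) (γ s)) < A (m - k) := key k hkm (by linarith)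
    have : dist (γ (s+k)) g < ε₀ := by
      have := hAε (m - k)
      calc dist (γ (s+k)) g ≤ dist (γ (s+k)) (F (k:ℝ) (γ s)) + dist (F (k:ℝ) (γ s)) g :=
            dist_triangle _ _ _
      _ < ε₀ := by linarith
    exact hc.nr_W (le_refl _) ⟨g, hg, this⟩
  have hd1 : dist (γ (s + u)) (F (u - k) (γ (s + k))) < β := by
    have := hch (u - k) ⟨hτ0, hτ1⟩ (s + k) ⟨add_nonneg hs (Nat.cast_nonneg k), by linarith⟩
    convert this using 3
    ring
  have hd2 : dist (F (u - k) (γ (s + k))) (F (u - k) (F (k:ℝ) (γ s))) < η/2 :=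
    (hf _ hη2).2.2 (u - k) ⟨hτ0, hτ1⟩ _ hγskW _ (hFkW k hkm) hint
  have hsplit : F u (γ s) = F (u - k) (F (k:ℝ) (γ s)) := by
    have h := hc.flow.map_add (u - k) k hτ0 (Nat.cast_nonneg k) (γ s)
    rwa [show (u - (k:ℝ)) + k = u by ring] at h
  have hβη : β ≤ η/4 := by
    have h1 := hAη' m
    have h2 : η' ≤ η/2 := min_le_right _ _
    rw [hβ]; linarith
  calc dist (γ (s+u)) (F u (γ s))
      ≤ dist (γ (s+u)) (F (u - k) (γ (s + k))) + dist (F (u - k) (γ (s + k))) (F u (γ s)) :=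
        dist_triangle _ _ _
    _ < β + η/2 := by
        refine add_lt_add_of_lt_of_lt hd1 ?_
        rw [hsplit]; exact hd2
    _ < η := by linarith


/-- Fine shadow chains starting on `G` stay near `G` forever; moreover at all
multiples of a fixed period `Mn` they are very tight. -/
lemma Ctx.invariant (hc : Ctx F G ε₀) :
    ∃ (δd : ℝ) (Mn : ℕ) (βc : ℝ), 0 < δd ∧ δd ≤ ε₀/2 ∧ 1 ≤ Mn ∧ 0 < βc ∧
      (∀ z : X, (∃ g ∈ G, dist z g < δd) → ∀ t, 0 ≤ t → ∃ g ∈ G, dist (F t z) g < ε₀/2) ∧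
      ∀ {Tγ : ℝ} {γ : ℝ → X}, EpsCloseTo F βc Tγ γ → γ 0 ∈ G →
        (∀ j : ℕ, ((j:ℝ) * Mn) ≤ Tγ → ∃ g ∈ G, dist (γ ((j:ℝ) * Mn)) g < δd) ∧
        (∀ t, 0 ≤ t → t ≤ Tγ → ∃ g ∈ G, dist (γ t) g < ε₀) := by
  have hε2 : 0 < ε₀/2 := by linarith [hc.pos]
  obtain ⟨δd, hδdpos, hδdle, hstab⟩ := hc.stab hε2 (by linarith [hc.pos])
  obtain ⟨T₃, hT₃pos, hT₃⟩ := hc.attr (δd/2) (by linarith)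
  obtain ⟨Mn, hMn⟩ : ∃ n : ℕ, n = ⌈T₃⌉₊ + 1 := ⟨_, rfl⟩
  have hMn1 : 1 ≤ Mn := by omega
  have hT₃Mn : T₃ ≤ (Mn:ℝ) := by
    have h1 := Nat.le_ceil T₃
    rw [hMn]; push_cast; linarith
  set η₃ : ℝ := min (δd/2) (ε₀/8) with hη₃
  have hη₃pos : 0 < η₃ := lt_min (by linarith) (by linarith [hc.pos])
  obtain ⟨βc, hβcpos, hβcle, hcp⟩ := hc.chainprop (Mn + 1) hη₃pos
    (le_trans (le_trans (min_le_right _ _) (by linarith [hc.pos])) (le_refl ε₀))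
  refine ⟨δd, Mn, βc, hδdpos, hδdle, hMn1, hβcpos, hstab, ?_⟩
  intro Tγ γ hch h0
  have hsamples : ∀ j : ℕ, ((j:ℝ) * Mn) ≤ Tγ → ∃ g ∈ G, dist (γ ((j:ℝ) * Mn)) g < δd := by
    intro j
    induction j with
    | zero =>
      intro _
      exact ⟨γ 0, h0, by simp [dist_self, hδdpos]⟩
    | succ j ih =>
      intro hj
      have hjMn : ((j:ℝ) * Mn) ≤ Tγ := by
        have hexp : (((j+1:ℕ)):ℝ) * Mn = (j:ℝ)*Mn + Mn := by push_cast; ring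
        have h0 : (0:ℝ) ≤ (Mn:ℝ) := Nat.cast_nonneg Mn
        linarith [hexp ▸ hj]
      obtain ⟨g, hg, hd⟩ := ih hjMn
      set s : ℝ := (j:ℝ) * Mn with hs
      have hs0 : 0 ≤ s := by positivity
      have hnear : ∀ t ∈ Set.Icc (0:ℝ) ((Mn+1:ℕ):ℝ), ∃ g' ∈ G, dist (F t (γ s)) g' < ε₀/2 :=
        fun t ht => hstab (γ s) ⟨g, hg, hd⟩ t ht.1
      have hMnle : ((Mn:ℝ)) ∈ Set.Icc (0:ℝ) ((Mn+1:ℕ):ℝ) := by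
        constructor
        · exact Nat.cast_nonneg Mn
        · push_cast; linarith
      have hsMn : s + (Mn:ℝ) ≤ Tγ := by
        have hexp : (((j+1:ℕ)):ℝ) * Mn = (j:ℝ)*Mn + Mn := by push_cast; ring
        rw [hs]; linarith [hexp ▸ hj]
      have hest := hcp hch hs0 hnear (Mn:ℝ) hMnle hsMn
      -- attraction
      have hγsthick : γ s ∈ Metric.thickening ε₀ G :=
        hc.nr_thick (le_refl _) ⟨g, hg, by linarith [hc.pos]⟩
      have hattr : F (Mn:ℝ) (γ s) ∈ Metric.thickening (δd/2) G :=
        hT₃ (Mn:ℝ) hT₃Mn ⟨γ s, hγsthick, rfl⟩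
      obtain ⟨g', hg', hd'⟩ := Metric.mem_thickening_iff.1 hattr
      refine ⟨g', hg', ?_⟩
      have hre : (((j+1:ℕ)):ℝ) * Mn = s + (Mn:ℝ) := by rw [hs]; push_cast; ring
      rw [hre]
      calc dist (γ (s + Mn)) g' ≤ dist (γ (s + Mn)) (F (Mn:ℝ) (γ s)) + dist (F (Mn:ℝ) (γ s)) g' :=
            dist_triangle _ _ _
        _ < η₃ + δd/2 := add_lt_add_of_lt_of_lt hest hd'
        _ ≤ δd := by have := min_le_left (δd/2) (ε₀/8); rw [hη₃]; linarith [min_le_left (δd/2) (ε₀/8)]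
  refine ⟨hsamples, ?_⟩
  intro t ht0 htT
  have hMnR : (0:ℝ) < (Mn:ℝ) := by exact_mod_cast hMn1
  set j : ℕ := ⌊t / (Mn:ℝ)⌋₊ with hj
  set s : ℝ := (j:ℝ) * Mn with hs
  have hst : s ≤ t := by
    rw [hs]
    have := Nat.floor_le (by positivity : 0 ≤ t / (Mn:ℝ))
    calc ((j:ℝ)) * Mn ≤ (t / Mn) * Mn := by
          apply mul_le_mul_of_nonneg_right _ (le_of_lt hMnR); exact this
    _ = t := by field_simp
  have hts : t - s < (Mn:ℝ) := by
    have := Nat.lt_floor_add_one (t / (Mn:ℝ))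
    have h2 : t / Mn < (j:ℝ) + 1 := by rw [hj] at *; exact_mod_cast this
    have h3 : t < ((j:ℝ)+1) * Mn := by
      calc t = (t / Mn) * Mn := by field_simp
      _ < ((j:ℝ)+1) * Mn := by apply mul_lt_mul_of_pos_right h2 hMnR
    rw [hs]; nlinarith
  obtain ⟨g, hg, hd⟩ := hsamples j (le_trans hst htT)
  have hs0 : 0 ≤ s := by positivity
  have hnear : ∀ t' ∈ Set.Icc (0:ℝ) ((Mn+1:ℕ):ℝ), ∃ g' ∈ G, dist (F t' (γ s)) g' < ε₀/2 :=
    fun t' ht' => hstab (γ s) ⟨g, hg, hd⟩ t' ht'.1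
  have hu : t - s ∈ Set.Icc (0:ℝ) ((Mn+1:ℕ):ℝ) := by
    constructor
    · linarith
    · push_cast; linarith
  have hest := hcp hch hs0 hnear (t - s) hu (by linarith)
  obtain ⟨g', hg', hd'⟩ := hstab (γ s) ⟨g, hg, hd⟩ (t - s) (by linarith)
  refine ⟨g', hg', ?_⟩
  have hη₃ε : η₃ ≤ ε₀/8 := min_le_right _ _
  calc dist (γ t) g' = dist (γ (s + (t - s))) g' := by rw [show s + (t-s) = t by ring]
    _ ≤ dist (γ (s + (t - s))) (F (t - s) (γ s)) + dist (F (t - s) (γ s)) g' :=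
        dist_triangle _ _ _
    _ < η₃ + ε₀/2 := add_lt_add_of_lt_of_lt hest hd'
    _ < ε₀ := by linarith [hc.pos]


lemma epsCloseTo_mono {F : ℝ → X → X} {β β' T : ℝ} {γ : ℝ → X} (h : β ≤ β')
    (hch : EpsCloseTo F β T γ) : EpsCloseTo F β' T γ :=
  fun τ hτ t ht => lt_of_lt_of_le (hch τ hτ t ht) h

/-- Concatenation of shadow chains. -/
lemma Ctx.concat (hc : Ctx F G ε₀) {β₁ β₂ κ T₁ T₂ : ℝ} {γ₁ γ₂ : ℝ → X} (hκ : 0 ≤ κ)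
    (huc : ∀ τ ∈ Set.Icc (0:ℝ) 1, ∀ p ∈ Wset F ε₀ G, ∀ q ∈ Wset F ε₀ G,
      dist p q < β₁ → dist (F τ p) (F τ q) < κ)
    (h₁ : EpsCloseTo F β₁ T₁ γ₁) (h₂ : EpsCloseTo F β₂ T₂ γ₂)
    (hT₁ : 1 ≤ T₁) (hT₂ : 1 ≤ T₂) (hj : γ₁ T₁ = γ₂ 0)
    (hW : ∀ t, 0 ≤ t → t ≤ T₁ → γ₁ t ∈ Wset F ε₀ G) :
    EpsCloseTo F (max β₁ (β₂ + κ)) (T₁ + T₂)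
      (fun t => if t < T₁ then γ₁ t else γ₂ (t - T₁)) := by
  intro τ hτ t ht
  obtain ⟨hτ0, hτ1⟩ := hτ
  obtain ⟨ht0, htT⟩ := ht
  by_cases h1 : t + τ < T₁
  · -- both in first piece
    have ht1 : t < T₁ := by linarith
    simp only [if_pos h1, if_pos ht1]
    exact lt_of_lt_of_le (h₁ τ ⟨hτ0, hτ1⟩ t ⟨ht0, by linarith⟩) (le_max_left _ _)
  · push_neg at h1
    by_cases h2 : t < T₁
    · -- junction
      simp only [if_neg (not_lt.2 h1), if_pos h2]
      set σ := t + τ - T₁ with hσ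
      set τ' := T₁ - t with hτ'
      have hσ0 : 0 ≤ σ := by rw [hσ]; linarith
      have hσ1 : σ ≤ 1 := by rw [hσ]; linarith
      have hτ'0 : 0 ≤ τ' := by rw [hτ']; linarith
      have hτ'1 : τ' ≤ 1 := by rw [hτ']; linarith
      have hd2 : dist (γ₂ σ) (F σ (γ₂ 0)) < β₂ := by
        have := h₂ σ ⟨hσ0, hσ1⟩ 0 ⟨le_refl 0, by linarith⟩
        simpa using this
      have hd1 : dist (γ₁ T₁) (F τ' (γ₁ t)) < β₁ := by
        have := h₁ τ' ⟨hτ'0, hτ'1⟩ t ⟨ht0, by rw [hτ']; linarith⟩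
        rw [show t + τ' = T₁ by rw [hτ']; ring] at this
        exact this
      have hγ₁tW : γ₁ t ∈ Wset F ε₀ G := hW t ht0 (by linarith)
      have hγ₂0W : γ₂ 0 ∈ Wset F ε₀ G := hj ▸ hW T₁ (by linarith) (le_refl T₁)
      have hducc : dist (F σ (γ₂ 0)) (F σ (F τ' (γ₁ t))) < κ := by
        refine huc σ ⟨hσ0, hσ1⟩ _ hγ₂0W _ (hc.W_fwd hγ₁tW hτ'0) ?_
        rw [← hj]; exact hd1
      have hsplit : F τ (γ₁ t) = F σ (F τ' (γ₁ t)) := by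
        rw [show τ = σ + τ' by rw [hσ, hτ']; ring]
        exact hc.flow.map_add σ τ' hσ0 hτ'0 (γ₁ t)
      refine lt_of_lt_of_le ?_ (le_max_right _ _)
      calc dist (γ₂ (t + τ - T₁)) (F τ (γ₁ t))
          ≤ dist (γ₂ σ) (F σ (γ₂ 0)) + dist (F σ (γ₂ 0)) (F τ (γ₁ t)) := dist_triangle _ _ _
        _ < β₂ + κ := by
            refine add_lt_add_of_lt_of_lt hd2 ?_
            rw [hsplit]; exact hducc
    · -- both in second piece
      push_neg at h2
      have hnlt : ¬ (t + τ < T₁) := not_lt.2 h1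
      simp only [if_neg hnlt, if_neg (not_lt.2 h2)]
      have := h₂ τ ⟨hτ0, hτ1⟩ (t - T₁) ⟨by linarith, by linarith⟩
      rw [show t - T₁ + τ = t + τ - T₁ by ring] at this
      exact lt_of_lt_of_le this (le_trans (by linarith : β₂ ≤ β₂ + κ) (le_max_right _ _))


/-- Extension of a shadow chain by a fixed point. -/
lemma Ctx.extend_fixed (hc : Ctx F G ε₀) {β₁ κ T₁ E : ℝ} {γ₁ : ℝ → X} {y : X} (hκ : 0 ≤ κ)
    (huc : ∀ τ ∈ Set.Icc (0:ℝ) 1, ∀ p ∈ Wset F ε₀ G, ∀ q ∈ Wset F ε₀ G,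
      dist p q < β₁ → dist (F τ p) (F τ q) < κ)
    (h₁ : EpsCloseTo F β₁ T₁ γ₁) (hT₁ : 1 ≤ T₁) (hE : 0 ≤ E)
    (hj : γ₁ T₁ = y) (hyfix : ∀ t, 0 ≤ t → F t y = y) (hyW : y ∈ Wset F ε₀ G)
    (hW : ∀ t, 0 ≤ t → t ≤ T₁ → γ₁ t ∈ Wset F ε₀ G) :
    EpsCloseTo F (max β₁ κ) (T₁ + E) (fun t => if t < T₁ then γ₁ t else y) := by
  intro τ hτ t ht
  obtain ⟨hτ0, hτ1⟩ := hτ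
  obtain ⟨ht0, htT⟩ := ht
  by_cases h1 : t + τ < T₁
  · have ht1 : t < T₁ := by linarith
    simp only [if_pos h1, if_pos ht1]
    exact lt_of_lt_of_le (h₁ τ ⟨hτ0, hτ1⟩ t ⟨ht0, by linarith⟩) (le_max_left _ _)
  · push_neg at h1
    by_cases h2 : t < T₁
    · simp only [if_neg (not_lt.2 h1), if_pos h2]
      set σ := t + τ - T₁ with hσ
      set τ' := T₁ - t with hτ'
      have hσ0 : 0 ≤ σ := by rw [hσ]; linarith
      have hσ1 : σ ≤ 1 := by rw [hσ]; linarith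
      have hτ'0 : 0 ≤ τ' := by rw [hτ']; linarith
      have hτ'1 : τ' ≤ 1 := by rw [hτ']; linarith
      have hd1 : dist y (F τ' (γ₁ t)) < β₁ := by
        have := h₁ τ' ⟨hτ'0, hτ'1⟩ t ⟨ht0, by rw [hτ']; linarith⟩
        rw [show t + τ' = T₁ by rw [hτ']; ring, hj] at this
        exact this
      have hγ₁tW : γ₁ t ∈ Wset F ε₀ G := hW t ht0 (by linarith)
      have hducc : dist (F σ y) (F σ (F τ' (γ₁ t))) < κ :=
        huc σ ⟨hσ0, hσ1⟩ _ hyW _ (hc.W_fwd hγ₁tW hτ'0) hd1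
      have hsplit : F τ (γ₁ t) = F σ (F τ' (γ₁ t)) := by
        rw [show τ = σ + τ' by rw [hσ, hτ']; ring]
        exact hc.flow.map_add σ τ' hσ0 hτ'0 (γ₁ t)
      rw [show y = F σ y from (hyfix σ hσ0).symm, hsplit]
      exact lt_of_lt_of_le hducc (le_max_right _ _)
    · push_neg at h2
      simp only [if_neg (not_lt.2 h1), if_neg (not_lt.2 h2)]
      rw [hyfix τ hτ0, dist_self]
      have : 0 < β₁ := by
        by_contra hb
        push_neg at hb
        have := h₁ 0 ⟨le_refl 0, zero_le_one⟩ 0 ⟨le_refl 0, by linarith⟩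
        have h0 : dist (γ₁ (0+0)) (F 0 (γ₁ 0)) = 0 := by
          rw [hc.flow.map_zero]; simp
        linarith [dist_nonneg (x := γ₁ (0+0)) (y := F 0 (γ₁ 0))]
      exact lt_of_lt_of_le this (le_max_left _ _)


lemma Ctx.fixed_mem_G (hc : Ctx F G ε₀) {x : X} (hfix : ∀ t ≥ (0:ℝ), F t x = x) : x ∈ G := by
  have : ({x} : Set X) ⊆ G := by
    refine hc.maximal {x} isCompact_singleton ?_
    intro t ht
    rw [Set.image_singleton, hfix t ht]
  exact this rfl

lemma Ctx.RC_sub_G (hc : Ctx F G ε₀) {x : X} (hx : x ∈ RC F) : x ∈ G := by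
  rcases hx with hfix | ⟨z, _, hzx⟩
  · exact hc.fixed_mem_G hfix
  · -- x is the endpoint of arbitrarily fine chains ending at x
    have key : ∀ η, 0 < η → η ≤ ε₀/2 → ∃ g ∈ G, dist x g < 2*η := by
      intro η hη hηε
      obtain ⟨T₁, hT₁pos, hT₁⟩ := hc.attr η (by linarith [hc.pos])
      obtain ⟨Tz, hTzpos, hTz⟩ := hc.attrK {z} isCompact_singleton η hη
      set T : ℝ := max T₁ Tz with hT
      have hTpos : 0 < T := lt_of_lt_of_le hT₁pos (le_max_left _ _)
      obtain ⟨N, c, tt, hN, hc0, hcN, hstep⟩ := hzx η hη T hTpos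
      have claim : ∀ i, 1 ≤ i → i ≤ N → ∃ g ∈ G, dist (c i) g < 2*η := by
        intro i hi1
        induction i with
        | zero => omega
        | succ i ih =>
          intro hiN
          rcases Nat.eq_or_lt_of_le hi1 with h1 | h1
          · -- i + 1 = 1, i.e. i = 0
            have hi0 : i = 0 := by omega
            subst hi0
            have h0N : 0 < N := by omega
            obtain ⟨htt, hd⟩ := hstep 0 h0N
            have hFz : F (tt 0) z ∈ Metric.thickening η G := by
              refine hTz (tt 0) (le_trans (le_max_right _ _) htt) ⟨z, rfl, rfl⟩
            obtain ⟨g, hg, hdg⟩ := Metric.mem_thickening_iff.1 hFz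
            refine ⟨g, hg, ?_⟩
            rw [hc0] at hd
            calc dist (c 1) g ≤ dist (c 1) (F (tt 0) z) + dist (F (tt 0) z) g := dist_triangle _ _ _
              _ < η + η := add_lt_add_of_lt_of_lt (by rw [dist_comm]; exact hd) hdg
              _ = 2*η := by ring
          · -- i ≥ 1
            have hiN' : i ≤ N := by omega
            have hi1' : 1 ≤ i := by omega
            obtain ⟨g, hg, hdg⟩ := ih hi1' hiN'
            have hithick : c i ∈ Metric.thickening ε₀ G :=
              hc.nr_thick (le_refl _) ⟨g, hg, by linarith [hc.pos]⟩
            have hiltN : i < N := by omega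
            obtain ⟨htt, hd⟩ := hstep i hiltN
            have hFc : F (tt i) (c i) ∈ Metric.thickening η G :=
              hT₁ (tt i) (le_trans (le_max_left _ _) htt) ⟨c i, hithick, rfl⟩
            obtain ⟨g', hg', hdg'⟩ := Metric.mem_thickening_iff.1 hFc
            refine ⟨g', hg', ?_⟩
            calc dist (c (i+1)) g' ≤ dist (c (i+1)) (F (tt i) (c i)) + dist (F (tt i) (c i)) g' :=
                  dist_triangle _ _ _
              _ < η + η := add_lt_add_of_lt_of_lt (by rw [dist_comm]; exact hd) hdg'
              _ = 2*η := by ring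
      obtain ⟨g, hg, hd⟩ := claim N hN (le_refl N)
      rw [hcN] at hd
      exact ⟨g, hg, hd⟩
    have hclosure : x ∈ closure G := by
      rw [Metric.mem_closure_iff]
      intro ε hε
      set η : ℝ := min (ε/4) (ε₀/2) with hη
      have hηpos : 0 < η := lt_min (by linarith) (by linarith [hc.pos])
      obtain ⟨g, hg, hd⟩ := key η hηpos (min_le_right _ _)
      refine ⟨g, hg, lt_of_lt_of_le hd ?_⟩
      have := min_le_left (ε/4) (ε₀/2)
      rw [hη]; linarith
    rwa [hc.compact.isClosed.closure_eq] at hclosure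

end CR

namespace CR
variable {F : ℝ → X → X} {G : Set X} {ε₀ : ℝ}

/-- Arbitrarily long, arbitrarily fine shadow chains from `x` to `y`. -/
lemma Ctx.long_chains (hc : Ctx F G ε₀) {x y : X} (hxG : x ∈ G) (hyRS : y ∈ RS F)
    (hS : ShadowLe F x y) :
    ∀ (k : ℕ) (β : ℝ), 0 < β → ∃ (Tγ : ℝ) (γ : ℝ → X),
      EpsCloseTo F β Tγ γ ∧ γ 0 = x ∧ γ Tγ = y ∧ 1 ≤ Tγ ∧ (k:ℝ) ≤ Tγ := by
  obtain ⟨f, hf⟩ := hc.ucFun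
  obtain ⟨δd, Mn, βc, hδd, hδdle, hMn, hβc, hstab, hinv⟩ := hc.invariant
  have hWp : ∀ {β Tγ : ℝ} {γ : ℝ → X}, β ≤ βc → EpsCloseTo F β Tγ γ → γ 0 = x →
      ∀ t, 0 ≤ t → t ≤ Tγ → γ t ∈ Wset F ε₀ G := by
    intro β Tγ γ hβle hch h0 t ht0 htT
    exact hc.nr_W (le_refl _)
      ((hinv (epsCloseTo_mono hβle hch) (h0 ▸ hxG)).2 t ht0 htT)
  rcases hyRS with hyfix | ⟨w, hyw, hwy⟩
  · -- y is a fixed point: extend by the constant chain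
    intro k β hβ
    have hβ2 : 0 < β/2 := by linarith
    set β₁ : ℝ := min (min (f (β/2)) (β/2)) βc with hβ₁
    have hβ₁pos : 0 < β₁ := lt_min (lt_min (hf _ hβ2).1 hβ2) hβc
    obtain ⟨T₁, γ₁, hT₁1, _, h10, h1T, h1ch⟩ := hS β₁ hβ₁pos
    have hyG : y ∈ G := hc.fixed_mem_G hyfix
    have huc : ∀ τ ∈ Set.Icc (0:ℝ) 1, ∀ p ∈ Wset F ε₀ G, ∀ q ∈ Wset F ε₀ G,
        dist p q < β₁ → dist (F τ p) (F τ q) < β/2 := by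
      intro τ hτ p hp q hq hd
      exact (hf _ hβ2).2.2 τ hτ p hp q hq
        (lt_of_lt_of_le hd (le_trans (min_le_left _ _) (min_le_left _ _)))
    have hext := hc.extend_fixed (le_of_lt hβ2) huc h1ch hT₁1 (Nat.cast_nonneg k)
      h1T (fun t ht => hyfix t ht) (hc.G_sub_W hyG)
      (hWp (min_le_right _ _) h1ch h10)
    refine ⟨T₁ + k, _, epsCloseTo_mono ?_ hext, ?_, ?_, by linarith [Nat.cast_nonneg (α := ℝ) k], by linarith⟩
    · refine max_le (le_trans (min_le_left _ _) (le_trans (min_le_right _ _) (by linarith))) (by linarith)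
    · simp only [if_pos (by linarith : (0:ℝ) < T₁)]; exact h10
    · have : ¬ ((T₁ + (k:ℝ)) < T₁) := by push_neg; linarith [Nat.cast_nonneg (α := ℝ) k]
      simp only [if_neg this]
  · -- y is shadow-recurrent via w: glue loops
    intro k
    induction k with
    | zero =>
      intro β hβ
      obtain ⟨T₁, γ₁, hT₁1, _, h10, h1T, h1ch⟩ := hS (min β βc) (lt_min hβ hβc)
      exact ⟨T₁, γ₁, epsCloseTo_mono (min_le_left _ _) h1ch, h10, h1T, hT₁1,
        by simpa using le_trans zero_le_one hT₁1⟩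
    | succ k ih =>
      intro β hβ
      have hβ2 : 0 < β/2 := by linarith
      set ββ : ℝ := min (min (f (β/2)) (β/2)) βc with hββ
      have hββpos : 0 < ββ := lt_min (lt_min (hf _ hβ2).1 hβ2) hβc
      have hββ2' : 0 < ββ/2 := by linarith
      set ββ2 : ℝ := min (min (f (ββ/2)) (ββ/2)) βc with hββ2
      have hββ2pos : 0 < ββ2 := lt_min (lt_min (hf _ hββ2').1 hββ2') hβc
      obtain ⟨T₁, γ₁, h1ch, h10, h1T, hT₁1, hT₁k⟩ := ih ββ2 hββ2pos
      obtain ⟨T₂, p₁, hT₂1, _, hp10, hp1T, hp1ch⟩ := hyw ββ2 hββ2pos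
      obtain ⟨T₃, p₂, hT₃1, _, hp20, hp2T, hp2ch⟩ := hwy ββ2 hββ2pos
      -- first glue: γ₁ ++ p₁  at level ββ
      have huc1 : ∀ τ ∈ Set.Icc (0:ℝ) 1, ∀ p ∈ Wset F ε₀ G, ∀ q ∈ Wset F ε₀ G,
          dist p q < ββ2 → dist (F τ p) (F τ q) < ββ/2 := by
        intro τ hτ p hp q hq hd
        exact (hf _ hββ2').2.2 τ hτ p hp q hq
          (lt_of_lt_of_le hd (le_trans (min_le_left _ _) (min_le_left _ _)))
      have hWa : ∀ t, 0 ≤ t → t ≤ T₁ → γ₁ t ∈ Wset F ε₀ G :=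
        hWp (min_le_right _ _) h1ch h10
      have hglue1 := hc.concat (le_of_lt hββ2') huc1 h1ch hp1ch hT₁1 hT₂1
        (by rw [h1T, hp10]) hWa
      set γa : ℝ → X := fun t => if t < T₁ then γ₁ t else p₁ (t - T₁) with hγa
      have hγa0 : γa 0 = x := by
        simp only [hγa, if_pos (by linarith : (0:ℝ) < T₁)]; exact h10
      have hγaT : γa (T₁ + T₂) = w := by
        have : ¬ (T₁ + T₂ < T₁) := by push_neg; linarith
        simp only [hγa, if_neg this]
        rw [show T₁ + T₂ - T₁ = T₂ by ring]; exact hp1T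
      have hacha : EpsCloseTo F ββ (T₁ + T₂) γa := by
        refine epsCloseTo_mono ?_ hglue1
        have h1 : ββ2 ≤ ββ/2 := le_trans (min_le_left _ _) (min_le_right _ _)
        refine max_le (by linarith) ?_
        linarith
      -- second glue: γa ++ p₂ at level β
      have huc2 : ∀ τ ∈ Set.Icc (0:ℝ) 1, ∀ p ∈ Wset F ε₀ G, ∀ q ∈ Wset F ε₀ G,
          dist p q < ββ → dist (F τ p) (F τ q) < β/2 := by
        intro τ hτ p hp q hq hd
        exact (hf _ hβ2).2.2 τ hτ p hp q hq
          (lt_of_lt_of_le hd (le_trans (min_le_left _ _) (min_le_left _ _)))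
      have hWb : ∀ t, 0 ≤ t → t ≤ T₁ + T₂ → γa t ∈ Wset F ε₀ G :=
        hWp (min_le_right _ _) hacha hγa0
      have hglue2 := hc.concat (le_of_lt hβ2) huc2 hacha hp2ch (by linarith) hT₃1
        (by rw [hγaT, hp20]) hWb
      set γb : ℝ → X := fun t => if t < T₁ + T₂ then γa t else p₂ (t - (T₁ + T₂)) with hγb
      refine ⟨T₁ + T₂ + T₃, γb, ?_, ?_, ?_, by linarith, ?_⟩
      · have h2 : ββ ≤ β/2 := le_trans (min_le_left _ _) (min_le_right _ _)
        have h1 : ββ2 ≤ ββ/2 := le_trans (min_le_left _ _) (min_le_right _ _)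
        exact epsCloseTo_mono (max_le (by linarith) (by linarith)) hglue2
      · simp only [hγb, if_pos (by linarith : (0:ℝ) < T₁ + T₂)]
        exact hγa0
      · have : ¬ (T₁ + T₂ + T₃ < T₁ + T₂) := by push_neg; linarith
        simp only [hγb, if_neg this]
        rw [show T₁ + T₂ + T₃ - (T₁ + T₂) = T₃ by ring]; exact hp2T
      · push_cast; linarith


lemma Ctx.shadowLe_conleyLe (hc : Ctx F G ε₀) {x y : X} (hxG : x ∈ G) (hyRS : y ∈ RS F)
    (hS : ShadowLe F x y) : ConleyLe F x y := by
  intro ε hε T hT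
  obtain ⟨δd, Mn, βc, hδd, hδdle, hMn, hβc, hstab, hinv⟩ := hc.invariant
  set Ln : ℕ := (⌈T⌉₊ + 1) * Mn with hLn
  have hLn1 : 1 ≤ Ln := by
    rw [hLn]; exact Nat.one_le_iff_ne_zero.2 (by positivity)
  have hLnR : (0:ℝ) < (Ln:ℝ) := by exact_mod_cast hLn1
  have hTLn : T ≤ (Ln:ℝ) := by
    have h1 : T ≤ (⌈T⌉₊ : ℝ) := Nat.le_ceil T
    have h2 : ((⌈T⌉₊:ℝ)) ≤ ((⌈T⌉₊ + 1) * Mn : ℕ) := by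
      push_cast
      have : (1:ℝ) ≤ (Mn:ℝ) := by exact_mod_cast hMn
      nlinarith [Nat.cast_nonneg (α := ℝ) ⌈T⌉₊]
    rw [hLn]; linarith
  set H : ℕ := 2 * Ln + 1 with hH
  set ηf : ℝ := min (ε/2) (ε₀/2) with hηf
  have hηfpos : 0 < ηf := lt_min (by linarith) (by linarith [hc.pos])
  obtain ⟨βe, hβe, hβele, hcp⟩ := hc.chainprop H hηfpos
    (le_trans (min_le_right _ _) (by linarith [hc.pos]))
  set βx : ℝ := min βe βc with hβx
  have hβxpos : 0 < βx := lt_min hβe hβc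
  obtain ⟨Tγ, γ, hch, h0, hTend, hTγ1, hTγk⟩ := hc.long_chains hxG hyRS hS (2*Ln + 1) βx hβxpos
  have hchc : EpsCloseTo F βc Tγ γ := epsCloseTo_mono (min_le_right _ _) hch
  have hche : EpsCloseTo F βe Tγ γ := epsCloseTo_mono (min_le_left _ _) hch
  have hsam := (hinv hchc (h0 ▸ hxG)).1
  -- the jump estimate
  have hjump : ∀ (i : ℕ) (u : ℝ), 0 ≤ u → u ≤ 2*(Ln:ℝ) → ((i:ℝ)*Ln) + u ≤ Tγ →
      dist (γ ((i:ℝ)*Ln + u)) (F u (γ ((i:ℝ)*Ln))) < ηf := by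
    intro i u hu0 hu2 hsu
    set s : ℝ := (i:ℝ)*Ln with hs
    have hs0 : 0 ≤ s := by positivity
    have htight : ∃ g ∈ G, dist (γ s) g < δd := by
      have hcast : ((i * (⌈T⌉₊ + 1) : ℕ):ℝ) * (Mn:ℝ) = s := by
        rw [hs, hLn]; push_cast; ring
      have := hsam (i * (⌈T⌉₊ + 1)) (by rw [hcast]; linarith)
      rwa [hcast] at this
    have hnear : ∀ t ∈ Set.Icc (0:ℝ) (H:ℝ), ∃ g ∈ G, dist (F t (γ s)) g < ε₀/2 :=
      fun t ht => hstab (γ s) htight t ht.1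
    refine hcp hche hs0 hnear u ⟨hu0, ?_⟩ hsu
    rw [hH]; push_cast; linarith
  -- build the Conley chain
  set K : ℕ := ⌊Tγ / (Ln:ℝ)⌋₊ with hK
  have hTγLn : (2:ℝ) ≤ Tγ / Ln := by
    rw [le_div_iff₀ hLnR]
    have : ((2*Ln + 1 : ℕ):ℝ) ≤ Tγ := hTγk
    push_cast at this
    linarith
  have hK2 : 2 ≤ K := by
    rw [hK]
    exact Nat.le_floor (by exact_mod_cast hTγLn)
  have hKL : ((K:ℝ)) * Ln ≤ Tγ := by
    have := Nat.floor_le (by positivity : (0:ℝ) ≤ Tγ / Ln)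
    rw [← hK] at this
    calc ((K:ℝ)) * Ln ≤ (Tγ / Ln) * Ln := mul_le_mul_of_nonneg_right this (le_of_lt hLnR)
      _ = Tγ := by field_simp
  have hKL2 : Tγ < ((K:ℝ) + 1) * Ln := by
    have h1 := Nat.lt_floor_add_one (Tγ / (Ln:ℝ))
    rw [← hK] at h1
    calc Tγ = (Tγ / Ln) * Ln := by field_simp
      _ < ((K:ℝ)+1) * Ln := mul_lt_mul_of_pos_right h1 hLnR
  refine ⟨K, (fun j => if j < K then γ ((j:ℝ)*Ln) else y),
    (fun j => if j+1 < K then (Ln:ℝ) else Tγ - ((K:ℝ)-1)*Ln), by omega, ?_, ?_, ?_⟩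
  · simp only [if_pos (by omega : 0 < K)]
    norm_num
    exact h0
  · simp only [if_neg (lt_irrefl K)]
  · intro i hiK
    by_cases hi1 : i + 1 < K
    · simp only [if_pos hi1, if_pos hiK, if_pos (by omega : i < K)]
      constructor
      · exact hTLn
      · have hsu : ((i:ℝ)*Ln) + Ln ≤ Tγ := by
          have h1 : ((i:ℝ)+1) ≤ (K:ℝ) := by exact_mod_cast Nat.le_of_lt hi1
          have : ((i:ℝ)+1) * Ln ≤ (K:ℝ) * Ln := mul_le_mul_of_nonneg_right h1 (le_of_lt hLnR)
          nlinarith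
        have := hjump i (Ln:ℝ) (le_of_lt hLnR) (by linarith) hsu
        rw [dist_comm] at this
        have hcast : ((i+1:ℕ):ℝ)*Ln = (i:ℝ)*Ln + Ln := by push_cast; ring
        rw [hcast]
        refine lt_of_lt_of_le this ?_
        exact le_trans (min_le_left _ _) (by linarith)
    · have hieq : i + 1 = K := by omega
      simp only [if_neg hi1, if_pos hiK, if_neg (by omega : ¬ (i + 1 < K))]
      have hicast : (i:ℝ) = (K:ℝ) - 1 := by
        have : ((i+1:ℕ):ℝ) = (K:ℝ) := by exact_mod_cast congrArg (Nat.cast (R := ℝ)) hieq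
        push_cast at this
        linarith
      set u : ℝ := Tγ - ((K:ℝ)-1)*Ln with hu
      have huLn : (Ln:ℝ) ≤ u := by
        rw [hu]; nlinarith
      have hu2 : u ≤ 2*(Ln:ℝ) := by
        rw [hu]
        have hK1 : (1:ℝ) ≤ (K:ℝ) := by exact_mod_cast (by omega : 1 ≤ K)
        nlinarith
      constructor
      · linarith
      · have hsu : ((i:ℝ)*Ln) + u ≤ Tγ := by rw [hicast, hu]; ring_nf; rfl
        have := hjump i u (by linarith) hu2 hsu
        rw [dist_comm] at this
        have harg : (i:ℝ)*Ln + u = Tγ := by rw [hicast, hu]; ring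
        rw [harg, hTend] at this
        refine lt_of_lt_of_le this ?_
        rw [hηf]
        exact le_trans (min_le_left _ _) (by linarith)


lemma Ctx.conleyLe_shadowLe (hc : Ctx F G ε₀) {x y : X} (hxG : x ∈ G)
    (hC : ConleyLe F x y) : ShadowLe F x y := by
  classical
  intro ε hε
  obtain ⟨f, hf⟩ := hc.ucFun
  obtain ⟨T₁, hT₁pos, hT₁⟩ := hc.attr (ε₀/2) (by linarith [hc.pos])
  set δ' : ℝ := min (f ε) (ε₀/2) with hδ'
  have hδ'pos : 0 < δ' := lt_min (hf ε hε).1 (by linarith [hc.pos])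
  have hδ'f : δ' ≤ f ε := min_le_left _ _
  have hδ'ε : δ' ≤ ε₀/2 := min_le_right _ _
  set T' : ℝ := max T₁ 1 with hT'
  have hT'pos : 0 < T' := lt_of_lt_of_le zero_lt_one (le_max_right _ _)
  have hT'1 : 1 ≤ T' := le_max_right _ _
  obtain ⟨N, c, tt, hN, hc0, hcN, hstep⟩ := hC δ' hδ'pos T' hT'pos
  have htt1 : ∀ i, i < N → 1 ≤ tt i := fun i hi => le_trans hT'1 (hstep i hi).1
  have httnn : ∀ i, i < N → 0 ≤ tt i := fun i hi => le_trans zero_le_one (htt1 i hi)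
  set s : ℕ → ℝ := fun k => ∑ j ∈ Finset.range k, tt j with hs
  have hs0 : s 0 = 0 := by simp [hs]
  have hssucc : ∀ k, s (k+1) = s k + tt k := fun k => Finset.sum_range_succ tt k
  have hsmono : ∀ i j, i ≤ j → j ≤ N → s i ≤ s j := by
    intro i j hij hjN
    induction j with
    | zero =>
      have : i = 0 := by omega
      subst this; exact le_refl _
    | succ j ih =>
      rcases Nat.eq_or_lt_of_le hij with heq | hlt
      · subst heq; exact le_refl _
      · have h1 : i ≤ j := by omega
        have h2 : j ≤ N := by omega
        have h3 : 0 ≤ tt j := httnn j (by omega)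
        have := ih h1 h2
        rw [hssucc]; linarith
  have hsnn : ∀ i, i ≤ N → 0 ≤ s i := by
    intro i hi
    have := hsmono 0 i (Nat.zero_le i) hi
    rwa [hs0] at this
  have hstrict : ∀ i, i < N → s i + 1 ≤ s (i+1) := by
    intro i hi
    have := htt1 i hi
    rw [hssucc]; linarith
  -- chain points are near G
  have hnear : ∀ i, 1 ≤ i → i ≤ N → ∃ g ∈ G, dist (c i) g < ε₀ := by
    intro i hi1
    induction i with
    | zero => omega
    | succ i ih =>
      intro hiN
      rcases Nat.eq_or_lt_of_le hi1 with h1 | h1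
      · have hi0 : i = 0 := by omega
        subst hi0
        obtain ⟨_, hd⟩ := hstep 0 (by omega)
        refine ⟨F (tt 0) x, hc.mem_G hxG (httnn 0 (by omega)), ?_⟩
        rw [hc0] at hd
        rw [dist_comm] at hd
        have := hc.pos
        linarith [hd.trans_le hδ'ε]
      · have hiN' : i ≤ N := by omega
        have hiltN : i < N := by omega
        obtain ⟨g, hg, hdg⟩ := ih (by omega) hiN'
        have hithick : c i ∈ Metric.thickening ε₀ G :=
          hc.nr_thick (le_refl _) ⟨g, hg, hdg⟩
        obtain ⟨htt, hd⟩ := hstep i hiltN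
        have hFc : F (tt i) (c i) ∈ Metric.thickening (ε₀/2) G :=
          hT₁ (tt i) (le_trans (le_max_left _ _) htt) ⟨c i, hithick, rfl⟩
        obtain ⟨g', hg', hdg'⟩ := Metric.mem_thickening_iff.1 hFc
        refine ⟨g', hg', ?_⟩
        calc dist (c (i+1)) g' ≤ dist (c (i+1)) (F (tt i) (c i)) + dist (F (tt i) (c i)) g' :=
              dist_triangle _ _ _
          _ < δ' + ε₀/2 := add_lt_add_of_lt_of_lt (by rw [dist_comm]; exact hd) hdg'
          _ ≤ ε₀ := by linarith
  have hthick : ∀ i, i ≤ N → c i ∈ Metric.thickening ε₀ G := by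
    intro i hi
    rcases Nat.eq_zero_or_pos i with h0 | h0
    · subst h0; rw [hc0]; exact hc.G_sub_thick hxG
    · exact hc.nr_thick (le_refl _) (hnear i h0 hi)
  have hcW : ∀ i, i ≤ N → c i ∈ Wset F ε₀ G :=
    fun i hi => hc.thick_sub_W (hthick i hi)
  -- the curve
  set J : ℝ → ℕ := fun u => @Nat.findGreatest (fun i => s i ≤ u) (Classical.decPred _) N with hJ
  set γ : ℝ → X := fun u => F (u - s (J u)) (c (J u)) with hγ
  have hJle : ∀ u, J u ≤ N := fun u => Nat.findGreatest_le N
  have hJ0 : ∀ u, 0 ≤ u → s (J u) ≤ u := by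
    intro u hu
    exact @Nat.findGreatest_spec 0 (fun i => s i ≤ u) (Classical.decPred _) N
      (Nat.zero_le N) (show s 0 ≤ u by rw [hs0]; exact hu)
  have hJge : ∀ (u : ℝ) (j : ℕ), j ≤ N → s j ≤ u → j ≤ J u :=
    fun u j hj hsj => Nat.le_findGreatest hj hsj
  have hJeq : ∀ (u : ℝ) (j : ℕ), 0 ≤ u → j ≤ N → s j ≤ u →
      (∀ i, j < i → i ≤ N → u < s i) → J u = j := by
    intro u j hu hjN hsj hmore
    refine le_antisymm ?_ (hJge u j hjN hsj)
    by_contra hlt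
    push_neg at hlt
    exact absurd (hJ0 u hu) (not_le.2 (hmore (J u) hlt (hJle u)))
  have hγval : ∀ (u : ℝ) (j : ℕ), 0 ≤ u → j ≤ N → s j ≤ u →
      (∀ i, j < i → i ≤ N → u < s i) → γ u = F (u - s j) (c j) := by
    intro u j hu hjN hsj hmore
    rw [hγ]
    simp only
    rw [hJeq u j hu hjN hsj hmore]
  -- endpoints
  have hγ0 : γ 0 = x := by
    rw [hγval 0 0 (le_refl 0) (Nat.zero_le N) (by rw [hs0]) ?side]
    · rw [hs0, sub_zero, hc.flow.map_zero, hc0]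
    case side =>
      intro i hi0 hiN
      have h1 : s 1 ≤ s i := hsmono 1 i hi0 hiN
      have h2 : s 0 + 1 ≤ s 1 := hstrict 0 (by omega)
      rw [hs0] at h2
      linarith
  have hγT : γ (s N) = y := by
    rw [hγval (s N) N (hsnn N (le_refl N)) (le_refl N) (le_refl _)
      (fun i hi hiN => absurd hi (by omega))]
    rw [sub_self, hc.flow.map_zero, hcN]
  -- the closeness property
  have hinext : ∀ (t : ℝ), ∀ kk, J t < kk → kk ≤ N → t < s kk := by
    intro t kk hikk hkkN
    by_contra hcon
    push_neg at hcon
    have := hJge t kk hkkN hcon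
    omega
  have heps : EpsCloseTo F ε (s N) γ := by
    intro τ hτ t ht
    obtain ⟨hτ0, hτ1⟩ := hτ
    obtain ⟨ht0, htT⟩ := ht
    have hiN : J t ≤ N := hJle t
    have hsit : s (J t) ≤ t := hJ0 t ht0
    have hjN : J (t+τ) ≤ N := hJle _
    have hsj : s (J (t+τ)) ≤ t + τ := hJ0 _ (by linarith)
    have hij : J t ≤ J (t+τ) := hJge (t+τ) (J t) hiN (by linarith)
    have hγt : γ t = F (t - s (J t)) (c (J t)) := rfl
    have hγtτ : γ (t+τ) = F (t + τ - s (J (t+τ))) (c (J (t+τ))) := rfl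
    have hji : J (t+τ) ≤ J t + 1 := by
      by_contra hcon
      push_neg at hcon
      have h2N : J t + 2 ≤ N := le_trans hcon hjN
      have hs2 : s (J t + 2) ≤ s (J (t+τ)) := hsmono _ _ hcon hjN
      have hst1 : t < s (J t + 1) := hinext t (J t + 1) (by omega) (by omega)
      have := hstrict (J t + 1) (by omega)
      linarith
    rcases Nat.eq_or_lt_of_le hij with heq | hlt
    · -- same segment
      rw [hγtτ, ← heq, hγt]
      have hmap := hc.flow.map_add τ (t - s (J t)) hτ0 (by linarith) (c (J t))
      rw [← hmap, show τ + (t - s (J t)) = t + τ - s (J t) by ring, dist_self]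
      exact hε
    · -- crossing one jump
      have hjeq : J (t+τ) = J t + 1 := by omega
      have hi1N : J t + 1 ≤ N := hjeq ▸ hjN
      have hiltN : J t < N := by omega
      set i := J t with hidef
      set σ : ℝ := t + τ - s (i+1) with hσdef
      have hσ0 : 0 ≤ σ := by rw [hσdef, ← hjeq]; linarith
      have hst1 : t < s (i+1) := hinext t (i+1) (by omega) hi1N
      have hσ1 : σ ≤ 1 := by rw [hσdef]; linarith
      obtain ⟨httT', hd⟩ := hstep i hiltN
      rw [hγtτ, hγt, hjeq]
      have hmap1 := hc.flow.map_add τ (t - s i) hτ0 (by linarith) (c i)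
      have harg : τ + (t - s i) = σ + tt i := by
        rw [hσdef, hssucc i]; ring
      have hmap2 := hc.flow.map_add σ (tt i) hσ0 (httnn i hiltN) (c i)
      rw [← hmap1, harg, hmap2]
      rw [show t + τ - s (i+1) = σ by rw [hσdef]]
      refine (hf ε hε).2.2 σ ⟨hσ0, hσ1⟩ _ (hcW (i+1) hi1N) _
        (hc.F_mem_W (hthick i (le_of_lt hiltN)) (httnn i hiltN)) ?_
      rw [dist_comm]
      exact hd.trans_le hδ'f
  have hTc1 : 1 ≤ s N := by
    have h1 : s 0 + 1 ≤ s 1 := hstrict 0 (by omega)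
    have h2 : s 1 ≤ s N := hsmono 1 N hN (le_refl N)
    rw [hs0] at h1
    linarith
  -- piecewise continuity
  have hpw : PiecewiseContinuousOn γ (s N) := by
    refine ⟨⟨(Finset.range (N+1)).image s, ?_⟩, ?_, ?_⟩
    · -- continuity off the jump times
      intro t ht htS
      obtain ⟨ht0, htT⟩ := ht
      have hneq : ∀ k, k ≤ N → s k ≠ t := by
        intro k hk heq
        exact htS (Finset.mem_image.2 ⟨k, Finset.mem_range.2 (by omega), heq⟩)
      have hsit : s (J t) < t := lt_of_le_of_ne (hJ0 t ht0) (hneq _ (hJle t))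
      have hiltN : J t < N := by
        rcases Nat.eq_or_lt_of_le (hJle t) with h | h
        · exact absurd htT (not_le.2 (h ▸ hsit))
        · exact h
      have htlt : t < s (J t + 1) := hinext t (J t + 1) (by omega) (by omega)
      have hca : ContinuousAt (fun u => F (u - s (J t)) (c (J t))) t := by
        have hflow : ContinuousAt (fun p : ℝ × X => F p.1 p.2) (t - s (J t), c (J t)) := by
          refine hc.flow.cont.continuousAt ?_
          exact prod_mem_nhds (Ici_mem_nhds (by linarith)) univ_mem
        have hmap : Filter.Tendsto (fun u : ℝ => ((u - s (J t), c (J t)) : ℝ × X)) (nhds t)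
            (nhds ((t - s (J t), c (J t)) : ℝ × X)) :=
          Continuous.tendsto ((continuous_id.sub continuous_const).prodMk continuous_const) t
        exact Filter.Tendsto.comp hflow hmap
      have hev : (fun u => F (u - s (J t)) (c (J t))) =ᶠ[nhds t] γ := by
        filter_upwards [Ioo_mem_nhds hsit htlt] with u hu
        rw [hγval u (J t) (le_trans (hsnn (J t) (le_of_lt hiltN)) (le_of_lt hu.1))
          (le_of_lt hiltN) (le_of_lt hu.1)
          (fun k hik hkN => lt_of_lt_of_le hu.2 (hsmono (J t + 1) k hik hkN))]
      exact (hca.congr hev).continuousWithinAt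
    · -- left limits
      intro t ht
      obtain ⟨ht0, htT⟩ := ht
      have hsit : s (J t) ≤ t := hJ0 t (le_of_lt ht0)
      rcases eq_or_lt_of_le hsit with heq | hlt
      · -- t is a jump time; approach from the previous segment
        have hi1 : 1 ≤ J t := by
          by_contra h
          push_neg at h
          have h0 : J t = 0 := by omega
          rw [h0, hs0] at heq
          exact absurd heq (ne_of_lt ht0)
        have hi'N : J t - 1 < N := by have := hJle t; omega
        have hi'succ : J t - 1 + 1 = J t := by omega
        have hstr : s (J t - 1) + 1 ≤ s (J t) := by
          have := hstrict (J t - 1) hi'N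
          rwa [hi'succ] at this
        have hsi't : s (J t - 1) < t := by linarith
        refine ⟨F (t - s (J t - 1)) (c (J t - 1)), ?_⟩
        have hca : Tendsto (fun u => F (u - s (J t - 1)) (c (J t - 1))) (nhds t)
            (nhds (F (t - s (J t - 1)) (c (J t - 1)))) := by
          have hflow : ContinuousAt (fun p : ℝ × X => F p.1 p.2) (t - s (J t - 1), c (J t - 1)) := by
            refine hc.flow.cont.continuousAt ?_
            exact prod_mem_nhds (Ici_mem_nhds (by linarith)) univ_mem
          have hmap : Filter.Tendsto (fun u : ℝ => ((u - s (J t - 1), c (J t - 1)) : ℝ × X)) (nhds t)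
              (nhds ((t - s (J t - 1), c (J t - 1)) : ℝ × X)) :=
            Continuous.tendsto ((continuous_id.sub continuous_const).prodMk continuous_const) t
          exact Filter.Tendsto.comp hflow hmap
        refine Tendsto.congr' ?_ (hca.mono_left nhdsWithin_le_nhds)
        filter_upwards [Ioo_mem_nhdsLT_of_mem (⟨hsi't, le_refl t⟩ : t ∈ Set.Ioc (s (J t - 1)) t)]
          with u hu
        rw [hγval u (J t - 1) (le_trans (hsnn _ (by omega)) (le_of_lt hu.1)) (by omega)
          (le_of_lt hu.1) ?_]
        intro k hik hkN
        have h1 : s (J t - 1 + 1) ≤ s k := hsmono _ _ hik hkN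
        rw [hi'succ] at h1
        calc u < t := hu.2
          _ = s (J t) := heq.symm
          _ ≤ s k := h1
      · -- t is interior to a segment
        refine ⟨F (t - s (J t)) (c (J t)), ?_⟩
        have hca : Tendsto (fun u => F (u - s (J t)) (c (J t))) (nhds t)
            (nhds (F (t - s (J t)) (c (J t)))) := by
          have hflow : ContinuousAt (fun p : ℝ × X => F p.1 p.2) (t - s (J t), c (J t)) := by
            refine hc.flow.cont.continuousAt ?_
            exact prod_mem_nhds (Ici_mem_nhds (by linarith)) univ_mem
          have hmap : Filter.Tendsto (fun u : ℝ => ((u - s (J t), c (J t)) : ℝ × X)) (nhds t)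
              (nhds ((t - s (J t), c (J t)) : ℝ × X)) :=
            Continuous.tendsto ((continuous_id.sub continuous_const).prodMk continuous_const) t
          exact Filter.Tendsto.comp hflow hmap
        refine Tendsto.congr' ?_ (hca.mono_left nhdsWithin_le_nhds)
        filter_upwards [Ioo_mem_nhdsLT_of_mem (⟨hlt, le_refl t⟩ : t ∈ Set.Ioc (s (J t)) t)]
          with u hu
        rw [hγval u (J t) (le_trans (hsnn _ (hJle t)) (le_of_lt hu.1)) (hJle t)
          (le_of_lt hu.1) (fun k hik hkN => lt_trans hu.2 (hinext t k hik hkN))]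
    · -- right limits
      intro t ht
      obtain ⟨ht0, htT⟩ := ht
      have hsit : s (J t) ≤ t := hJ0 t ht0
      have hiltN : J t < N := by
        rcases Nat.eq_or_lt_of_le (hJle t) with h | h
        · exact absurd htT (not_lt.2 (h ▸ hsit))
        · exact h
      have htlt : t < s (J t + 1) := hinext t (J t + 1) (by omega) (by omega)
      refine ⟨F (t - s (J t)) (c (J t)), ?_⟩
      have hbase : Tendsto (fun u : ℝ => ((u - s (J t), c (J t)) : ℝ × X)) (nhdsWithin t (Set.Ioi t))
          (nhdsWithin (t - s (J t), c (J t)) (Set.Ici 0 ×ˢ Set.univ)) := by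
        rw [tendsto_nhdsWithin_iff]
        constructor
        · exact (((continuous_id.sub continuous_const).prodMk
            continuous_const).continuousAt).mono_left nhdsWithin_le_nhds
        · filter_upwards [self_mem_nhdsWithin] with u hu
          refine Set.mem_prod.2 ⟨?_, Set.mem_univ _⟩
          have : t < u := hu
          simp only [Set.mem_Ici]
          linarith
      have hflow : ContinuousWithinAt (fun p : ℝ × X => F p.1 p.2)
          (Set.Ici 0 ×ˢ Set.univ) (t - s (J t), c (J t)) :=
        hc.flow.cont _ (Set.mem_prod.2 ⟨sub_nonneg.2 hsit, Set.mem_univ _⟩)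
      refine Tendsto.congr' ?_ (Filter.Tendsto.comp hflow hbase)
      filter_upwards [Ioo_mem_nhdsGT_of_mem (⟨le_refl t, htlt⟩ : t ∈ Set.Ico t (s (J t + 1)))]
        with u hu
      simp only [Function.comp]
      rw [hγval u (J t) (le_trans ht0 (le_of_lt hu.1)) (le_of_lt hiltN)
        (le_trans hsit (le_of_lt hu.1))
        (fun k hik hkN => lt_of_lt_of_le hu.2 (hsmono (J t + 1) k hik hkN))]
  exact ⟨s N, γ, hTc1, hpw, hγ0, hγT, heps⟩

end CR

/-- for a semiflow with strong compact dynamics and `x, y` in the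
chain-recurrent set `R = R_C = R_S`, `x ≽_C y ↔ x ≽_S y`. -/
theorem conleyLe_iff_shadowLe_on_R (F : ℝ → X → X) (hF : IsSemiflow F) (G : Set X)
    (hG : IsStrongGlobalAttractor F G) {x y : X}
    (hx : x ∈ RC F ∩ RS F) (hy : y ∈ RC F ∩ RS F) :
    ConleyLe F x y ↔ ShadowLe F x y := by
  obtain ⟨⟨hGc, hGinv, hGattrK, hGmax⟩, ε₀, hε₀, hA, hUC⟩ := hG
  have hc : CR.Ctx F G ε₀ := ⟨hF, hGc, hGinv, hGattrK, hGmax, hε₀, hA, hUC⟩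
  have hxG : x ∈ G := hc.RC_sub_G hx.1
  constructor
  · exact fun h => hc.conleyLe_shadowLe hxG h
  · exact fun h => hc.shadowLe_conleyLe hxG hy.2 h
end

section
/- Let F be a semiflow with strong compact dynamics on a metric space (X,d). Then a subset M ⊆ X is a Conley node if and only if it is a shadow node. -/
open Set Metric Filter

variable {X : Type*} [MetricSpace X]

/-! ### Auxiliary lemmas -/

section Aux

variable {F : ℝ → X → X} {G : Set X}

/-- The flow, extended to all times by clamping at `0`; jointly continuous. -/
lemma flow_cont (hF : IsSemiflow F) :
    Continuous (fun p : ℝ × X => F (max p.1 0) p.2) := by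
  have h : Continuous (fun p : ℝ × X => ((max p.1 0, p.2) : ℝ × X)) :=
    (continuous_fst.max continuous_const).prodMk continuous_snd
  have := hF.cont.comp_continuous h (fun p => by
    exact ⟨Set.mem_Ici.2 (le_max_right _ _), trivial⟩)
  exact this

lemma flow_max_eq {t : ℝ} (ht : 0 ≤ t) (z : X) : F (max t 0) z = F t z := by
  rw [max_eq_left ht]

lemma flow_add (hF : IsSemiflow F) {a b : ℝ} (ha : 0 ≤ a) (hb : 0 ≤ b) (z : X) :
    F (a + b) z = F a (F b z) := hF.map_add a b ha hb z

/-- Asymmetric uniform continuity near a compact set: for `q` in a compact `Q`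
and `z` arbitrary close to `q`, the flows stay close for time in `[0,S]`. -/
lemma asym_cont (hF : IsSemiflow F) {Q : Set X} (hQ : IsCompact Q) {S α : ℝ}
    (hS : 0 ≤ S) (hα : 0 < α) :
    ∃ ρ > 0, ∀ q ∈ Q, ∀ σ ∈ Icc (0:ℝ) S, ∀ z : X, dist z q < ρ →
      dist (F σ z) (F σ q) < α := by
  classical
  set g : ℝ × X × X → ℝ := fun p => dist (F (max p.1 0) p.2.1) (F (max p.1 0) p.2.2) with hg
  have hgc : Continuous g := by
    have h1 : Continuous (fun p : ℝ × X × X => F (max p.1 0) p.2.1) :=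
      (flow_cont hF).comp (continuous_fst.prodMk (continuous_fst.comp continuous_snd))
    have h2 : Continuous (fun p : ℝ × X × X => F (max p.1 0) p.2.2) :=
      (flow_cont hF).comp (continuous_fst.prodMk (continuous_snd.comp continuous_snd))
    exact h1.dist h2
  have hU : IsOpen {p : ℝ × X × X | g p < α} := isOpen_lt hgc continuous_const
  have hKc : IsCompact ((Icc (0:ℝ) S) ×ˢ ((fun q : X => (q, q)) '' Q)) :=
    isCompact_Icc.prod (hQ.image (continuous_id.prodMk continuous_id))
  have hKU : (Icc (0:ℝ) S) ×ˢ ((fun q : X => (q, q)) '' Q) ⊆ {p | g p < α} := by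
    rintro ⟨σ, z, q⟩ ⟨hσ, ⟨q', hq', hqq⟩⟩
    obtain ⟨rfl, rfl⟩ : q' = z ∧ q' = q := by
      constructor <;> · injection hqq <;> simp_all
    simp [hg, hα]
  obtain ⟨ρ, hρ, hsub⟩ := hKc.exists_thickening_subset_open hU hKU
  refine ⟨ρ, hρ, fun q hq σ hσ z hz => ?_⟩
  have hmem : ((σ, z, q) : ℝ × X × X) ∈ Metric.thickening ρ
      ((Icc (0:ℝ) S) ×ˢ ((fun q : X => (q, q)) '' Q)) := by
    rw [Metric.mem_thickening_iff]
    refine ⟨(σ, q, q), ⟨hσ, ⟨q, hq, rfl⟩⟩, ?_⟩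
    have : dist ((σ, z, q) : ℝ × X × X) (σ, q, q) = dist z q := by
      simp [Prod.dist_eq, dist_nonneg, le_max_iff, dist_comm]
    rw [this]; exact hz
  have := hsub hmem
  simp only [mem_setOf_eq, hg] at this
  rwa [max_eq_left hσ.1] at this

end Aux
section Aux2

variable {F : ℝ → X → X} {G : Set X}

lemma thick_subset_W (hF : IsSemiflow F) {ε₀ : ℝ} :
    Metric.thickening ε₀ G ⊆ Wset F ε₀ G := by
  intro z hz
  refine mem_iUnion.2 ⟨0, mem_iUnion.2 ⟨Set.mem_Ici.2 (le_refl 0), ⟨z, hz, hF.map_zero z⟩⟩⟩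

lemma flow_mem_W (hF : IsSemiflow F) {ε₀ : ℝ} {z : X} (hz : z ∈ Metric.thickening ε₀ G)
    {t : ℝ} (ht : 0 ≤ t) : F t z ∈ Wset F ε₀ G := by
  exact mem_iUnion.2 ⟨t, mem_iUnion.2 ⟨Set.mem_Ici.2 ht, ⟨z, hz, rfl⟩⟩⟩

lemma mem_thick_trans {a b : ℝ} {z w : X} (hz : z ∈ Metric.thickening a G)
    (h : dist w z < b) : w ∈ Metric.thickening (b + a) G := by
  rw [Metric.mem_thickening_iff] at hz ⊢
  obtain ⟨g, hg, hzg⟩ := hz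
  exact ⟨g, hg, lt_of_le_of_lt (dist_triangle w z g) (by linarith)⟩

lemma G_mem_thick {ε₀ : ℝ} (hε₀ : 0 < ε₀) {g : X} (hg : g ∈ G) :
    g ∈ Metric.thickening ε₀ G :=
  Metric.mem_thickening_iff.2 ⟨g, hg, by simpa using hε₀⟩

/-- Points within a small neighbourhood of the global attractor stay within a
prescribed neighbourhood for all future times. -/
lemma stability (hF : IsSemiflow F) (hGc : IsCompact G)
    (hGinv : ∀ t ≥ (0:ℝ), F t '' G = G) {ε₀ : ℝ} (hε₀ : 0 < ε₀)
    (habs : Attracts F G (Metric.thickening ε₀ G)) {η : ℝ} (hη : 0 < η) (hηε : η ≤ ε₀) :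
    ∃ r > 0, r ≤ η ∧ ∀ z ∈ Metric.thickening r G, ∀ t ≥ (0:ℝ),
      F t z ∈ Metric.thickening η G := by
  obtain ⟨T₂, hT₂pos, hT₂⟩ := habs η hη
  obtain ⟨ρ, hρpos, hρ⟩ := asym_cont hF hGc (le_of_lt hT₂pos) hη
  refine ⟨min ρ η, by positivity, min_le_right _ _, fun z hz t ht => ?_⟩
  rcases le_or_gt t T₂ with hle | hgt
  · obtain ⟨g, hgG, hzg⟩ := Metric.mem_thickening_iff.1 hz
    have h1 : dist (F t z) (F t g) < η :=
      hρ g hgG t ⟨ht, hle⟩ z (lt_of_lt_of_le hzg (min_le_left _ _))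
    have h2 : F t g ∈ G := by
      rw [← hGinv t ht]; exact ⟨g, hgG, rfl⟩
    exact Metric.mem_thickening_iff.2 ⟨F t g, h2, h1⟩
  · have hzA : z ∈ Metric.thickening ε₀ G :=
      Metric.thickening_mono (le_trans (min_le_right _ _) hηε) G hz
    exact hT₂ t (le_of_lt hgt) ⟨z, hzA, rfl⟩

end Aux2
section Aux3

variable {F : ℝ → X → X} {G : Set X}

lemma ucW {ε₀ : ℝ}
    (hUC : UniformContinuousOn (fun p : ℝ × X => F p.1 p.2)
      (Set.Icc (0:ℝ) 1 ×ˢ Wset F ε₀ G)) {α : ℝ} (hα : 0 < α) :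
    ∃ β > 0, ∀ p ∈ Wset F ε₀ G, ∀ q ∈ Wset F ε₀ G, dist p q < β →
      ∀ σ ∈ Icc (0:ℝ) 1, dist (F σ p) (F σ q) < α := by
  rw [Metric.uniformContinuousOn_iff] at hUC
  obtain ⟨β, hβ, h⟩ := hUC α hα
  refine ⟨β, hβ, fun p hp q hq hpq σ hσ => ?_⟩
  have hd : dist ((σ, p) : ℝ × X) (σ, q) = dist p q := by
    rw [Prod.dist_eq]
    simp [max_eq_right dist_nonneg]
  exact h (σ, p) ⟨hσ, hp⟩ (σ, q) ⟨hσ, hq⟩ (by rw [hd]; exact hpq)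

/-- The fundamental cascade/tracking lemma: under a one-step continuity
modulus along "good" base points, a fine enough shadow chain tracks the true
orbit of any of its points for a whole time-horizon `H`. -/
lemma cascade (hF : IsSemiflow F) (Good : X → Prop) (μ : ℝ → ℝ)
    (hμ : ∀ α > (0:ℝ), 0 < μ α)
    (hstep : ∀ α > (0:ℝ), ∀ p, Good p → ∀ q, dist q p < μ α →
      ∀ σ ∈ Icc (0:ℝ) 1, dist (F σ q) (F σ p) < α)
    (H : ℕ) {α' : ℝ} (hα' : 0 < α') :
    ∃ δ > 0, ∀ (γ : ℝ → X) (T₁ t₀ : ℝ), EpsCloseTo F δ T₁ γ → 0 ≤ t₀ →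
      (∀ k : ℕ, k ≤ H → Good (F (k : ℝ) (γ t₀))) →
      ∀ s, 0 ≤ s → s ≤ (H : ℝ) → t₀ + s ≤ T₁ →
        dist (γ (t₀ + s)) (F s (γ t₀)) < α' := by
  -- the decreasing cascade of thresholds
  have hD : ∃ D : ℕ → ℝ, D 0 = α' ∧ ∀ j, D (j+1) = min (μ (D j / 2)) (D j / 2) :=
    ⟨fun j => Nat.rec α' (fun _ d => min (μ (d / 2)) (d / 2)) j, rfl, fun j => rfl⟩
  obtain ⟨D, hD0, hDs⟩ := hD
  have hDpos : ∀ j, 0 < D j := by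
    intro j
    induction j with
    | zero => rw [hD0]; exact hα'
    | succ j ih =>
      rw [hDs]
      exact lt_min (hμ _ (by linarith)) (by linarith)
  have hDmono : ∀ j, D (j+1) ≤ D j := by
    intro j
    rw [hDs]
    exact le_trans (min_le_right _ _) (by have := hDpos j; linarith)
  have hDle : ∀ j, D j ≤ α' := by
    intro j
    induction j with
    | zero => rw [hD0]
    | succ j ih => exact le_trans (hDmono j) ih
  refine ⟨D H / 2, by have := hDpos H; linarith, fun γ T₁ t₀ hγ ht₀ hGood s hs0 hsH hsT => ?_⟩
  have hDadd : ∀ j m, D (j + m) ≤ D j := by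
    intro j m
    induction m with
    | zero => simp
    | succ m ih => exact le_trans (hDmono (j+m)) ih
  have hδle : ∀ j ≤ H, D H / 2 ≤ D j / 2 := by
    intro j hj
    obtain ⟨m, rfl⟩ := Nat.exists_eq_add_of_le hj
    linarith [hDadd j m]
  -- integer-time tracking
  have key : ∀ k : ℕ, k ≤ H → t₀ + k ≤ T₁ →
      dist (γ (t₀ + k)) (F (k : ℝ) (γ t₀)) < D (H - k) := by
    intro k
    induction k with
    | zero =>
      intro _ _
      simp only [Nat.cast_zero, add_zero, Nat.sub_zero]
      rw [hF.map_zero]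
      simpa using hDpos H
    | succ k ih =>
      intro hk hT
      have hk' : k ≤ H := Nat.le_of_succ_le hk
      have hT' : t₀ + k ≤ T₁ := by push_cast at hT ⊢; linarith
      have hIH := ih hk' hT'
      have hsplit : (((k+1 : ℕ)) : ℝ) = 1 + (k : ℝ) := by push_cast; ring
      have hflow : F (((k+1 : ℕ)) : ℝ) (γ t₀) = F 1 (F (k : ℝ) (γ t₀)) := by
        rw [hsplit, flow_add hF zero_le_one (Nat.cast_nonneg k)]
      -- index bookkeeping : H - k = (H - (k+1)) + 1
      have hidx : H - k = (H - (k+1)) + 1 := by omega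
      have hstep' : dist (F 1 (γ (t₀ + k))) (F 1 (F (k : ℝ) (γ t₀))) < D (H - (k+1)) / 2 := by
        apply hstep (D (H - (k+1)) / 2) (by have := hDpos (H - (k+1)); linarith)
          _ (hGood k hk') _ _ 1 (by norm_num)
        calc dist (γ (t₀ + k)) (F (k:ℝ) (γ t₀)) < D (H - k) := hIH
          _ ≤ μ (D (H - (k+1)) / 2) := by rw [hidx, hDs]; exact min_le_left _ _
      have hwin : dist (γ (t₀ + k + 1)) (F 1 (γ (t₀ + k))) < D H / 2 := by
        apply hγ 1 (by norm_num) (t₀ + k) ⟨by positivity, by push_cast at hT; linarith⟩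
      have : dist (γ (t₀ + (k+1 : ℕ))) (F (((k+1 : ℕ)) : ℝ) (γ t₀)) ≤
          dist (γ (t₀ + k + 1)) (F 1 (γ (t₀ + k))) + dist (F 1 (γ (t₀ + k))) (F 1 (F (k:ℝ) (γ t₀))) := by
        rw [hflow]
        have : t₀ + ((k+1:ℕ):ℝ) = t₀ + k + 1 := by push_cast; ring
        rw [this]
        exact dist_triangle _ _ _
      calc dist (γ (t₀ + (k+1:ℕ))) (F (((k+1:ℕ)):ℝ) (γ t₀)) ≤ _ := this
        _ < D H / 2 + D (H - (k+1)) / 2 := by exact add_lt_add hwin hstep'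
        _ ≤ D (H - (k+1)) / 2 + D (H - (k+1)) / 2 := by
            have := hδle (H - (k+1)) (by omega); linarith
        _ = D (H - (k+1)) := by ring
  -- real-time tracking
  set k := ⌊s⌋₊ with hk
  have hks : (k : ℝ) ≤ s := Nat.floor_le hs0
  have hkH : k ≤ H := by
    have := Nat.floor_le_floor (R := ℝ) (hsH)
    simpa using this.trans (le_of_eq (Nat.floor_natCast H))
  set τ := s - k with hτ
  have hτ0 : 0 ≤ τ := by simp [hτ]; linarith
  rcases eq_or_lt_of_le hτ0 with hτz | hτpos
  · -- s is an integer
    have : s = (k : ℝ) := by simp [hτ] at hτz; linarith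
    rw [this]
    calc dist (γ (t₀ + k)) (F (k:ℝ) (γ t₀)) < D (H - k) := key k hkH (by rw [← this]; exact hsT)
      _ ≤ α' := hDle _
  · -- fractional step
    have hkH' : k + 1 ≤ H := by
      by_contra hcon
      have hkeq : k = H := le_antisymm hkH (by omega)
      have : s = (k:ℝ) := le_antisymm (by rw [hkeq]; exact hsH) hks
      rw [this] at hτ
      simp [hτ] at hτpos
    have hτ1 : τ ≤ 1 := by
      have := Nat.lt_floor_add_one s
      have : s < (k:ℝ) + 1 := by rw [hk]; exact Nat.lt_floor_add_one s
      simp only [hτ]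
      linarith
    have hT' : t₀ + (k:ℝ) ≤ T₁ := by linarith
    have hIH := key k hkH (by linarith)
    have hwin : dist (γ (t₀ + k + τ)) (F τ (γ (t₀ + k))) < D H / 2 := by
      apply hγ τ ⟨le_of_lt hτpos, hτ1⟩ (t₀ + k) ⟨by positivity, by simp only [hτ]; linarith⟩
    have hidx : H - k = (H - (k+1)) + 1 := by omega
    have hstep' : dist (F τ (γ (t₀ + k))) (F τ (F (k:ℝ) (γ t₀))) < D (H - (k+1)) / 2 := by
      apply hstep (D (H - (k+1)) / 2) (by have := hDpos (H - (k+1)); linarith)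
        _ (hGood k hkH) _ _ τ ⟨le_of_lt hτpos, hτ1⟩
      calc dist (γ (t₀ + k)) (F (k:ℝ) (γ t₀)) < D (H - k) := hIH
        _ ≤ μ (D (H - (k+1)) / 2) := by rw [hidx, hDs]; exact min_le_left _ _
    have hflow : F s (γ t₀) = F τ (F (k:ℝ) (γ t₀)) := by
      have hsk : s = τ + (k:ℝ) := by rw [hτ]; ring
      rw [hsk, flow_add hF (le_of_lt hτpos) (Nat.cast_nonneg k)]
    have hpt : t₀ + s = t₀ + k + τ := by rw [hτ]; ring
    calc dist (γ (t₀ + s)) (F s (γ t₀))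
        ≤ dist (γ (t₀ + k + τ)) (F τ (γ (t₀ + k)))
          + dist (F τ (γ (t₀ + k))) (F τ (F (k:ℝ) (γ t₀))) := by
          rw [hflow, hpt]; exact dist_triangle _ _ _
      _ < D H / 2 + D (H - (k+1)) / 2 := add_lt_add hwin hstep'
      _ ≤ D (H - (k+1)) / 2 + D (H - (k+1)) / 2 := by
          have := hδle (H - (k+1)) (by omega); linarith
      _ = D (H - (k+1)) := by ring
      _ ≤ α' := hDle _

end Aux3
section Aux4

variable {F : ℝ → X → X}

/-- Concatenation of two `EpsCloseTo` curves meeting exactly at a junction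
point `J`, with an asymmetric continuity modulus at `J`. -/
lemma concat_eps (hF : IsSemiflow F) {γa γb : ℝ → X} {Ta Tb δa δb α : ℝ} {J : X}
    (hTa : 1 ≤ Ta) (hTb : 1 ≤ Tb)
    (ha : EpsCloseTo F δa Ta γa) (hb : EpsCloseTo F δb Tb γb)
    (hJa : γa Ta = J) (hJb : γb 0 = J) (hα : 0 < α)
    (hjump : ∀ σ ∈ Icc (0:ℝ) 1, ∀ z : X, dist z J < δa → dist (F σ z) (F σ J) < α) :
    EpsCloseTo F (max δa (δb + α)) (Ta + Tb)
      (fun u => if u < Ta then γa u else γb (u - Ta)) := by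
  intro τ hτ t ht
  obtain ⟨hτ0, hτ1⟩ := hτ
  obtain ⟨ht0, htT⟩ := ht
  by_cases h1 : t + τ < Ta
  · -- entirely in the first piece
    have h2 : t < Ta := by linarith
    simp only [if_pos h1, if_pos h2]
    exact lt_of_lt_of_le (ha τ ⟨hτ0, hτ1⟩ t ⟨ht0, by linarith⟩) (le_max_left _ _)
  · push_neg at h1
    by_cases h2 : t < Ta
    · -- crossing the junction
      have hσ'0 : 0 ≤ t + τ - Ta := by linarith
      have hσ'τ : t + τ - Ta ≤ τ := by linarith
      simp only [if_neg (not_lt.2 h1), if_pos h2]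
      have hTat : Ta - t ≤ τ := by linarith
      have hTat0 : 0 ≤ Ta - t := by linarith
      -- the point z on the first curve at relative time `Ta - t`
      have hz : dist (γa (t + (Ta - t))) (F (Ta - t) (γa t)) < δa :=
        ha (Ta - t) ⟨hTat0, le_trans hTat hτ1⟩ t ⟨ht0, by linarith⟩
      rw [show t + (Ta - t) = Ta by ring, hJa] at hz
      -- the start of the second curve
      have hbstart : dist (γb (0 + (t + τ - Ta))) (F (t + τ - Ta) (γb 0)) < δb :=
        hb (t + τ - Ta) ⟨hσ'0, le_trans hσ'τ hτ1⟩ 0 ⟨le_refl _, by linarith⟩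
      rw [zero_add, hJb] at hbstart
      have hflow : F τ (γa t) = F (t + τ - Ta) (F (Ta - t) (γa t)) := by
        rw [← flow_add hF hσ'0 hTat0]
        congr 1
        ring
      have hjmp : dist (F (t + τ - Ta) (F (Ta - t) (γa t))) (F (t + τ - Ta) J) < α := by
        apply hjump (t + τ - Ta) ⟨hσ'0, le_trans hσ'τ hτ1⟩ _ (by rw [dist_comm]; exact hz)
      calc dist (γb (t + τ - Ta)) (F τ (γa t))
          ≤ dist (γb (t + τ - Ta)) (F (t + τ - Ta) J)
            + dist (F (t + τ - Ta) J) (F τ (γa t)) := dist_triangle _ _ _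
        _ < δb + α := by
            rw [hflow, dist_comm (F (t + τ - Ta) J)]
            exact add_lt_add hbstart hjmp
        _ ≤ max δa (δb + α) := le_max_right _ _
    · -- entirely in the second piece
      push_neg at h2
      have h3 : ¬ (t + τ < Ta) := by push_neg; linarith
      simp only [if_neg h3, if_neg (not_lt.2 h2)]
      have := hb τ ⟨hτ0, hτ1⟩ (t - Ta) ⟨by linarith, by linarith⟩
      rw [show t - Ta + τ = t + τ - Ta by ring] at this
      have : dist (γb (t + τ - Ta)) (F τ (γb (t - Ta))) < δb + α := by linarith
      exact lt_of_lt_of_le this (le_max_right _ _)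

end Aux4
section Aux5

variable {F : ℝ → X → X}

lemma epsCloseTo_mono {a b T : ℝ} {γ : ℝ → X} (h : EpsCloseTo F a T γ) (hab : a ≤ b) :
    EpsCloseTo F b T γ :=
  fun τ hτ t ht => lt_of_lt_of_le (h τ hτ t ht) hab

/-- Looping: if `x ≽_S y` and `y ≽_S x` then there are arbitrarily long and
arbitrarily fine `EpsCloseTo` curves from `x` to `y`. -/
lemma loop_chains (hF : IsSemiflow F) {x y : X} (hxy : ShadowLe F x y)
    (hyx : ShadowLe F y x) (m : ℕ) :
    ∀ δ' > (0:ℝ), ∃ (L : ℝ) (Γ : ℝ → X), EpsCloseTo F δ' L Γ ∧ Γ 0 = x ∧ Γ L = y ∧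
      1 ≤ L ∧ (m : ℝ) ≤ L := by
  induction m with
  | zero =>
    intro δ' hδ'
    obtain ⟨T, γ, hT1, _, h0, hT, hclose⟩ := hxy δ' hδ'
    exact ⟨T, γ, hclose, h0, hT, hT1, by simpa using le_trans zero_le_one hT1⟩
  | succ m ih =>
    intro δ' hδ'
    have hα : (0:ℝ) < δ' / 4 := by linarith
    obtain ⟨ρx, hρx, hjx⟩ := asym_cont hF (isCompact_singleton : IsCompact {x})
      (zero_le_one) hα
    obtain ⟨ρy, hρy, hjy⟩ := asym_cont hF (isCompact_singleton : IsCompact {y})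
      (zero_le_one) hα
    -- the long chain from the inductive hypothesis
    obtain ⟨L, Γ, hΓ, hΓ0, hΓL, hL1, hLm⟩ := ih (min (δ'/4) ρy) (by positivity)
    -- fresh chains  y → x → y
    obtain ⟨T2, γ2, hT2, _, h20, h2T, hclose2⟩ := hyx (min (δ'/4) ρx) (by positivity)
    obtain ⟨T1, γ1, hT1, _, h10, h1T, hclose1⟩ := hxy (δ'/4) hα
    -- Δ := γ2 ⋆ γ1 : y → y  (junction at x)
    set Δ : ℝ → X := fun u => if u < T2 then γ2 u else γ1 (u - T2) with hΔ
    have hjumpx : ∀ σ ∈ Icc (0:ℝ) 1, ∀ z : X, dist z x < min (δ'/4) ρx →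
        dist (F σ z) (F σ x) < δ'/4 := fun σ hσ z hz =>
      hjx x rfl σ hσ z (lt_of_lt_of_le hz (min_le_right _ _))
    have hΔclose : EpsCloseTo F (max (min (δ'/4) ρx) (δ'/4 + δ'/4)) (T2 + T1) Δ :=
      concat_eps hF hT2 hT1 hclose2 hclose1 h2T h10 hα hjumpx
    have hΔclose' : EpsCloseTo F (δ'/2) (T2 + T1) Δ := by
      apply epsCloseTo_mono hΔclose
      apply max_le (le_trans (min_le_left _ _) (by linarith)) (by linarith)
    have hΔ0 : Δ 0 = y := by
      rw [hΔ]; simp only [if_pos (lt_of_lt_of_le zero_lt_one hT2)]; exact h20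
    have hΔend : Δ (T2 + T1) = y := by
      rw [hΔ]
      simp only [if_neg (not_lt.2 (by linarith : T2 ≤ T2 + T1))]
      rw [show T2 + T1 - T2 = T1 by ring]; exact h1T
    -- Γ' := Γ ⋆ Δ : x → y (junction at y)
    set Γ' : ℝ → X := fun u => if u < L then Γ u else Δ (u - L) with hΓ'
    have hjumpy : ∀ σ ∈ Icc (0:ℝ) 1, ∀ z : X, dist z y < min (δ'/4) ρy →
        dist (F σ z) (F σ y) < δ'/4 := fun σ hσ z hz =>
      hjy y rfl σ hσ z (lt_of_lt_of_le hz (min_le_right _ _))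
    have hΓ'close : EpsCloseTo F (max (min (δ'/4) ρy) (δ'/2 + δ'/4)) (L + (T2 + T1)) Γ' :=
      concat_eps hF hL1 (by linarith : 1 ≤ T2 + T1) hΓ hΔclose' hΓL hΔ0 hα hjumpy
    refine ⟨L + (T2 + T1), Γ', ?_, ?_, ?_, by linarith, ?_⟩
    · apply epsCloseTo_mono hΓ'close
      apply max_le (le_trans (min_le_left _ _) (by linarith)) (by linarith)
    · rw [hΓ']; simp only [if_pos (lt_of_lt_of_le zero_lt_one hL1)]; exact hΓ0
    · rw [hΓ']
      simp only [if_neg (not_lt.2 (by linarith : L ≤ L + (T2 + T1)))]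
      rw [show L + (T2 + T1) - L = T2 + T1 by ring]; exact hΔend
    · push_cast; linarith

end Aux5
section Aux6

variable {F : ℝ → X → X}

/-- The key implication: two-sided shadow relation implies the Conley relation. -/
lemma shadow_to_conley (hF : IsSemiflow F) {G : Set X}
    (hG : IsStrongGlobalAttractor F G) {x y : X}
    (hxy : ShadowLe F x y) (hyx : ShadowLe F y x) : ConleyLe F x y := by
  classical
  obtain ⟨⟨hGc, hGinv, hGattr, _⟩, ε₀, hε₀, habs, hUC⟩ := hG
  intro ε hε T hT
  -- basic constants
  have hη : (0:ℝ) < ε₀ / 4 := by linarith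
  obtain ⟨r, hr, hrη, hstab⟩ := stability hF hGc hGinv hε₀ habs hη (by linarith)
  obtain ⟨T₂, hT₂pos, habs2⟩ := habs (r/2) (by linarith)
  obtain ⟨Rx, hRxpos, hRx⟩ := hGattr {x} isCompact_singleton (r/2) (by linarith)
  set n : ℕ := ⌈T⌉₊ with hn
  have hTn : T ≤ (n:ℝ) := Nat.le_ceil T
  have hn1 : 1 ≤ n := Nat.one_le_ceil_iff.2 hT
  set N₂ : ℕ := ⌈T₂⌉₊ with hN₂
  have hTN₂ : T₂ ≤ (N₂:ℝ) := Nat.le_ceil T₂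
  set Hb : ℕ := max n N₂ with hHb
  have hHb1 : 1 ≤ Hb := le_trans hn1 (le_max_left _ _)
  have hHbpos : (0:ℝ) < (Hb:ℝ) := by exact_mod_cast Nat.lt_of_lt_of_le Nat.zero_lt_one hHb1
  set k₀ : ℕ := ⌈Rx⌉₊ with hk₀
  set gmin : ℕ := max k₀ n with hgmin
  set He : ℕ := gmin + Hb with hHe
  set α' : ℝ := min (ε/2) (r/4) with hα'
  have hα'pos : 0 < α' := by
    apply lt_min (by linarith) (by linarith)
  -- the W-based modulus for the main cascade
  set W : Set X := Wset F ε₀ G with hW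
  have hucW : ∀ α : ℝ, ∃ β : ℝ, 0 < α → (0 < β ∧ ∀ p ∈ W, ∀ q ∈ W, dist p q < β →
      ∀ σ ∈ Icc (0:ℝ) 1, dist (F σ p) (F σ q) < α) := by
    intro α
    by_cases hα : 0 < α
    · obtain ⟨β, hβ, h⟩ := ucW hUC hα
      exact ⟨β, fun _ => ⟨hβ, h⟩⟩
    · exact ⟨1, fun h => absurd h hα⟩
  choose βf hβf using hucW
  set GoodW : X → Prop := fun p => p ∈ W ∧ p ∈ Metric.thickening (ε₀/4) G with hGoodW
  set μW : ℝ → ℝ := fun α => min (βf α) (ε₀/4) with hμW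
  have hμWpos : ∀ α > (0:ℝ), 0 < μW α := fun α hα => lt_min ((hβf α hα).1) hη
  have hstepW : ∀ α > (0:ℝ), ∀ p, GoodW p → ∀ q, dist q p < μW α →
      ∀ σ ∈ Icc (0:ℝ) 1, dist (F σ q) (F σ p) < α := by
    intro α hα p hp q hq σ hσ
    have hqW : q ∈ W := by
      have h1 : q ∈ Metric.thickening (μW α + ε₀/4) G := mem_thick_trans hp.2 hq
      have h2 : q ∈ Metric.thickening ε₀ G := by
        apply Metric.thickening_mono _ G h1
        have : μW α ≤ ε₀/4 := min_le_right _ _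
        linarith
      exact thick_subset_W hF h2
    exact (hβf α hα).2 q hqW p hp.1 (lt_of_lt_of_le hq (min_le_left _ _)) σ hσ
  obtain ⟨δm, hδm, hcasm⟩ := cascade hF GoodW μW hμWpos hstepW Hb hα'pos
  -- the compact-orbit modulus for the entry cascade
  set Qx : Set X := (fun p : ℝ × X => F (max p.1 0) p.2) '' (Icc (0:ℝ) (He:ℝ) ×ˢ {x})
    with hQx
  have hQxc : IsCompact Qx :=
    (isCompact_Icc.prod isCompact_singleton).image (flow_cont hF)
  have haxm : ∀ α : ℝ, ∃ ρ : ℝ, 0 < α → (0 < ρ ∧ ∀ q ∈ Qx, ∀ σ ∈ Icc (0:ℝ) 1,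
      ∀ z : X, dist z q < ρ → dist (F σ z) (F σ q) < α) := by
    intro α
    by_cases hα : 0 < α
    · obtain ⟨ρ, hρ, h⟩ := asym_cont hF hQxc zero_le_one hα
      exact ⟨ρ, fun _ => ⟨hρ, h⟩⟩
    · exact ⟨1, fun h => absurd h hα⟩
  choose ρf hρf using haxm
  set GoodX : X → Prop := fun p => p ∈ Qx with hGoodX
  have hstepX : ∀ α > (0:ℝ), ∀ p, GoodX p → ∀ q, dist q p < ρf α →
      ∀ σ ∈ Icc (0:ℝ) 1, dist (F σ q) (F σ p) < α := by
    intro α hα p hp q hq σ hσ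
    exact (hρf α hα).2 p hp σ hσ q hq
  obtain ⟨δe, hδe, hcase⟩ := cascade hF GoodX ρf (fun α hα => (hρf α hα).1) hstepX He hα'pos
  -- take a long, fine chain from x to y
  obtain ⟨L, Γ, hΓclose, hΓ0, hΓL, hL1, hLg⟩ :=
    loop_chains hF hxy hyx gmin (min δm δe) (lt_min hδm hδe)
  have hΓm : EpsCloseTo F δm L Γ := epsCloseTo_mono hΓclose (min_le_left _ _)
  have hΓe : EpsCloseTo F δe L Γ := epsCloseTo_mono hΓclose (min_le_right _ _)
  -- block decomposition anchored at the end
  set M' : ℕ := ⌊(L - (gmin:ℝ)) / (Hb:ℝ)⌋₊ with hM'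
  set u₀ : ℝ := L - (M':ℝ) * (Hb:ℝ) with hu₀
  have hLgm : (0:ℝ) ≤ (L - gmin) / Hb := by
    apply div_nonneg (by linarith) (le_of_lt hHbpos)
  have hu₀ge : (gmin:ℝ) ≤ u₀ := by
    have := Nat.floor_le hLgm
    rw [le_div_iff₀ hHbpos] at this
    rw [hu₀]; linarith
  have hu₀le : u₀ ≤ (He:ℝ) := by
    have := Nat.lt_floor_add_one ((L - (gmin:ℝ)) / (Hb:ℝ))
    rw [div_lt_iff₀ hHbpos] at this
    rw [hu₀, hHe]
    push_cast
    nlinarith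
  have hu₀0 : 0 ≤ u₀ := le_trans (by positivity) hu₀ge
  set anchor : ℕ → ℝ := fun j => u₀ + (j:ℝ) * (Hb:ℝ) with hanchor
  have hanchorM : anchor M' = L := by simp only [hanchor, hu₀]; ring
  have hanchor_mono : ∀ j ≤ M', anchor j ≤ L := by
    intro j hj
    rw [← hanchorM]
    simp only [hanchor]
    have h1 : (j:ℝ) ≤ (M':ℝ) := by exact_mod_cast hj
    nlinarith
  -- entry estimate
  have hGoodXk : ∀ k : ℕ, k ≤ He → GoodX (F (k:ℝ) (Γ 0)) := by
    intro k hk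
    rw [hΓ0, hGoodX, hQx]
    refine ⟨((k:ℝ), x), ⟨⟨Nat.cast_nonneg k, show (k:ℝ) ≤ (He:ℝ) by exact_mod_cast hk⟩, rfl⟩, ?_⟩
    show F ((k:ℝ) ⊔ 0) x = F (k:ℝ) x
    rw [max_eq_left (Nat.cast_nonneg k)]
  have hentry : dist (Γ u₀) (F u₀ x) < α' := by
    have hMHb : (0:ℝ) ≤ (M':ℝ) * (Hb:ℝ) := by positivity
    have := hcase Γ L 0 hΓe (le_refl 0) hGoodXk u₀ hu₀0 hu₀le
      (by rw [zero_add, hu₀]; linarith)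
    rwa [zero_add, hΓ0] at this
  have hxorb : F u₀ x ∈ Metric.thickening (r/2) G := by
    apply hRx u₀ (le_trans (Nat.le_ceil Rx) (le_trans (by exact_mod_cast le_max_left k₀ n) hu₀ge))
    exact ⟨x, rfl, rfl⟩
  have hanchor0 : Γ (anchor 0) ∈ Metric.thickening r G := by
    have h1 : Γ u₀ ∈ Metric.thickening (α' + r/2) G := mem_thick_trans hxorb hentry
    have h2 : α' + r/2 ≤ r := by
      have : α' ≤ r/4 := min_le_right _ _
      linarith
    simp only [hanchor, Nat.cast_zero, zero_mul, add_zero]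
    exact Metric.thickening_mono h2 G h1
  -- the block step : tracking + absorption
  have hblock : ∀ j, j < M' → Γ (anchor j) ∈ Metric.thickening r G →
      dist (F (Hb:ℝ) (Γ (anchor j))) (Γ (anchor (j+1))) < α' ∧
      Γ (anchor (j+1)) ∈ Metric.thickening r G := by
    intro j hj hmem
    have hmemA : Γ (anchor j) ∈ Metric.thickening ε₀ G :=
      Metric.thickening_mono (by linarith) G hmem
    have hGoodk : ∀ k : ℕ, k ≤ Hb → GoodW (F (k:ℝ) (Γ (anchor j))) := by
      intro k _
      constructor
      · exact flow_mem_W hF hmemA (Nat.cast_nonneg k)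
      · exact hstab _ hmem _ (Nat.cast_nonneg k)
    have hanch1 : anchor j + (Hb:ℝ) = anchor (j+1) := by
      simp only [hanchor]; push_cast; ring
    have hanchor_pos : 0 ≤ anchor j := by
      simp only [hanchor]
      have : (0:ℝ) ≤ (j:ℝ) * (Hb:ℝ) := by positivity
      linarith
    have htrack : dist (Γ (anchor j + (Hb:ℝ))) (F (Hb:ℝ) (Γ (anchor j))) < α' := by
      apply hcasm Γ L (anchor j) hΓm hanchor_pos hGoodk (Hb:ℝ) (le_of_lt hHbpos) (le_refl _)
      rw [hanch1]
      exact hanchor_mono (j+1) hj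
    have habsorb : F (Hb:ℝ) (Γ (anchor j)) ∈ Metric.thickening (r/2) G := by
      apply habs2 (Hb:ℝ) (le_trans hTN₂ (by exact_mod_cast le_max_right n N₂))
      exact ⟨Γ (anchor j), hmemA, rfl⟩
    constructor
    · rw [← hanch1, dist_comm]; exact htrack
    · have h1 : Γ (anchor (j+1)) ∈ Metric.thickening (α' + r/2) G := by
        apply mem_thick_trans habsorb
        rw [← hanch1]; exact htrack
      apply Metric.thickening_mono _ G h1
      have : α' ≤ r/4 := min_le_right _ _
      linarith
  have hinv : ∀ j, j ≤ M' → Γ (anchor j) ∈ Metric.thickening r G := by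
    intro j
    induction j with
    | zero => intro _; exact hanchor0
    | succ j ih =>
      intro hj
      exact (hblock j (by omega) (ih (by omega))).2
  -- assemble the Conley chain
  refine ⟨M' + 1, fun j => if j = 0 then x else Γ (anchor (j - 1)),
    fun j => if j = 0 then u₀ else (Hb:ℝ), Nat.le_add_left 1 M', by simp, ?_, ?_⟩
  · simp only [Nat.add_sub_cancel, if_neg (Nat.succ_ne_zero M')]
    rw [hanchorM, hΓL]
  · intro i hi
    by_cases hi0 : i = 0
    · subst hi0
      simp only [if_pos rfl]
      constructor
      · exact le_trans hTn (le_trans (by exact_mod_cast le_max_right k₀ n) hu₀ge)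
      · simp only [if_neg (by omega : ¬ (0 + 1 = 0)), if_neg (Nat.one_ne_zero)]
        rw [dist_comm]
        have h11 : (1:ℕ) - 1 = 0 := rfl
        rw [h11]
        have ha0 : anchor 0 = u₀ := by simp [hanchor]
        rw [ha0]
        calc dist (Γ u₀) (F u₀ x) < α' := hentry
          _ ≤ ε/2 := min_le_left _ _
          _ < ε := by linarith
    · obtain ⟨j, rfl⟩ : ∃ j, i = j + 1 := ⟨i - 1, by omega⟩
      simp only [if_neg hi0, if_neg (by omega : ¬ (j + 1 + 1 = 0)), Nat.add_sub_cancel]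
      constructor
      · exact le_trans hTn (by exact_mod_cast le_max_left n N₂)
      · have hjlt : j < M' := by omega
        calc dist (F (Hb:ℝ) (Γ (anchor j))) (Γ (anchor (j+1))) < α' :=
              (hblock j hjlt (hinv j (by omega))).1
          _ ≤ ε/2 := min_le_left _ _
          _ < ε := by linarith

end Aux6
section Aux7

variable {F : ℝ → X → X}

/-- The Conley relation implies the shadow relation. -/
lemma conley_to_shadow (hF : IsSemiflow F) {G : Set X}
    (hG : IsStrongGlobalAttractor F G) {x y : X}
    (hxy : ConleyLe F x y) : ShadowLe F x y := by
  classical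
  obtain ⟨⟨hGc, hGinv, hGattr, _⟩, ε₀, hε₀, habs, hUC⟩ := hG
  intro ε hε
  obtain ⟨β, hβ, hβspec⟩ := ucW hUC hε
  obtain ⟨T₂, hT₂pos, habs2⟩ := habs (ε₀/2) (by linarith)
  obtain ⟨Rx, hRxpos, hRx⟩ := hGattr {x} isCompact_singleton (ε₀/2) (by linarith)
  set δ : ℝ := min β (ε₀/2) with hδ
  have hδpos : 0 < δ := lt_min hβ (by linarith)
  have hδβ : δ ≤ β := min_le_left _ _
  have hδε₀ : δ ≤ ε₀/2 := min_le_right _ _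
  set T' : ℝ := max (max Rx T₂) 1 with hT'
  have hT'pos : 0 < T' := lt_of_lt_of_le zero_lt_one (le_max_right _ _)
  have hT'1 : 1 ≤ T' := le_max_right _ _
  have hT'Rx : Rx ≤ T' := le_trans (le_max_left _ _) (le_max_left _ _)
  have hT'T₂ : T₂ ≤ T' := le_trans (le_max_right Rx T₂) (le_max_left _ _)
  obtain ⟨N, c, t, hN, hc0, hcN, hchain⟩ := hxy δ hδpos T' hT'pos
  -- cumulative jump times
  set s : ℕ → ℝ := fun i => ∑ j ∈ Finset.range i, t j with hs
  have hs0 : s 0 = 0 := by simp [hs]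
  have hsadd : ∀ i, s (i+1) = s i + t i := fun i => Finset.sum_range_succ t i
  have ht1 : ∀ i < N, 1 ≤ t i := fun i hi => le_trans hT'1 (hchain i hi).1
  have hstep : ∀ i < N, s i + 1 ≤ s (i+1) := by
    intro i hi
    rw [hsadd]
    linarith [ht1 i hi]
  have hmono : ∀ i j, i ≤ j → j ≤ N → s i ≤ s j := by
    intro i j hij hjN
    induction j with
    | zero => simp_all
    | succ j ih =>
      rcases Nat.lt_or_ge i (j+1) with h | h
      · have : i ≤ j := by omega
        have h2 := ih this (by omega)
        have := hstep j (by omega)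
        linarith
      · have : i = j + 1 := by omega
        subst this
        exact le_refl _
  have hsN1 : (1:ℝ) ≤ s N := by
    have h1 := hstep 0 (by omega)
    have h2 := hmono 1 N hN (le_refl N)
    rw [hs0] at h1
    linarith
  have hsnn : ∀ i, i ≤ N → 0 ≤ s i := by
    intro i hi
    rw [← hs0]
    exact hmono 0 i (Nat.zero_le i) hi
  -- corralling the chain near the attractor
  have hcorral : ∀ i, (i < N → F (t i) (c i) ∈ Metric.thickening (ε₀/2) G) ∧
      (1 ≤ i → i ≤ N → c i ∈ Metric.thickening ε₀ G) := by
    intro i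
    induction i with
    | zero =>
      refine ⟨fun hi => ?_, fun h => absurd h (by omega)⟩
      rw [hc0]
      apply hRx (t 0) (le_trans hT'Rx (hchain 0 hi).1)
      exact ⟨x, rfl, rfl⟩
    | succ i ih =>
      have hmem : i + 1 ≤ N → c (i+1) ∈ Metric.thickening ε₀ G := by
        intro hiN
        have hz := ih.1 (by omega)
        have hd : dist (c (i+1)) (F (t i) (c i)) < δ := by
          rw [dist_comm]; exact (hchain i (by omega)).2
        have h1 : c (i+1) ∈ Metric.thickening (δ + ε₀/2) G := mem_thick_trans hz hd
        apply Metric.thickening_mono _ G h1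
        linarith
      refine ⟨fun hi => ?_, fun _ h => hmem h⟩
      apply habs2 (t (i+1)) (le_trans hT'T₂ (hchain (i+1) hi).1)
      exact ⟨c (i+1), hmem (by omega), rfl⟩
  -- the piecewise-orbit curve
  set If : ℝ → ℕ := fun u => Nat.findGreatest (fun i => s i ≤ u) N with hIf
  set γ : ℝ → X := fun u => if u < s N then F (u - s (If u)) (c (If u)) else c N with hγ
  have hindex : ∀ u, 0 ≤ u → u < s N → s (If u) ≤ u ∧ If u < N ∧ u < s (If u + 1) := by
    intro u hu0 huN
    have hle : s (If u) ≤ u := by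
      simp only [hIf]
      exact Nat.findGreatest_spec (P := fun i => s i ≤ u) (Nat.zero_le N) (show s 0 ≤ u by rw [hs0]; exact hu0)
    have hIN : If u ≤ N := by simp only [hIf]; exact Nat.findGreatest_le N
    have hltN : If u < N := by
      rcases Nat.lt_or_ge (If u) N with h | h
      · exact h
      · exfalso
        have : If u = N := by omega
        rw [this] at hle
        linarith
    refine ⟨hle, hltN, ?_⟩
    by_contra hcon
    push_neg at hcon
    have hgr := Nat.findGreatest_is_greatest (P := fun i => s i ≤ u) (n := N)
      (k := If u + 1) (by simp only [hIf]; exact Nat.lt_succ_self _) (by omega)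
    exact hgr hcon
  have hpiece : ∀ i, i < N → ∀ u, s i ≤ u → u < s (i+1) → γ u = F (u - s i) (c i) := by
    intro i hi u hu1 hu2
    have hu0 : 0 ≤ u := le_trans (hsnn i hi.le) hu1
    have huN : u < s N := lt_of_lt_of_le hu2 (hmono (i+1) N hi (le_refl N))
    obtain ⟨hle, hltN, hlt⟩ := hindex u hu0 huN
    have heq : If u = i := by
      rcases Nat.lt_trichotomy (If u) i with h | h | h
      · exfalso
        have hgr := Nat.findGreatest_is_greatest (P := fun i => s i ≤ u) (n := N)
          (k := i) (by simpa only [hIf] using h) hi.le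
        exact hgr hu1
      · exact h
      · exfalso
        have h1 : i + 1 ≤ If u := h
        have h2 : s (i+1) ≤ s (If u) := hmono _ _ h1 (by omega)
        linarith
    rw [hγ]
    simp only [if_pos huN, heq]
  have hγ0 : γ 0 = x := by
    have h1 : s 0 + 1 ≤ s 1 := hstep 0 (by omega)
    have h2 : (0:ℝ) < s 1 := by rw [hs0] at h1; linarith
    have h3 := hpiece 0 (by omega) 0 (le_of_eq hs0) h2
    rw [h3, hs0, sub_zero, hF.map_zero, hc0]
  have hγN : γ (s N) = y := by
    rw [hγ]
    simp only [if_neg (lt_irrefl (s N))]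
    exact hcN
  -- ε-closeness of the curve
  have hclose : EpsCloseTo F ε (s N) γ := by
    intro τ hτ u hu
    obtain ⟨hτ0, hτ1⟩ := hτ
    obtain ⟨hu0, huT⟩ := hu
    rcases eq_or_lt_of_le hτ0 with hτz | hτpos
    · rw [← hτz, add_zero, hF.map_zero]
      simpa using hε
    · have huN : u < s N := by linarith
      obtain ⟨hle, hiN, hlt⟩ := hindex u hu0 huN
      by_cases hcase : u + τ < s (If u + 1)
      · -- same piece : exact orbit
        have h1 : γ u = F (u - s (If u)) (c (If u)) := hpiece (If u) hiN u hle hlt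
        have h2 : γ (u + τ) = F (u + τ - s (If u)) (c (If u)) :=
          hpiece (If u) hiN (u + τ) (by linarith) hcase
        rw [h1, h2, ← flow_add hF (le_of_lt hτpos) (by linarith : 0 ≤ u - s (If u)),
          show u + τ - s (If u) = τ + (u - s (If u)) by ring]
        simpa using hε
      · push_neg at hcase
        set σ : ℝ := u + τ - s (If u + 1) with hσdef
        have hσ0 : 0 ≤ σ := by rw [hσdef]; linarith
        have hσlt : σ < τ := by rw [hσdef]; linarith
        have hσ1 : σ ≤ 1 := le_trans (le_of_lt hσlt) hτ1
        have hti : 1 ≤ t (If u) := ht1 (If u) hiN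
        -- value of γ at u + τ
        have hval : γ (u + τ) = F σ (c (If u + 1)) := by
          rcases lt_or_eq_of_le (show u + τ ≤ s N by linarith) with hlt2 | heq2
          · have hi1N : If u + 1 < N := by
              rcases Nat.lt_or_ge (If u + 1) N with h | h
              · exact h
              · exfalso
                have hi1 : If u + 1 = N := by omega
                rw [hi1] at hcase
                linarith
            have hnext : u + τ < s (If u + 2) := by
              have h1 := hstep (If u + 1) hi1N
              have hσlt1 : σ < 1 := lt_of_lt_of_le hσlt hτ1
              rw [hσdef] at hσlt1
              have : s (If u + 1 + 1) = s (If u + 2) := by norm_num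
              linarith [this ▸ h1]
            have := hpiece (If u + 1) hi1N (u + τ) hcase hnext
            rw [this, hσdef]
          · have hi1 : If u + 1 = N := by
              by_contra hne
              have h1 := hstep (If u + 1) (by omega)
              have h2 := hmono (If u + 1 + 1) N (by omega) (le_refl N)
              have hσlt1 : σ < 1 := lt_of_lt_of_le hσlt hτ1
              rw [hσdef] at hσlt1
              rw [← heq2] at h2
              linarith
            have hσz : σ = 0 := by
              rw [hσdef, hi1, ← heq2]; ring
            rw [heq2, hσz, hi1, hF.map_zero, hγ]
            simp only [if_neg (lt_irrefl (s N))]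
        -- value of the flow applied to γ u
        have hu_eq : γ u = F (u - s (If u)) (c (If u)) := hpiece (If u) hiN u hle hlt
        have hrhs : F τ (γ u) = F σ (F (t (If u)) (c (If u))) := by
          rw [hu_eq, ← flow_add hF (le_of_lt hτpos) (by linarith : 0 ≤ u - s (If u)),
            show τ + (u - s (If u)) = σ + t (If u) by rw [hσdef, hsadd]; ring,
            flow_add hF hσ0 (by linarith : 0 ≤ t (If u))]
        rw [hval, hrhs]
        -- the uniform continuity estimate near the attractor
        apply hβspec (c (If u + 1)) ?_ (F (t (If u)) (c (If u))) ?_ ?_ σ ⟨hσ0, hσ1⟩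
        · exact thick_subset_W hF ((hcorral (If u + 1)).2 (by omega) (by omega))
        · exact thick_subset_W hF
            (Metric.thickening_mono (by linarith) G ((hcorral (If u)).1 hiN))
        · rw [dist_comm]
          exact lt_of_lt_of_le (hchain (If u) hiN).2 hδβ
  -- piecewise continuity of the curve
  have hpw : PiecewiseContinuousOn γ (s N) := by
    refine ⟨⟨(Finset.range (N+1)).image (fun i => s i), ?_⟩, ?_, ?_⟩
    · -- continuity away from the jump times
      intro u hu hnot
      have hune : ∀ i, i ≤ N → u ≠ s i := by
        intro i hi heq
        exact hnot (Finset.mem_image.2 ⟨i, Finset.mem_range.2 (by omega), heq.symm⟩)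
      have huN : u < s N := lt_of_le_of_ne hu.2 (hune N (le_refl N))
      obtain ⟨hle, hiN, hlt⟩ := hindex u hu.1 huN
      have hslt : s (If u) < u := lt_of_le_of_ne hle (fun h => hune (If u) (by omega) h.symm)
      have hev : ∀ᶠ v in nhds u, γ v = F (max (v - s (If u)) 0) (c (If u)) := by
        filter_upwards [Ioo_mem_nhds hslt hlt] with v hv
        rw [hpiece (If u) hiN v (le_of_lt hv.1) hv.2]
        rw [max_eq_left (by linarith [hv.1] : (0:ℝ) ≤ v - s (If u))]
      have hca : ContinuousAt (fun v : ℝ => F (max (v - s (If u)) 0) (c (If u))) u := by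
        have hc2 : Continuous (fun v : ℝ => ((v - s (If u), c (If u)) : ℝ × X)) :=
          (continuous_id.sub continuous_const).prodMk continuous_const
        exact ((flow_cont hF).comp hc2).continuousAt
      have hev' : (fun v : ℝ => F (max (v - s (If u)) 0) (c (If u))) =ᶠ[nhds u] γ :=
        hev.mono fun v hv => hv.symm
      exact (hca.congr hev').continuousWithinAt
    · -- left limits
      intro v₀ hv₀
      obtain ⟨hv0pos, hv0le⟩ := hv₀
      set i : ℕ := Nat.findGreatest (fun i => s i < v₀) N with hi
      have hex : s i < v₀ := by
        simp only [hi]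
        exact Nat.findGreatest_spec (P := fun i => s i < v₀) (Nat.zero_le N)
          (show s 0 < v₀ by rw [hs0]; exact hv0pos)
      have hiN' : i ≤ N := by simp only [hi]; exact Nat.findGreatest_le N
      have hiN : i < N := by
        rcases Nat.lt_or_ge i N with h | h
        · exact h
        · exfalso
          have : i = N := by omega
          rw [this] at hex
          linarith
      have hub : v₀ ≤ s (i+1) := by
        by_contra hcon
        push_neg at hcon
        exact Nat.findGreatest_is_greatest (P := fun i => s i < v₀) (n := N)
          (by simp only [hi]; exact Nat.lt_succ_self _) (by omega) hcon
      refine ⟨F (max (v₀ - s i) 0) (c i), ?_⟩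
      have hca : ContinuousAt (fun v : ℝ => F (max (v - s i) 0) (c i)) v₀ := by
        have hc2 : Continuous (fun v : ℝ => ((v - s i, c i) : ℝ × X)) :=
          (continuous_id.sub continuous_const).prodMk continuous_const
        exact ((flow_cont hF).comp hc2).continuousAt
      apply Filter.Tendsto.congr' ?_ (hca.tendsto.mono_left nhdsWithin_le_nhds)
      filter_upwards [Ioo_mem_nhdsLT_of_mem (⟨hex, le_refl v₀⟩ : v₀ ∈ Ioc (s i) v₀)]
        with v hv
      rw [hpiece i hiN v (le_of_lt hv.1) (lt_of_lt_of_le hv.2 hub)]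
      rw [max_eq_left (by linarith [hv.1] : (0:ℝ) ≤ v - s i)]
    · -- right limits
      intro v₀ hv₀
      obtain ⟨hv00, hv0N⟩ := hv₀
      obtain ⟨hle, hiN, hlt⟩ := hindex v₀ hv00 hv0N
      refine ⟨F (max (v₀ - s (If v₀)) 0) (c (If v₀)), ?_⟩
      have hca : ContinuousAt (fun v : ℝ => F (max (v - s (If v₀)) 0) (c (If v₀))) v₀ := by
        have hc2 : Continuous (fun v : ℝ => ((v - s (If v₀), c (If v₀)) : ℝ × X)) :=
          (continuous_id.sub continuous_const).prodMk continuous_const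
        exact ((flow_cont hF).comp hc2).continuousAt
      apply Filter.Tendsto.congr' ?_ (hca.tendsto.mono_left nhdsWithin_le_nhds)
      filter_upwards [Ioo_mem_nhdsGT_of_mem (⟨le_refl v₀, hlt⟩ : v₀ ∈ Ico v₀ (s (If v₀ + 1)))]
        with v hv
      rw [hpiece (If v₀) hiN v (le_trans hle (le_of_lt hv.1)) hv.2]
      rw [max_eq_left (by linarith [hv.1, hle] : (0:ℝ) ≤ v - s (If v₀))]
  exact ⟨s N, γ, hsN1, hpw, hγ0, hγN, hclose⟩

end Aux7

/-- for a semiflow with strong compact dynamics, Conley nodes and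
shadow nodes coincide. -/
theorem conleyNode_iff_shadowNode (F : ℝ → X → X) (hF : IsSemiflow F) (G : Set X)
    (hG : IsStrongGlobalAttractor F G) (M : Set X) :
    IsConleyNode F M ↔ IsShadowNode F M := by
  constructor
  · rintro ⟨hpair, hmax⟩
    constructor
    · intro a ha b hb
      exact ⟨conley_to_shadow hF hG (hpair a ha b hb).1,
        conley_to_shadow hF hG (hpair b hb a ha).1⟩
    · intro M' hsub hpair'
      apply hmax M' hsub
      intro a ha b hb
      obtain ⟨hab, hba⟩ := hpair' a ha b hb
      exact ⟨shadow_to_conley hF hG hab hba, shadow_to_conley hF hG hba hab⟩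
  · rintro ⟨hpair, hmax⟩
    constructor
    · intro a ha b hb
      obtain ⟨hab, hba⟩ := hpair a ha b hb
      exact ⟨shadow_to_conley hF hG hab hba, shadow_to_conley hF hG hba hab⟩
    · intro M' hsub hpair'
      apply hmax M' hsub
      intro a ha b hb
      exact ⟨conley_to_shadow hF hG (hpair' a ha b hb).1,
        conley_to_shadow hF hG (hpair' b hb a ha).1⟩
end
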